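/- arXiv:2310.00393 — 10 statements merged into one kernel-verified Lean document; each statement's English description precedes it below -/
import Mathlib

section
/- Let n ≥ 1 and let T ∈ ℝ^{n×n×n} be a 3-tensor that is symmetric (T_{ijk} invariant under all permutations of (i,j,k)) and multilinear (T_{ijk} = 0 whenever two of the indices i,j,k coincide). Then max over x ∈ {−1,1}^n of ∑_{i,j,k} T_{ijk} x_i x_j x_k is at least (2/9) times the max over x,y,z ∈ {−1,1}^n of ∑_{i,j,k} T_{ijk} x_i y_j z_k. -/
open Finset Function

namespace Stmt2Aux

variable {n : ℕ}

/-- The trilinear form of a 3-tensor, as a single sum over triples. -/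
def G (T : Fin n → Fin n → Fin n → ℝ) (a b c : Fin n → ℝ) : ℝ :=
  ∑ p : Fin n × Fin n × Fin n, T p.1 p.2.1 p.2.2 * a p.1 * b p.2.1 * c p.2.2

lemma G_eq (T : Fin n → Fin n → Fin n → ℝ) (a b c : Fin n → ℝ) :
    G T a b c = ∑ i, ∑ j, ∑ k, T i j k * a i * b j * c k := by
  rw [G, Fintype.sum_prod_type]
  exact Finset.sum_congr rfl fun i _ => Fintype.sum_prod_type _

lemma G_swap12 (T : Fin n → Fin n → Fin n → ℝ)
    (hsymm : ∀ i j k, T i j k = T j i k ∧ T i j k = T i k j)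
    (a b c : Fin n → ℝ) : G T a b c = G T b a c := by
  rw [G, G]
  refine Fintype.sum_equiv ⟨fun p => (p.2.1, p.1, p.2.2), fun p => (p.2.1, p.1, p.2.2),
    fun ⟨i, j, k⟩ => rfl, fun ⟨i, j, k⟩ => rfl⟩ _ _ fun ⟨i, j, k⟩ => ?_
  show T i j k * a i * b j * c k = T j i k * b j * a i * c k
  rw [(hsymm j i k).1]; ring

lemma G_swap23 (T : Fin n → Fin n → Fin n → ℝ)
    (hsymm : ∀ i j k, T i j k = T j i k ∧ T i j k = T i k j)
    (a b c : Fin n → ℝ) : G T a b c = G T a c b := by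
  rw [G, G]
  refine Fintype.sum_equiv ⟨fun p => (p.1, p.2.2, p.2.1), fun p => (p.1, p.2.2, p.2.1),
    fun ⟨i, j, k⟩ => rfl, fun ⟨i, j, k⟩ => rfl⟩ _ _ fun ⟨i, j, k⟩ => ?_
  show T i j k * a i * b j * c k = T i k j * a i * c k * b j
  rw [(hsymm i k j).2]; ring

/-- The cubic form of a 3-tensor. -/
def F (T : Fin n → Fin n → Fin n → ℝ) (v : Fin n → ℝ) : ℝ := G T v v v

lemma F_smul (T : Fin n → Fin n → Fin n → ℝ) (c : ℝ) (v : Fin n → ℝ) :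
    F T (fun i => c * v i) = c ^ 3 * F T v := by
  rw [F, F, G, G, Finset.mul_sum]
  exact Finset.sum_congr rfl fun p _ => by ring

/-- Polarization/sign identity for symmetric tensors. -/
lemma sign_identity (T : Fin n → Fin n → Fin n → ℝ)
    (hsymm : ∀ i j k, T i j k = T j i k ∧ T i j k = T i k j)
    (x y z : Fin n → ℝ) :
    F T (fun i => x i + y i + z i) + F T (fun i => x i - y i - z i)
      + F T (fun i => -x i + y i - z i) + F T (fun i => -x i - y i + z i)
      = 24 * G T x y z := by
  have e1 : G T x z y = G T x y z := (G_swap23 T hsymm x y z).symm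
  have e2 : G T y x z = G T x y z := (G_swap12 T hsymm x y z).symm
  have e3 : G T y z x = G T x y z := ((G_swap23 T hsymm y x z).symm).trans e2
  have e4 : G T z x y = G T x y z := ((G_swap12 T hsymm x z y).symm).trans e1
  have e5 : G T z y x = G T x y z := ((G_swap12 T hsymm y z x).symm).trans e3
  have h24 : 24 * G T x y z = 4 * (G T x y z + G T x z y + G T y x z
      + G T y z x + G T z x y + G T z y x) := by rw [e1, e2, e3, e4, e5]; ring
  rw [h24]
  simp only [F, G, ← Finset.sum_add_distrib, Finset.mul_sum]
  exact Finset.sum_congr rfl fun p _ => by ring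

/-- For a multilinear tensor, the cubic form is affine in each coordinate. -/
lemma F_update_affine (T : Fin n → Fin n → Fin n → ℝ)
    (hml : ∀ i j k, (i = j ∨ j = k ∨ i = k) → T i j k = 0)
    (v : Fin n → ℝ) (i0 : Fin n) (t : ℝ) :
    F T (update v i0 t) = F T (update v i0 0)
      + t * (F T (update v i0 1) - F T (update v i0 0)) := by
  simp only [F, G, Finset.mul_sum, ← Finset.sum_sub_distrib, ← Finset.sum_add_distrib]
  refine Finset.sum_congr rfl fun ⟨i, j, k⟩ _ => ?_
  simp only
  by_cases hij : i = j
  · simp [hml i j k (Or.inl hij)]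
  by_cases hjk : j = k
  · simp [hml i j k (Or.inr (Or.inl hjk))]
  by_cases hik : i = k
  · simp [hml i j k (Or.inr (Or.inr hik))]
  by_cases hi : i = i0
  · subst hi
    simp only [update_self, update_of_ne (fun h => hij h.symm : j ≠ i),
      update_of_ne (fun h => hik h.symm : k ≠ i)]
    ring
  by_cases hj : j = i0
  · subst hj
    simp only [update_self, update_of_ne (hij : i ≠ j),
      update_of_ne (fun h => hjk h.symm : k ≠ j)]
    ring
  by_cases hk : k = i0
  · subst hk
    simp only [update_self, update_of_ne (hik : i ≠ k), update_of_ne (hjk : j ≠ k)]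
    ring
  · simp only [update_of_ne hi, update_of_ne hj, update_of_ne hk]
    ring

lemma round_one (T : Fin n → Fin n → Fin n → ℝ)
    (hml : ∀ i j k, (i = j ∨ j = k ∨ i = k) → T i j k = 0)
    (v : Fin n → ℝ) (i0 : Fin n) (h1 : -3 ≤ v i0) (h2 : v i0 ≤ 3) :
    ∃ t : ℝ, (t = 3 ∨ t = -3) ∧ F T (update v i0 t) ≥ F T v := by
  have key := F_update_affine T hml v i0
  have hv : F T v = F T (update v i0 (v i0)) := by rw [update_eq_self]
  rcases le_or_gt 0 (F T (update v i0 1) - F T (update v i0 0)) with hd | hd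
  · exact ⟨3, Or.inl rfl, by rw [hv, key (v i0), key 3]; nlinarith⟩
  · exact ⟨-3, Or.inr rfl, by rw [hv, key (v i0), key (-3)]; nlinarith⟩

lemma round_all (T : Fin n → Fin n → Fin n → ℝ)
    (hml : ∀ i j k, (i = j ∨ j = k ∨ i = k) → T i j k = 0)
    (s : Finset (Fin n)) :
    ∀ v : Fin n → ℝ, (∀ i, -3 ≤ v i ∧ v i ≤ 3) → (∀ i ∉ s, v i = 3 ∨ v i = -3) →
      ∃ w : Fin n → ℝ, (∀ i, w i = 3 ∨ w i = -3) ∧ F T w ≥ F T v := by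
  induction s using Finset.induction_on with
  | empty => exact fun v _ hout => ⟨v, fun i => hout i (by simp), le_refl _⟩
  | @insert a s ha ih =>
    intro v hb hout
    obtain ⟨t, ht, hge⟩ := round_one T hml v a (hb a).1 (hb a).2
    have hb' : ∀ i, -3 ≤ update v a t i ∧ update v a t i ≤ 3 := by
      intro i
      by_cases hi : i = a
      · subst hi; rw [update_self]; rcases ht with h | h <;> rw [h] <;> norm_num
      · rw [update_of_ne hi]; exact hb i
    have hout' : ∀ i ∉ s, update v a t i = 3 ∨ update v a t i = -3 := by
      intro i hi
      by_cases hia : i = a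
      · subst hia; rw [update_self]; exact ht
      · rw [update_of_ne hia]
        exact hout i (by simp [hia, hi])
    obtain ⟨w, hw, hwge⟩ := ih (update v a t) hb' hout'
    exact ⟨w, hw, le_trans hge hwge⟩

end Stmt2Aux

open Stmt2Aux in
/-- **Decoupling over the hypercube** for homogeneous cubic multilinear polynomials:
`max_{w ∈ {±1}^n} f(w) ≥ (2/9) · max_{x,y,z ∈ {±1}^n} f̃(x,y,z)`, stated in the
equivalent form: for all hypercube points `x, y, z` there is a hypercube point `w`
with `f(w) ≥ (2/9) · f̃(x,y,z)`. -/
theorem stmt_2 (n : ℕ) (hn : 1 ≤ n) (T : Fin n → Fin n → Fin n → ℝ)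
    (hsymm : ∀ i j k, T i j k = T j i k ∧ T i j k = T i k j)
    (hml : ∀ i j k, (i = j ∨ j = k ∨ i = k) → T i j k = 0)
    (x y z : Fin n → ℝ)
    (hx : ∀ i, x i = 1 ∨ x i = -1) (hy : ∀ i, y i = 1 ∨ y i = -1)
    (hz : ∀ i, z i = 1 ∨ z i = -1) :
    ∃ w : Fin n → ℝ, (∀ i, w i = 1 ∨ w i = -1) ∧
      ∑ i, ∑ j, ∑ k, T i j k * w i * w j * w k ≥
        (2 / 9) * ∑ i, ∑ j, ∑ k, T i j k * x i * y j * z k := by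
  set v1 : Fin n → ℝ := fun i => x i + y i + z i with hv1
  set v2 : Fin n → ℝ := fun i => x i - y i - z i with hv2
  set v3 : Fin n → ℝ := fun i => -x i + y i - z i with hv3
  set v4 : Fin n → ℝ := fun i => -x i - y i + z i with hv4
  have hsum : F T v1 + F T v2 + F T v3 + F T v4 = 24 * G T x y z :=
    sign_identity T hsymm x y z
  have hbound : ∀ v ∈ [v1, v2, v3, v4], ∀ i : Fin n, -3 ≤ v i ∧ v i ≤ 3 := by
    intro v hv i
    rcases hx i with h1 | h1 <;> rcases hy i with h2 | h2 <;> rcases hz i with h3 | h3 <;>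
      fin_cases hv <;> simp only [hv1, hv2, hv3, hv4] <;> rw [h1, h2, h3] <;> norm_num
  have hpick : ∃ v ∈ [v1, v2, v3, v4], F T v ≥ 6 * G T x y z := by
    by_contra h
    push_neg at h
    have h1 := h v1 (by simp)
    have h2 := h v2 (by simp)
    have h3 := h v3 (by simp)
    have h4 := h v4 (by simp)
    linarith
  obtain ⟨v, hvmem, hvge⟩ := hpick
  obtain ⟨w3, hw3, hw3ge⟩ := round_all T hml Finset.univ v (hbound v hvmem)
    (fun i hi => absurd (Finset.mem_univ i) hi)
  refine ⟨fun i => (1 / 3 : ℝ) * w3 i, ?_, ?_⟩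
  · intro i
    rcases hw3 i with h | h <;> simp only [h] <;> norm_num
  · rw [← G_eq T _ _ _, ← G_eq T x y z]
    have hF : G T (fun i => (1 / 3 : ℝ) * w3 i) (fun i => (1 / 3 : ℝ) * w3 i)
        (fun i => (1 / 3 : ℝ) * w3 i) = (1 / 3 : ℝ) ^ 3 * F T w3 := F_smul T (1 / 3) w3
    rw [hF]
    have : F T w3 ≥ 6 * G T x y z := le_trans hvge hw3ge
    nlinarith [this]
end

section
/- Let n ≥ 1 and let T ∈ ℝ^{n×n×n} be a 3-tensor that is symmetric (T_{ijk} invariant under all permutations of (i,j,k)) and multilinear (T_{ijk} = 0 whenever two of the indices i,j,k coincide). Then the supremum over unit vectors x ∈ S^{n−1} of ∑_{i,j,k} T_{ijk} x_i x_j x_k is at least (2/9) times the supremum over unit vectors x,y,z ∈ S^{n−1} of ∑_{i,j,k} T_{ijk} x_i y_j z_k. -/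
open Finset

namespace Stmt3Aux

variable {n : ℕ}

/-- trilinear form -/
def B (T : Fin n → Fin n → Fin n → ℝ) (x y z : Fin n → ℝ) : ℝ :=
  ∑ i, ∑ j, ∑ k, T i j k * x i * y j * z k

def Q (x : Fin n → ℝ) : ℝ := ∑ i, x i ^ 2

variable (T : Fin n → Fin n → Fin n → ℝ)

lemma B_add1 (x x' y z : Fin n → ℝ) :
    B T (x + x') y z = B T x y z + B T x' y z := by
  unfold B
  rw [← Finset.sum_add_distrib]
  refine Finset.sum_congr rfl fun i _ => ?_
  rw [← Finset.sum_add_distrib]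
  refine Finset.sum_congr rfl fun j _ => ?_
  rw [← Finset.sum_add_distrib]
  refine Finset.sum_congr rfl fun k _ => ?_
  simp only [Pi.add_apply]; ring

lemma B_add2 (x y y' z : Fin n → ℝ) :
    B T x (y + y') z = B T x y z + B T x y' z := by
  unfold B
  rw [← Finset.sum_add_distrib]
  refine Finset.sum_congr rfl fun i _ => ?_
  rw [← Finset.sum_add_distrib]
  refine Finset.sum_congr rfl fun j _ => ?_
  rw [← Finset.sum_add_distrib]
  refine Finset.sum_congr rfl fun k _ => ?_
  simp only [Pi.add_apply]; ring

lemma B_add3 (x y z z' : Fin n → ℝ) :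
    B T x y (z + z') = B T x y z + B T x y z' := by
  unfold B
  rw [← Finset.sum_add_distrib]
  refine Finset.sum_congr rfl fun i _ => ?_
  rw [← Finset.sum_add_distrib]
  refine Finset.sum_congr rfl fun j _ => ?_
  rw [← Finset.sum_add_distrib]
  refine Finset.sum_congr rfl fun k _ => ?_
  simp only [Pi.add_apply]; ring

lemma B_sub1 (x x' y z : Fin n → ℝ) :
    B T (x - x') y z = B T x y z - B T x' y z := by
  unfold B
  rw [← Finset.sum_sub_distrib]
  refine Finset.sum_congr rfl fun i _ => ?_
  rw [← Finset.sum_sub_distrib]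
  refine Finset.sum_congr rfl fun j _ => ?_
  rw [← Finset.sum_sub_distrib]
  refine Finset.sum_congr rfl fun k _ => ?_
  simp only [Pi.sub_apply]; ring

lemma B_sub2 (x y y' z : Fin n → ℝ) :
    B T x (y - y') z = B T x y z - B T x y' z := by
  unfold B
  rw [← Finset.sum_sub_distrib]
  refine Finset.sum_congr rfl fun i _ => ?_
  rw [← Finset.sum_sub_distrib]
  refine Finset.sum_congr rfl fun j _ => ?_
  rw [← Finset.sum_sub_distrib]
  refine Finset.sum_congr rfl fun k _ => ?_
  simp only [Pi.sub_apply]; ring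

lemma B_sub3 (x y z z' : Fin n → ℝ) :
    B T x y (z - z') = B T x y z - B T x y z' := by
  unfold B
  rw [← Finset.sum_sub_distrib]
  refine Finset.sum_congr rfl fun i _ => ?_
  rw [← Finset.sum_sub_distrib]
  refine Finset.sum_congr rfl fun j _ => ?_
  rw [← Finset.sum_sub_distrib]
  refine Finset.sum_congr rfl fun k _ => ?_
  simp only [Pi.sub_apply]; ring

lemma B_neg3 (x y z : Fin n → ℝ) : B T x y (-z) = - B T x y z := by
  unfold B
  rw [← Finset.sum_neg_distrib]
  refine Finset.sum_congr rfl fun i _ => ?_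
  rw [← Finset.sum_neg_distrib]
  refine Finset.sum_congr rfl fun j _ => ?_
  rw [← Finset.sum_neg_distrib]
  refine Finset.sum_congr rfl fun k _ => ?_
  simp only [Pi.neg_apply]; ring

lemma B_neg_all (x y z : Fin n → ℝ) : B T (-x) (-y) (-z) = - B T x y z := by
  unfold B
  rw [← Finset.sum_neg_distrib]
  refine Finset.sum_congr rfl fun i _ => ?_
  rw [← Finset.sum_neg_distrib]
  refine Finset.sum_congr rfl fun j _ => ?_
  rw [← Finset.sum_neg_distrib]
  refine Finset.sum_congr rfl fun k _ => ?_
  simp only [Pi.neg_apply]; ring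

lemma B_mul1 (c : ℝ) (v y z : Fin n → ℝ) :
    B T (fun i => c * v i) y z = c * B T v y z := by
  unfold B
  rw [Finset.mul_sum]
  refine Finset.sum_congr rfl fun i _ => ?_
  rw [Finset.mul_sum]
  refine Finset.sum_congr rfl fun j _ => ?_
  rw [Finset.mul_sum]
  refine Finset.sum_congr rfl fun k _ => ?_
  ring

lemma B_mul2 (c : ℝ) (x v z : Fin n → ℝ) :
    B T x (fun i => c * v i) z = c * B T x v z := by
  unfold B
  rw [Finset.mul_sum]
  refine Finset.sum_congr rfl fun i _ => ?_
  rw [Finset.mul_sum]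
  refine Finset.sum_congr rfl fun j _ => ?_
  rw [Finset.mul_sum]
  refine Finset.sum_congr rfl fun k _ => ?_
  ring

lemma B_mul3 (c : ℝ) (x y v : Fin n → ℝ) :
    B T x y (fun i => c * v i) = c * B T x y v := by
  unfold B
  rw [Finset.mul_sum]
  refine Finset.sum_congr rfl fun i _ => ?_
  rw [Finset.mul_sum]
  refine Finset.sum_congr rfl fun j _ => ?_
  rw [Finset.mul_sum]
  refine Finset.sum_congr rfl fun k _ => ?_
  ring

lemma B_comm12 (h : ∀ i j k, T i j k = T j i k) (x y z : Fin n → ℝ) :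
    B T x y z = B T y x z := by
  unfold B
  rw [Finset.sum_comm]
  refine Finset.sum_congr rfl fun j _ => ?_
  refine Finset.sum_congr rfl fun i _ => ?_
  refine Finset.sum_congr rfl fun k _ => ?_
  rw [h i j k]; ring

lemma B_comm23 (h : ∀ i j k, T i j k = T i k j) (x y z : Fin n → ℝ) :
    B T x y z = B T x z y := by
  unfold B
  refine Finset.sum_congr rfl fun i _ => ?_
  rw [Finset.sum_comm]
  refine Finset.sum_congr rfl fun k _ => ?_
  refine Finset.sum_congr rfl fun j _ => ?_
  rw [h i j k]; ring

lemma Q_nonneg (x : Fin n → ℝ) : 0 ≤ Q x :=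
  Finset.sum_nonneg fun i _ => sq_nonneg _

lemma Q_neg (x : Fin n → ℝ) : Q (-x) = Q x := by
  unfold Q; simp

lemma Q_par (x y : Fin n → ℝ) : Q (x + y) + Q (x - y) = 2 * Q x + 2 * Q y := by
  unfold Q
  rw [← Finset.sum_add_distrib, Finset.mul_sum, Finset.mul_sum, ← Finset.sum_add_distrib]
  refine Finset.sum_congr rfl fun i _ => ?_
  simp only [Pi.add_apply, Pi.sub_apply]; ring

lemma sqrt_cube_superadd {a b : ℝ} (ha : 0 ≤ a) (hb : 0 ≤ b) :
    Real.sqrt a ^ 3 + Real.sqrt b ^ 3 ≤ Real.sqrt (a + b) ^ 3 := by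
  have h1 : Real.sqrt a ≤ Real.sqrt (a + b) := Real.sqrt_le_sqrt (by linarith)
  have h2 : Real.sqrt b ≤ Real.sqrt (a + b) := Real.sqrt_le_sqrt (by linarith)
  have ha' : Real.sqrt a ^ 2 = a := Real.sq_sqrt ha
  have hb' : Real.sqrt b ^ 2 = b := Real.sq_sqrt hb
  have hab' : Real.sqrt (a + b) ^ 2 = a + b := Real.sq_sqrt (by linarith)
  have hsa : 0 ≤ Real.sqrt a := Real.sqrt_nonneg a
  have hsb : 0 ≤ Real.sqrt b := Real.sqrt_nonneg b
  nlinarith [mul_le_mul_of_nonneg_left h1 ha, mul_le_mul_of_nonneg_left h2 hb]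


section Main

variable {n : ℕ} (T : Fin n → Fin n → Fin n → ℝ)

/-- polarization identity 1 -/
lemma ident1 (h12 : ∀ i j k, T i j k = T j i k) (h23 : ∀ i j k, T i j k = T i k j)
    (u z : Fin n → ℝ) :
    B T (u + z) (u + z) (u + z) - B T (u - z) (u - z) (u - z)
      = 6 * B T u u z + 2 * B T z z z := by
  have c1 : B T u z u = B T u u z := B_comm23 T h23 u z u
  have c2 : B T z u u = B T u u z := by
    rw [B_comm12 T h12 z u u]; exact c1
  have c3 : B T z u z = B T u z z := B_comm12 T h12 z u z
  have c4 : B T z z u = B T u z z := by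
    rw [B_comm23 T h23 z z u]; exact c3
  rw [B_add1, B_add2, B_add2, B_add3, B_add3, B_add3, B_add3,
      B_sub1, B_sub2, B_sub2, B_sub3, B_sub3, B_sub3, B_sub3]
  linarith

/-- polarization identity 2 -/
lemma ident2 (h12 : ∀ i j k, T i j k = T j i k) (x y z : Fin n → ℝ) :
    B T (x + y) (x + y) z - B T (x - y) (x - y) z = 4 * B T x y z := by
  have c1 : B T y x z = B T x y z := B_comm12 T h12 y x z
  rw [B_add1, B_add2, B_add2, B_sub1, B_sub2, B_sub2]
  linarith

end Main

end Stmt3Aux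

open Stmt3Aux

/-- **Decoupling over the unit sphere** for homogeneous cubic multilinear polynomials:
the supremum of `f(x) = ∑ T_{ijk} x_i x_j x_k` over the unit sphere is at least
`(2/9)` times the supremum of the decoupled form `f̃(x,y,z) = ∑ T_{ijk} x_i y_j z_k`
over triples of unit vectors. -/
theorem stmt_3 (n : ℕ) (hn : 1 ≤ n) (T : Fin n → Fin n → Fin n → ℝ)
    (hsymm : ∀ i j k, T i j k = T j i k ∧ T i j k = T i k j)
    (hml : ∀ i j k, (i = j ∨ j = k ∨ i = k) → T i j k = 0) :
    (⨆ x : {x : Fin n → ℝ // ∑ i, x i ^ 2 = 1},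
        ∑ i, ∑ j, ∑ k, T i j k * x.1 i * x.1 j * x.1 k) ≥
      (2 / 9) * ⨆ x : {x : Fin n → ℝ // ∑ i, x i ^ 2 = 1},
        ⨆ y : {y : Fin n → ℝ // ∑ i, y i ^ 2 = 1},
          ⨆ z : {z : Fin n → ℝ // ∑ i, z i ^ 2 = 1},
            ∑ i, ∑ j, ∑ k, T i j k * x.1 i * y.1 j * z.1 k := by
  classical
  have h12 : ∀ i j k, T i j k = T j i k := fun i j k => (hsymm i j k).1
  have h23 : ∀ i j k, T i j k = T i k j := fun i j k => (hsymm i j k).2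
  set S := {x : Fin n → ℝ // ∑ i, x i ^ 2 = 1} with hS
  -- unit basis vector
  have i0 : Fin n := ⟨0, hn⟩
  set e0 : Fin n → ℝ := fun i => if i = (⟨0, hn⟩ : Fin n) then 1 else 0 with he0def
  have he0 : ∑ i, e0 i ^ 2 = 1 := by
    rw [he0def]
    simp [ite_pow, Finset.sum_ite_eq']
  haveI : Nonempty S := ⟨⟨e0, he0⟩⟩
  set F := (⨆ x : S, ∑ i, ∑ j, ∑ k, T i j k * x.1 i * x.1 j * x.1 k) with hFdef
  -- boundedness of the cubic over the sphere
  have hbdd : BddAbove (Set.range fun x : S => ∑ i, ∑ j, ∑ k, T i j k * x.1 i * x.1 j * x.1 k) := by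
    refine ⟨∑ i, ∑ j, ∑ k, |T i j k|, ?_⟩
    rintro _ ⟨x, rfl⟩
    have hx1 : ∀ i, |x.1 i| ≤ 1 := by
      intro i
      have h1 : x.1 i ^ 2 ≤ 1 := by
        have := Finset.single_le_sum (f := fun j => x.1 j ^ 2)
          (fun j _ => sq_nonneg _) (Finset.mem_univ i)
        rw [x.2] at this
        exact this
      nlinarith [abs_nonneg (x.1 i), sq_abs (x.1 i)]
    refine Finset.sum_le_sum fun i _ => Finset.sum_le_sum fun j _ =>
      Finset.sum_le_sum fun k _ => ?_
    calc T i j k * x.1 i * x.1 j * x.1 k ≤ |T i j k * x.1 i * x.1 j * x.1 k| := le_abs_self _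
      _ = |T i j k| * |x.1 i| * |x.1 j| * |x.1 k| := by
          rw [abs_mul, abs_mul, abs_mul]
      _ ≤ |T i j k| * 1 * 1 * 1 := by
          gcongr <;> first | exact abs_nonneg _ | exact hx1 _ | positivity
      _ = |T i j k| := by ring
  have hle : ∀ x : S, B T x.1 x.1 x.1 ≤ F := fun x => le_ciSup hbdd x
  -- F is nonnegative
  have hF0 : 0 ≤ F := by
    have h1 : B T e0 e0 e0 ≤ F := hle ⟨e0, he0⟩
    have hne0 : ∑ i, (-e0) i ^ 2 = 1 := by
      simpa [Q] using (Q_neg e0).trans he0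
    have h2 : B T (-e0) (-e0) (-e0) ≤ F := hle ⟨-e0, hne0⟩
    have h3 : B T (-e0) (-e0) (-e0) = - B T e0 e0 e0 := B_neg_all T e0 e0 e0
    linarith
  -- homogeneity bound
  have hcube : ∀ w : Fin n → ℝ, B T w w w ≤ F * Real.sqrt (Q w) ^ 3 := by
    intro w
    by_cases hQ : Q w = 0
    · have hw : ∀ i, w i = 0 := by
        intro i
        have h1 : w i ^ 2 ≤ 0 := by
          have := Finset.single_le_sum (f := fun j => w j ^ 2)
            (fun j _ => sq_nonneg _) (Finset.mem_univ i)
          unfold Q at hQ; rw [hQ] at this; exact this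
        nlinarith [sq_nonneg (w i)]
      have : B T w w w = 0 := by unfold B; simp [hw]
      rw [this, hQ, Real.sqrt_zero]
      simp
    · have hQpos : 0 < Q w := lt_of_le_of_ne (Q_nonneg w) (Ne.symm hQ)
      set r := Real.sqrt (Q w) with hr
      have hrpos : 0 < r := Real.sqrt_pos.mpr hQpos
      have hr2 : r ^ 2 = Q w := Real.sq_sqrt hQpos.le
      set w' : Fin n → ℝ := fun i => w i / r with hw'
      have hQ' : ∑ i, w' i ^ 2 = 1 := by
        rw [hw']
        simp only [div_pow, ← Finset.sum_div]
        rw [show ∑ i, w i ^ 2 = Q w from rfl, ← hr2]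
        field_simp
      have hww' : w = fun i => r * w' i := by
        funext i; rw [hw']; field_simp
      have hBle : B T w' w' w' ≤ F := hle ⟨w', hQ'⟩
      calc B T w w w = r * (r * (r * B T w' w' w')) := by
            conv_lhs => rw [hww']
            rw [B_mul1, B_mul2, B_mul3]
        _ ≤ r * (r * (r * F)) := by
            have h1 : r * B T w' w' w' ≤ r * F :=
              mul_le_mul_of_nonneg_left hBle hrpos.le
            have h2 : r * (r * B T w' w' w') ≤ r * (r * F) :=
              mul_le_mul_of_nonneg_left h1 hrpos.le
            exact mul_le_mul_of_nonneg_left h2 hrpos.le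
        _ = F * r ^ 3 := by ring
  -- key bound for unit u, unit z
  have key1u : ∀ u z : Fin n → ℝ, Q u = 1 → Q z = 1 → B T u u z ≤ 5 / 3 * F := by
    intro u z hu hz
    have hid := ident1 T h12 h23 u z
    have h1 : B T (u + z) (u + z) (u + z) ≤ F * Real.sqrt (Q (u + z)) ^ 3 := hcube _
    have h2 : - B T (u - z) (u - z) (u - z) ≤ F * Real.sqrt (Q (u - z)) ^ 3 := by
      have := hcube (-(u - z))
      rw [show (-(u - z) : Fin n → ℝ) = z - u from by funext i; simp [Pi.sub_apply]; try ring] at this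
      have hodd : B T (z - u) (z - u) (z - u) = - B T (u - z) (u - z) (u - z) := by
        rw [show (z - u : Fin n → ℝ) = -(u - z) from by funext i; simp [Pi.sub_apply]; try ring]
        exact B_neg_all T _ _ _
      rw [hodd] at this
      rw [show Q (z - u) = Q (u - z) from by
        unfold Q; refine Finset.sum_congr rfl fun i _ => ?_;
        simp only [Pi.sub_apply]; ring] at this
      exact this
    have h3 : - B T z z z ≤ F := by
      have hnz : ∑ i, (-z) i ^ 2 = 1 := by simpa [Q] using (Q_neg z).trans hz
      have := hle ⟨-z, hnz⟩
      have hodd : B T (-z) (-z) (-z) = - B T z z z := B_neg_all T z z z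
      rw [hodd] at this; exact this
    -- sqrt cube bound
    have hsum : Q (u + z) + Q (u - z) = 4 := by
      have := Q_par u z; rw [hu, hz] at this; linarith
    have hs : Real.sqrt (Q (u + z)) ^ 3 + Real.sqrt (Q (u - z)) ^ 3 ≤ 8 := by
      have h4 := sqrt_cube_superadd (Q_nonneg (u + z)) (Q_nonneg (u - z))
      rw [hsum] at h4
      have h24 : Real.sqrt 4 = 2 := by
        rw [show (4:ℝ) = 2 ^ 2 by norm_num, Real.sqrt_sq (by norm_num : (0:ℝ) ≤ 2)]
      rw [h24] at h4
      have h8 : (2:ℝ) ^ 3 = 8 := by norm_num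
      linarith
    have hmul : F * Real.sqrt (Q (u + z)) ^ 3 + F * Real.sqrt (Q (u - z)) ^ 3 ≤ 8 * F := by
      have : F * (Real.sqrt (Q (u + z)) ^ 3 + Real.sqrt (Q (u - z)) ^ 3) ≤ F * 8 :=
        mul_le_mul_of_nonneg_left hs hF0
      linarith
    linarith
  -- general u
  have key1 : ∀ u z : Fin n → ℝ, Q z = 1 → B T u u z ≤ 5 / 3 * F * Q u := by
    intro u z hz
    by_cases hQ : Q u = 0
    · have hu : ∀ i, u i = 0 := by
        intro i
        have h1 : u i ^ 2 ≤ 0 := by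
          have := Finset.single_le_sum (f := fun j => u j ^ 2)
            (fun j _ => sq_nonneg _) (Finset.mem_univ i)
          unfold Q at hQ; rw [hQ] at this; exact this
        nlinarith [sq_nonneg (u i)]
      have : B T u u z = 0 := by unfold B; simp [hu]
      rw [this, hQ]; simp
    · have hQpos : 0 < Q u := lt_of_le_of_ne (Q_nonneg u) (Ne.symm hQ)
      set r := Real.sqrt (Q u) with hr
      have hrpos : 0 < r := Real.sqrt_pos.mpr hQpos
      have hr2 : r ^ 2 = Q u := Real.sq_sqrt hQpos.le
      set u' : Fin n → ℝ := fun i => u i / r with hu'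
      have hQ' : Q u' = 1 := by
        rw [hu']; unfold Q
        simp only [div_pow, ← Finset.sum_div]
        rw [show ∑ i, u i ^ 2 = Q u from rfl, ← hr2]
        field_simp
      have huu' : u = fun i => r * u' i := by
        funext i; rw [hu']; field_simp
      have hBle : B T u' u' z ≤ 5 / 3 * F := key1u u' z hQ' hz
      calc B T u u z = r * (r * B T u' u' z) := by
            conv_lhs => rw [huu']
            rw [B_mul1, B_mul2]
        _ ≤ r * (r * (5 / 3 * F)) := by
            have h1 : r * B T u' u' z ≤ r * (5/3 * F) :=
              mul_le_mul_of_nonneg_left hBle hrpos.le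
            exact mul_le_mul_of_nonneg_left h1 hrpos.le
        _ = 5 / 3 * F * r ^ 2 := by ring
        _ = 5 / 3 * F * Q u := by rw [hr2]
  -- decoupled bound
  have key2 : ∀ x y z : S, B T x.1 y.1 z.1 ≤ 5 / 3 * F := by
    intro x y z
    have hx : Q x.1 = 1 := x.2
    have hy : Q y.1 = 1 := y.2
    have hz : Q z.1 = 1 := z.2
    have hid := ident2 T h12 x.1 y.1 z.1
    have h1 : B T (x.1 + y.1) (x.1 + y.1) z.1 ≤ 5 / 3 * F * Q (x.1 + y.1) := key1 _ _ hz
    have hnz : Q (-z.1) = 1 := (Q_neg z.1).trans hz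
    have h2 : - B T (x.1 - y.1) (x.1 - y.1) z.1 ≤ 5 / 3 * F * Q (x.1 - y.1) := by
      have := key1 (x.1 - y.1) (-z.1) hnz
      rw [B_neg3] at this
      linarith
    have hsum : Q (x.1 + y.1) + Q (x.1 - y.1) = 4 := by
      have := Q_par x.1 y.1; rw [hx, hy] at this; linarith
    have hcomb : 5 / 3 * F * Q (x.1 + y.1) + 5 / 3 * F * Q (x.1 - y.1) = 5 / 3 * F * 4 := by
      have : 5 / 3 * F * (Q (x.1 + y.1) + Q (x.1 - y.1)) = 5 / 3 * F * 4 := by rw [hsum]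
      linarith [this]
    nlinarith [h1, h2, hid, hcomb]
  -- conclude
  have hG : (⨆ x : S, ⨆ y : S, ⨆ z : S,
      ∑ i, ∑ j, ∑ k, T i j k * x.1 i * y.1 j * z.1 k) ≤ 5 / 3 * F := by
    refine ciSup_le fun x => ciSup_le fun y => ciSup_le fun z => ?_
    exact key2 x y z
  have h29 : (2:ℝ) / 9 * (⨆ x : S, ⨆ y : S, ⨆ z : S,
      ∑ i, ∑ j, ∑ k, T i j k * x.1 i * y.1 j * z.1 k) ≤ 2 / 9 * (5 / 3 * F) :=
    mul_le_mul_of_nonneg_left hG (by norm_num)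
  have : (2:ℝ) / 9 * (5 / 3 * F) ≤ F := by linarith
  calc (2:ℝ) / 9 * (⨆ x : S, ⨆ y : S, ⨆ z : S,
      ∑ i, ∑ j, ∑ k, T i j k * x.1 i * y.1 j * z.1 k) ≤ 2 / 9 * (5 / 3 * F) := h29
    _ ≤ F := this
end

section
/- There exists an absolute constant C > 0 with the following property. For every n ≥ 1, every 3-tensor T ∈ ℝ^{n×n×n}, and every degree-6 pseudo-expectation L over the hypercube {−1,1}^{3n} in the 3n variables x₁,…,xₙ,y₁,…,yₙ,z₁,…,zₙ, one has L(∑_{i,j,k} T_{ijk} x_i y_j z_k) ≤ C·√n · max_{x,y,z ∈ {−1,1}^n} ∑_{i,j,k} T_{ijk} x_i y_j z_k. -/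
/-!
The moment matrix of `L` on the monomials `xᵢ` and `yⱼ zₖ` is positive semidefinite, so
`L (∑ T x y z) = ∑ Tᵢⱼₖ ⟨uᵢ, vⱼₖ⟩` for Gram vectors of norm one. Grothendieck's inequality bounds
this by `27` times the maximum of `∑ Tᵢⱼₖ xᵢ δⱼₖ` over signs `x`, `δ`. For fixed `x`, the rows
`cⱼ = (∑ᵢ Tᵢⱼₖ xᵢ)ₖ` have `ℓ¹`-norm at most `√n` times their `ℓ²`-norm, and Grothendieck's
inequality once more, now against the standard basis, bounds `∑ⱼ ‖cⱼ‖₂` by `27` times the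
maximum of the cubic form.

Grothendieck's inequality is proved by writing unit vectors as Rademacher sums and truncating
these at height `3`: the truncated parts are bounded pointwise, while the tails are small in `L²`
by the fourth-moment bound, so their contribution is at most `2/3` of the Grothendieck constant.
-/

open MvPolynomial Matrix

noncomputable def boolSign (b : Bool) : ℝ := if b then 1 else -1

@[simp] lemma boolSign_mul_self (b : Bool) : boolSign b * boolSign b = 1 := by
  cases b <;> simp [boolSign]

@[simp] lemma boolSign_not (b : Bool) : boolSign (!b) = -boolSign b := by
  cases b <;> simp [boolSign]

@[simp] lemma abs_boolSign (b : Bool) : |boolSign b| = 1 := by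
  cases b <;> simp [boolSign]

lemma boolSign_decide_mul (x : ℝ) : boolSign (decide (0 ≤ x)) * x = |x| := by
  by_cases h : 0 ≤ x
  · simp [boolSign, h, abs_of_nonneg h]
  · simp [boolSign, h, abs_of_neg (not_le.mp h)]

section Rademacher

variable {ι : Type*}

lemma sum_boolSign_mul_eq_zero [Fintype ι] [DecidableEq ι] (t : ι) {f : (ι → Bool) → ℝ}
    (hf : ∀ ε b, f (Function.update ε t b) = f ε) :
    ∑ ε : ι → Bool, boolSign (ε t) * f ε = 0 := by
  let flip : (ι → Bool) → (ι → Bool) := fun ε => Function.update ε t (!ε t)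
  have hflip : Function.Involutive flip := fun ε => by simp [flip]
  have h := Fintype.sum_bijective flip hflip.bijective (fun ε => boolSign (ε t) * f ε)
    (fun ε => -(boolSign (ε t) * f ε)) (fun ε => by simp [flip, hf])
  rw [Finset.sum_neg_distrib] at h
  linarith

lemma sum_boolSign_mul_boolSign [Fintype ι] [DecidableEq ι] (t t' : ι) :
    ∑ ε : ι → Bool, boolSign (ε t) * boolSign (ε t') =
      if t = t' then (Fintype.card (ι → Bool) : ℝ) else 0 := by
  split_ifs with h
  · simp [h]
  · exact sum_boolSign_mul_eq_zero t fun ε b => by rw [Function.update_of_ne (Ne.symm h)]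

noncomputable def rademacher (s : Finset ι) (c : ι → ℝ) (ε : ι → Bool) : ℝ :=
  ∑ t ∈ s, c t * boolSign (ε t)

lemma rademacher_dotProduct [Fintype ι] [DecidableEq ι] (s : Finset ι) (c c' : ι → ℝ) :
    rademacher s c ⬝ᵥ rademacher s c' =
      Fintype.card (ι → Bool) * ∑ t ∈ s, c t * c' t := by
  have hε : ∀ ε : ι → Bool, rademacher s c ε * rademacher s c' ε =
      ∑ t ∈ s, ∑ t' ∈ s, c t * c' t' * (boolSign (ε t) * boolSign (ε t')) := fun ε => by
    rw [rademacher, rademacher, Finset.sum_mul_sum]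
    exact Finset.sum_congr rfl fun t _ => Finset.sum_congr rfl fun t' _ => by ring
  simp only [dotProduct, hε, Finset.mul_sum]
  rw [Finset.sum_comm]
  refine Finset.sum_congr rfl fun t ht => ?_
  rw [Finset.sum_comm]
  simp_rw [← Finset.mul_sum, sum_boolSign_mul_boolSign]
  simp [mul_comm, ht]

lemma rademacher_update_of_notMem [DecidableEq ι] {s : Finset ι} {a : ι} (ha : a ∉ s) (c : ι → ℝ)
    (ε : ι → Bool) (b : Bool) : rademacher s c (Function.update ε a b) = rademacher s c ε :=
  Finset.sum_congr rfl fun t ht => by rw [Function.update_of_ne (ne_of_mem_of_not_mem ht ha)]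

lemma sum_rademacher_sq [Fintype ι] [DecidableEq ι] (s : Finset ι) (c : ι → ℝ) :
    ∑ ε, rademacher s c ε ^ 2 = Fintype.card (ι → Bool) * ∑ t ∈ s, c t ^ 2 := by
  simpa only [dotProduct, sq] using rademacher_dotProduct s c c

lemma sum_rademacher_pow_four_le [Fintype ι] [DecidableEq ι] (s : Finset ι) (c : ι → ℝ) :
    ∑ ε, rademacher s c ε ^ 4 ≤ 3 * Fintype.card (ι → Bool) * (∑ t ∈ s, c t ^ 2) ^ 2 := by
  induction s using Finset.induction_on with
  | empty => simp [rademacher]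
  | @insert a s ha ih =>
    set N : ℝ := (Fintype.card (ι → Bool) : ℝ)
    set Q := ∑ t ∈ s, c t ^ 2
    -- expand `(c_a ε_a + R)⁴` using `ε_a² = 1`; the terms odd in `ε_a` average out
    have hexpand : ∀ ε, rademacher (insert a s) c ε ^ 4 =
        (c a ^ 4 + 6 * c a ^ 2 * rademacher s c ε ^ 2 + rademacher s c ε ^ 4) +
          boolSign (ε a) * ((4 * c a ^ 3 + 4 * c a * rademacher s c ε ^ 2) * rademacher s c ε) := by
      intro ε
      rw [rademacher, Finset.sum_insert ha, ← rademacher]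
      linear_combination (c a ^ 4 * (boolSign (ε a) * boolSign (ε a) + 1) +
        4 * c a ^ 3 * rademacher s c ε * boolSign (ε a) + 6 * c a ^ 2 * rademacher s c ε ^ 2) *
          boolSign_mul_self (ε a)
    have hodd : ∑ ε : ι → Bool, boolSign (ε a) *
        ((4 * c a ^ 3 + 4 * c a * rademacher s c ε ^ 2) * rademacher s c ε) = 0 :=
      sum_boolSign_mul_eq_zero a fun ε b => by rw [rademacher_update_of_notMem ha]
    have heven : ∑ ε : ι → Bool, (c a ^ 4 + 6 * c a ^ 2 * rademacher s c ε ^ 2 +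
        rademacher s c ε ^ 4) =
          N * c a ^ 4 + 6 * c a ^ 2 * (N * Q) + ∑ ε, rademacher s c ε ^ 4 := by
      rw [Finset.sum_add_distrib, Finset.sum_add_distrib, ← Finset.mul_sum, sum_rademacher_sq,
        Finset.sum_const, Finset.card_univ, nsmul_eq_mul]
    rw [Finset.sum_congr rfl fun ε _ => hexpand ε, Finset.sum_add_distrib, hodd, add_zero, heven,
      Finset.sum_insert ha]
    nlinarith [mul_nonneg (Nat.cast_nonneg (Fintype.card (ι → Bool)) : (0 : ℝ) ≤ N)
      (sq_nonneg (c a ^ 2))]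

end Rademacher

noncomputable def truncate (a x : ℝ) : ℝ := max (-a) (min a x)

lemma abs_truncate_le {a : ℝ} (ha : 0 ≤ a) (x : ℝ) : |truncate a x| ≤ a :=
  abs_le.mpr ⟨le_max_left _ _, max_le (by linarith) (min_le_left _ _)⟩

lemma truncate_cases {a : ℝ} (ha : 0 ≤ a) (x : ℝ) :
    (x ≤ -a ∧ truncate a x = -a) ∨ (|x| ≤ a ∧ truncate a x = x) ∨ (a ≤ x ∧ truncate a x = a) := by
  unfold truncate
  rcases le_total x (-a) with h | h
  · exact Or.inl ⟨h, by rw [min_eq_right (by linarith), max_eq_left h]⟩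
  rcases le_total x a with h' | h'
  · exact Or.inr (Or.inl ⟨abs_le.mpr ⟨h, h'⟩, by rw [min_eq_right h', max_eq_right h]⟩)
  · exact Or.inr (Or.inr ⟨h', by rw [min_eq_left h', max_eq_right (by linarith)]⟩)

lemma truncate_sq_le {a : ℝ} (ha : 0 ≤ a) (x : ℝ) : truncate a x ^ 2 ≤ x ^ 2 := by
  rcases truncate_cases ha x with ⟨h, e⟩ | ⟨-, e⟩ | ⟨h, e⟩ <;> rw [e] <;> nlinarith

lemma sub_truncate_sq_le {a : ℝ} (ha : 0 ≤ a) (x : ℝ) :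
    4 * a ^ 2 * (x - truncate a x) ^ 2 ≤ x ^ 4 := by
  rcases truncate_cases ha x with ⟨h, e⟩ | ⟨-, e⟩ | ⟨h, e⟩ <;> rw [e]
  · nlinarith [sq_nonneg (x + 2 * a), mul_nonneg ha (sub_nonneg.mpr h)]
  · nlinarith [pow_nonneg (sq_nonneg x) 2]
  · nlinarith [sq_nonneg (x - 2 * a), mul_nonneg ha (sub_nonneg.mpr h)]

section Truncation

variable {ι : Type*} [Fintype ι] [DecidableEq ι] {c : ι → ℝ}

lemma rademacher_dotProduct_self_le (hc : c ⬝ᵥ c ≤ 1) :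
    rademacher Finset.univ c ⬝ᵥ rademacher Finset.univ c ≤ Fintype.card (ι → Bool) := by
  rw [rademacher_dotProduct]
  exact mul_le_of_le_one_right (Nat.cast_nonneg _) hc

lemma truncate_rademacher_dotProduct_self_le (hc : c ⬝ᵥ c ≤ 1) :
    (fun ε => truncate 3 (rademacher Finset.univ c ε)) ⬝ᵥ
      (fun ε => truncate 3 (rademacher Finset.univ c ε)) ≤ Fintype.card (ι → Bool) :=
  (Finset.sum_le_sum fun ε _ => by
    simpa only [sq] using truncate_sq_le (by norm_num) (rademacher Finset.univ c ε)).trans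
    (rademacher_dotProduct_self_le hc)

lemma tail_rademacher_dotProduct_self_le (hc : c ⬝ᵥ c ≤ 1) :
    (fun ε => rademacher Finset.univ c ε - truncate 3 (rademacher Finset.univ c ε)) ⬝ᵥ
      (fun ε => rademacher Finset.univ c ε - truncate 3 (rademacher Finset.univ c ε)) ≤
      Fintype.card (ι → Bool) / 9 := by
  have hc' : ∑ t, c t ^ 2 ≤ 1 := by simpa only [dotProduct, sq] using hc
  have h4 := sum_rademacher_pow_four_le Finset.univ c
  have hN : (0 : ℝ) ≤ Fintype.card (ι → Bool) := Nat.cast_nonneg _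
  have hsq : (∑ t, c t ^ 2) ^ 2 ≤ 1 := pow_le_one₀ (Finset.sum_nonneg fun _ _ => sq_nonneg _) hc'
  have htail : ∀ ε, 36 * (rademacher Finset.univ c ε - truncate 3 (rademacher Finset.univ c ε)) *
      (rademacher Finset.univ c ε - truncate 3 (rademacher Finset.univ c ε)) ≤
        rademacher Finset.univ c ε ^ 4 := fun ε => by
    nlinarith [sub_truncate_sq_le (show (0 : ℝ) ≤ 3 by norm_num) (rademacher Finset.univ c ε)]
  have := Finset.sum_le_sum fun ε (_ : ε ∈ Finset.univ) => htail ε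
  simp only [mul_assoc, ← Finset.mul_sum] at this
  rw [dotProduct]
  nlinarith [mul_le_mul_of_nonneg_left hsq hN]

end Truncation

lemma abs_dotProduct_le_one {ι : Type*} [Fintype ι] {x y : ι → ℝ} (hx : x ⬝ᵥ x ≤ 1)
    (hy : y ⬝ᵥ y ≤ 1) : |x ⬝ᵥ y| ≤ 1 := by
  have hcs : (x ⬝ᵥ y) ^ 2 ≤ (x ⬝ᵥ x) * (y ⬝ᵥ y) := by
    simpa only [dotProduct, sq] using Finset.sum_mul_sq_le_sq_mul_sq Finset.univ x y
  have hy0 : 0 ≤ y ⬝ᵥ y := Finset.sum_nonneg fun t _ => mul_self_nonneg (y t)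
  exact sq_le_one_iff_abs_le_one _ |>.mp <| hcs.trans <| mul_le_one₀ hx hy0 hy

section Grothendieck

universe w

variable {S R : Type*} [Fintype S] [Fintype R]

lemma sum_mul_le_sum_abs {ε : S → ℝ} (hε : ∀ s, |ε s| ≤ 1) (g : S → ℝ) :
    ∑ s, ε s * g s ≤ ∑ s, |g s| :=
  Finset.sum_le_sum fun s _ => (le_abs_self _).trans <| by
    rw [abs_mul]; exact mul_le_of_le_one_left (abs_nonneg _) (hε s)

lemma bilinear_le_of_forall_boolSign {A : S → R → ℝ} {B : ℝ}
    (hB : ∀ (x : S → Bool) (y : R → Bool), ∑ s, ∑ r, A s r * boolSign (x s) * boolSign (y r) ≤ B)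
    {ε : S → ℝ} {δ : R → ℝ} (hε : ∀ s, |ε s| ≤ 1) (hδ : ∀ r, |δ r| ≤ 1) :
    ∑ s, ∑ r, A s r * ε s * δ r ≤ B := by
  set g : R → ℝ := fun r => ∑ s, A s r * ε s
  set y : R → Bool := fun r => decide (0 ≤ g r)
  set h : S → ℝ := fun s => ∑ r, A s r * boolSign (y r)
  calc ∑ s, ∑ r, A s r * ε s * δ r = ∑ r, δ r * g r := by
        simp only [g, Finset.mul_sum]; rw [Finset.sum_comm]; simp only [mul_comm]
    _ ≤ ∑ r, |g r| := sum_mul_le_sum_abs hδ g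
    _ = ∑ s, ε s * h s := by
        simp only [← boolSign_decide_mul, g, h, y, Finset.mul_sum]
        rw [Finset.sum_comm]
        exact Finset.sum_congr rfl fun _ _ => Finset.sum_congr rfl fun _ _ => by ring
    _ ≤ ∑ s, |h s| := sum_mul_le_sum_abs hε h
    _ = ∑ s, ∑ r, A s r * boolSign (decide (0 ≤ h s)) * boolSign (y r) := by
        simp only [← boolSign_decide_mul, h, Finset.mul_sum]
        exact Finset.sum_congr rfl fun _ _ => Finset.sum_congr rfl fun _ _ => by ring
    _ ≤ B := hB _ _

/-- Grothendieck's inequality is proved by bounding the supremum of this set in terms of itself;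
the dimension ranges over all finite types since the proof passes from `ι` to `ι → Bool`. -/
def vectorValues (A : S → R → ℝ) : Set ℝ :=
  {V | ∃ (ι : Type w) (_ : Fintype ι) (u : S → ι → ℝ) (v : R → ι → ℝ),
    (∀ s, u s ⬝ᵥ u s ≤ 1) ∧ (∀ r, v r ⬝ᵥ v r ≤ 1) ∧ ∑ s, ∑ r, A s r * (u s ⬝ᵥ v r) = V}

lemma le_sum_abs_of_mem_vectorValues {A : S → R → ℝ} {V : ℝ} (hV : V ∈ vectorValues.{w} A) :
    V ≤ ∑ s, ∑ r, |A s r| := by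
  obtain ⟨ι, _, u, v, hu, hv, rfl⟩ := hV
  refine Finset.sum_le_sum fun s _ => Finset.sum_le_sum fun r _ => ?_
  calc A s r * (u s ⬝ᵥ v r) ≤ |A s r| * |u s ⬝ᵥ v r| := by rw [← abs_mul]; exact le_abs_self _
    _ ≤ |A s r| := mul_le_of_le_one_right (abs_nonneg _) (abs_dotProduct_le_one (hu s) (hv r))

lemma sum_mul_dotProduct_le_mul {A : S → R → ℝ} {K : ℝ}
    (hK : ∀ V ∈ vectorValues.{w} A, V ≤ K) {ι : Type w} [Fintype ι] (u : S → ι → ℝ)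
    (v : R → ι → ℝ) {a b : ℝ} (ha : 0 < a) (hb : 0 < b) (hu : ∀ s, u s ⬝ᵥ u s ≤ a ^ 2)
    (hv : ∀ r, v r ⬝ᵥ v r ≤ b ^ 2) :
    ∑ s, ∑ r, A s r * (u s ⬝ᵥ v r) ≤ a * b * K := by
  have hnorm : ∀ {c : ℝ} (hc : 0 < c) (x : ι → ℝ), x ⬝ᵥ x ≤ c ^ 2 →
      (c⁻¹ • x) ⬝ᵥ (c⁻¹ • x) ≤ 1 := fun hc x hx => by
    rw [smul_dotProduct, dotProduct_smul, smul_smul, smul_eq_mul, ← sq, inv_pow]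
    exact inv_mul_le_one_of_le₀ hx (by positivity)
  have hmem := hK _ ⟨ι, inferInstance, fun s => a⁻¹ • u s, fun r => b⁻¹ • v r,
    fun s => hnorm ha _ (hu s), fun r => hnorm hb _ (hv r), rfl⟩
  have hscale : ∑ s, ∑ r, A s r * ((a⁻¹ • u s) ⬝ᵥ (b⁻¹ • v r)) =
      (a * b)⁻¹ * ∑ s, ∑ r, A s r * (u s ⬝ᵥ v r) := by
    simp only [smul_dotProduct, dotProduct_smul, smul_eq_mul, Finset.mul_sum]
    exact Finset.sum_congr rfl fun _ _ => Finset.sum_congr rfl fun _ _ => by ring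
  rw [hscale, inv_mul_le_iff₀ (by positivity)] at hmem
  exact hmem

lemma sum_mul_dotProduct_le_of_abs_le {A : S → R → ℝ} {B : ℝ}
    (hB : ∀ (x : S → Bool) (y : R → Bool), ∑ s, ∑ r, A s r * boolSign (x s) * boolSign (y r) ≤ B)
    {Ω : Type*} [Fintype Ω] {p : S → Ω → ℝ} {q : R → Ω → ℝ} {a b : ℝ} (ha : 0 < a) (hb : 0 < b)
    (hp : ∀ s ω, |p s ω| ≤ a) (hq : ∀ r ω, |q r ω| ≤ b) :
    ∑ s, ∑ r, A s r * (p s ⬝ᵥ q r) ≤ Fintype.card Ω * (a * b * B) := by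
  have hpoint : ∀ ω, ∑ s, ∑ r, A s r * (p s ω * q r ω) ≤ a * b * B := fun ω => by
    have h := bilinear_le_of_forall_boolSign hB (ε := fun s => p s ω / a)
      (δ := fun r => q r ω / b)
      (fun s => by rw [abs_div, abs_of_pos ha, div_le_one ha]; exact hp s ω)
      (fun r => by rw [abs_div, abs_of_pos hb, div_le_one hb]; exact hq r ω)
    have hscale : ∑ s, ∑ r, A s r * (p s ω * q r ω) =
        a * b * ∑ s, ∑ r, A s r * (p s ω / a) * (q r ω / b) := by
      simp only [Finset.mul_sum]
      exact Finset.sum_congr rfl fun _ _ => Finset.sum_congr rfl fun _ _ => by field_simp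
    rw [hscale]
    exact mul_le_mul_of_nonneg_left h (by positivity)
  calc ∑ s, ∑ r, A s r * (p s ⬝ᵥ q r) = ∑ ω, ∑ s, ∑ r, A s r * (p s ω * q r ω) := by
        symm
        rw [Finset.sum_comm]
        refine Finset.sum_congr rfl fun s _ => ?_
        rw [Finset.sum_comm]
        simp only [dotProduct, Finset.mul_sum]
    _ ≤ ∑ _ω : Ω, a * b * B := Finset.sum_le_sum fun ω _ => hpoint ω
    _ = Fintype.card Ω * (a * b * B) := by simp

lemma sum_mul_dotProduct_le_of_forall_le {A : S → R → ℝ} {B K : ℝ}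
    (hB : ∀ (x : S → Bool) (y : R → Bool), ∑ s, ∑ r, A s r * boolSign (x s) * boolSign (y r) ≤ B)
    (hK : ∀ V ∈ vectorValues.{w} A, V ≤ K) {ι : Type w} [Fintype ι] (u : S → ι → ℝ)
    (v : R → ι → ℝ) (hu : ∀ s, u s ⬝ᵥ u s ≤ 1) (hv : ∀ r, v r ⬝ᵥ v r ≤ 1) :
    ∑ s, ∑ r, A s r * (u s ⬝ᵥ v r) ≤ 9 * B + 2 / 3 * K := by
  classical
  set N : ℝ := (Fintype.card (ι → Bool) : ℝ)
  have hN : 0 < N := Nat.cast_pos.mpr Fintype.card_pos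
  set f : S → (ι → Bool) → ℝ := fun s => rademacher Finset.univ (u s)
  set g : R → (ι → Bool) → ℝ := fun r => rademacher Finset.univ (v r)
  set f₀ : S → (ι → Bool) → ℝ := fun s ε => truncate 3 (f s ε)
  set g₀ : R → (ι → Bool) → ℝ := fun r ε => truncate 3 (g r ε)
  have hsplit : N * ∑ s, ∑ r, A s r * (u s ⬝ᵥ v r) =
      ∑ s, ∑ r, A s r * (f₀ s ⬝ᵥ g₀ r) + ∑ s, ∑ r, A s r * ((f s - f₀ s) ⬝ᵥ g r) +
        ∑ s, ∑ r, A s r * (f₀ s ⬝ᵥ (g r - g₀ r)) := by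
    simp only [← Finset.sum_add_distrib, Finset.mul_sum, f, g]
    refine Finset.sum_congr rfl fun s _ => Finset.sum_congr rfl fun r _ => ?_
    simp only [sub_dotProduct, dotProduct_sub, rademacher_dotProduct]
    change _ = _ + A s r * (N * (u s ⬝ᵥ v r) - _) + _
    ring
  have hbounded := sum_mul_dotProduct_le_of_abs_le hB three_pos three_pos
    (p := f₀) (q := g₀) (fun s ε => abs_truncate_le zero_le_three _)
    (fun r ε => abs_truncate_le zero_le_three _)
  have hsqrt : Real.sqrt N ^ 2 = N := Real.sq_sqrt hN.le
  have hsqrt3 : (Real.sqrt N / 3) ^ 2 = N / 9 := by rw [div_pow, hsqrt]; norm_num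
  have hsqN : 0 < Real.sqrt N := Real.sqrt_pos.mpr hN
  have htail₁ := sum_mul_dotProduct_le_mul hK (fun s => f s - f₀ s) g (by positivity) hsqN
    (fun s => (tail_rademacher_dotProduct_self_le (hu s)).trans_eq hsqrt3.symm)
    (fun r => (rademacher_dotProduct_self_le (hv r)).trans_eq hsqrt.symm)
  have htail₂ := sum_mul_dotProduct_le_mul hK f₀ (fun r => g r - g₀ r) hsqN (by positivity)
    (fun s => (truncate_rademacher_dotProduct_self_le (hu s)).trans_eq hsqrt.symm)
    (fun r => (tail_rademacher_dotProduct_self_le (hv r)).trans_eq hsqrt3.symm)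
  have hprod : Real.sqrt N / 3 * Real.sqrt N = N / 3 := by
    rw [div_mul_eq_mul_div, ← sq, hsqrt]
  rw [hprod] at htail₁
  rw [mul_div_assoc', ← sq, hsqrt] at htail₂
  refine le_of_mul_le_mul_left ?_ hN
  rw [hsplit]
  linarith

theorem grothendieck {A : S → R → ℝ} {B : ℝ}
    (hB : ∀ (x : S → Bool) (y : R → Bool), ∑ s, ∑ r, A s r * boolSign (x s) * boolSign (y r) ≤ B)
    {ι : Type w} [Fintype ι] (u : S → ι → ℝ) (v : R → ι → ℝ) (hu : ∀ s, u s ⬝ᵥ u s ≤ 1)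
    (hv : ∀ r, v r ⬝ᵥ v r ≤ 1) :
    ∑ s, ∑ r, A s r * (u s ⬝ᵥ v r) ≤ 27 * B := by
  have hmem : ∑ s, ∑ r, A s r * (u s ⬝ᵥ v r) ∈ vectorValues.{w} A :=
    ⟨ι, inferInstance, u, v, hu, hv, rfl⟩
  have hbdd : BddAbove (vectorValues.{w} A) :=
    ⟨_, fun _ hV => le_sum_abs_of_mem_vectorValues hV⟩
  have hK : ∀ V ∈ vectorValues.{w} A, V ≤ sSup (vectorValues.{w} A) := fun _ hV => le_csSup hbdd hV
  have hself : sSup (vectorValues.{w} A) ≤ 9 * B + 2 / 3 * sSup (vectorValues.{w} A) :=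
    csSup_le ⟨_, hmem⟩ fun _ ⟨κ, _, u', v', hu', hv', hV⟩ =>
      hV ▸ sum_mul_dotProduct_le_of_forall_le hB hK u' v' hu' hv'
  linarith [hK _ hmem]

/-- Grothendieck's inequality tested against the standard basis. -/
lemma sum_sqrt_sum_sq_le {A : S → R → ℝ} {B : ℝ}
    (hB : ∀ (x : S → Bool) (y : R → Bool), ∑ s, ∑ r, A s r * boolSign (x s) * boolSign (y r) ≤ B) :
    ∑ s, Real.sqrt (∑ r, A s r ^ 2) ≤ 27 * B := by
  classical
  have hrow : ∀ s, A s ⬝ᵥ A s = ∑ r, A s r ^ 2 := fun s => by simp only [dotProduct, sq]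
  have hu : ∀ s, ((Real.sqrt (∑ r, A s r ^ 2))⁻¹ • A s) ⬝ᵥ ((Real.sqrt (∑ r, A s r ^ 2))⁻¹ • A s)
      ≤ 1 := fun s => by
    rw [smul_dotProduct, dotProduct_smul, smul_smul, smul_eq_mul, ← sq, inv_pow,
      Real.sq_sqrt (Finset.sum_nonneg fun _ _ => sq_nonneg _), hrow]
    exact inv_mul_le_one_of_le₀ le_rfl (Finset.sum_nonneg fun _ _ => sq_nonneg _)
  have h := grothendieck hB (fun s => (Real.sqrt (∑ r, A s r ^ 2))⁻¹ • A s)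
    (fun r => Pi.single r 1) hu (fun r => by simp)
  convert h using 1
  refine Finset.sum_congr rfl fun s _ => ?_
  simp only [dotProduct_single, Pi.smul_apply, smul_eq_mul, mul_one]
  calc Real.sqrt (∑ r, A s r ^ 2) = (Real.sqrt (∑ r, A s r ^ 2))⁻¹ * ∑ r, A s r ^ 2 := by
        rw [← div_eq_inv_mul, Real.div_sqrt]
    _ = _ := by rw [Finset.mul_sum]; exact Finset.sum_congr rfl fun r _ => by ring

end Grothendieck

lemma sum_abs_le_sqrt_card_mul_sqrt {K : Type*} [Fintype K] (a : K → ℝ) :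
    ∑ k, |a k| ≤ Real.sqrt (Fintype.card K) * Real.sqrt (∑ k, a k ^ 2) := by
  simpa using Real.sum_mul_le_sqrt_mul_sqrt Finset.univ (fun _ => 1) (fun k => |a k|)

lemma decoupled_le {I J K : Type*} [Fintype I] [Fintype J] [Fintype K] (T : I → J → K → ℝ)
    {M : ℝ} (hM : ∀ (x : I → Bool) (y : J → Bool) (z : K → Bool), ∑ i, ∑ j, ∑ k,
      T i j k * boolSign (x i) * boolSign (y j) * boolSign (z k) ≤ M)
    (x : I → Bool) (δ : J × K → Bool) :
    ∑ i, ∑ jk : J × K, T i jk.1 jk.2 * boolSign (x i) * boolSign (δ jk) ≤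
      27 * Real.sqrt (Fintype.card K) * M := by
  set c : J → K → ℝ := fun j k => ∑ i, T i j k * boolSign (x i)
  have hc : ∀ (y : J → Bool) (z : K → Bool),
      ∑ j, ∑ k, c j k * boolSign (y j) * boolSign (z k) ≤ M := fun y z => by
    refine le_of_eq_of_le ?_ (hM x y z)
    simp only [c, Finset.sum_mul]
    exact Finset.sum_comm_cycle
  calc ∑ i, ∑ jk : J × K, T i jk.1 jk.2 * boolSign (x i) * boolSign (δ jk)
      = ∑ j, ∑ k, c j k * boolSign (δ (j, k)) := by
        rw [Finset.sum_comm, Fintype.sum_prod_type]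
        simp only [c, Finset.sum_mul]
    _ ≤ ∑ j, ∑ k, |c j k| := Finset.sum_le_sum fun j _ => Finset.sum_le_sum fun k _ =>
        (le_abs_self _).trans_eq (by rw [abs_mul, abs_boolSign, mul_one])
    _ ≤ ∑ j, Real.sqrt (Fintype.card K) * Real.sqrt (∑ k, c j k ^ 2) :=
        Finset.sum_le_sum fun j _ => sum_abs_le_sqrt_card_mul_sqrt (c j)
    _ ≤ Real.sqrt (Fintype.card K) * (27 * M) := by
        rw [← Finset.mul_sum]
        exact mul_le_mul_of_nonneg_left (sum_sqrt_sum_sq_le hc) (Real.sqrt_nonneg _)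
    _ = 27 * Real.sqrt (Fintype.card K) * M := by ring

lemma exists_dotProduct_eq_of_sq_nonneg {𝒜 : Type*} [CommRing 𝒜] [Algebra ℝ 𝒜]
    (L : 𝒜 →ₗ[ℝ] ℝ) {ι : Type*} [Fintype ι] (m : ι → 𝒜)
    (hL : ∀ c : ι → ℝ, 0 ≤ L ((∑ a, c a • m a) ^ 2)) :
    ∃ (k : ℕ) (g : ι → Fin k → ℝ), ∀ a b, L (m a * m b) = g a ⬝ᵥ g b := by
  set M : Matrix ι ι ℝ := Matrix.of fun a b => L (m a * m b)
  have hM : M.PosSemidef := by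
    refine .of_dotProduct_mulVec_nonneg ?_ fun c => ?_
    · exact Matrix.IsHermitian.ext fun a b => by simp [M, mul_comm]
    · have hquad : star c ⬝ᵥ M *ᵥ c = L ((∑ a, c a • m a) ^ 2) := by
        rw [sq, Finset.sum_mul_sum]
        simp only [smul_mul_smul_comm, map_sum, map_smul, smul_eq_mul, dotProduct, mulVec, M,
          Matrix.of_apply, star_trivial, Finset.mul_sum]
        exact Finset.sum_congr rfl fun _ _ => Finset.sum_congr rfl fun _ _ => by ring
      exact hquad ▸ hL c
  obtain ⟨k, v, hv⟩ := Matrix.posSemidef_iff_eq_sum_vecMulVec.mp hM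
  refine ⟨k, fun a i => v i a, fun a b => ?_⟩
  have := congrFun (congrFun hv a) b
  simpa [M, Matrix.sum_apply, vecMulVec_apply, dotProduct] using this

lemma exists_moment_vectors {σ I J K : Type*} [Fintype I] [Fintype J] [Fintype K]
    (L : MvPolynomial σ ℝ →ₗ[ℝ] ℝ) (hL1 : L 1 = 1)
    (hLsq : ∀ p : MvPolynomial σ ℝ, 2 * p.totalDegree ≤ 6 → 0 ≤ L (p ^ 2))
    (hLbool : ∀ (v : σ) (p : MvPolynomial σ ℝ), p.totalDegree ≤ 4 → L (X v ^ 2 * p) = L p)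
    (x : I → σ) (y : J → σ) (z : K → σ) :
    ∃ (k : ℕ) (u : I → Fin k → ℝ) (v : J × K → Fin k → ℝ),
      (∀ i, u i ⬝ᵥ u i ≤ 1) ∧ (∀ jk, v jk ⬝ᵥ v jk ≤ 1) ∧
      ∀ i j k, L (X (x i) * X (y j) * X (z k)) = u i ⬝ᵥ v (j, k) := by
  set m : I ⊕ J × K → MvPolynomial σ ℝ :=
    Sum.elim (fun i => X (x i)) (fun jk => X (y jk.1) * X (z jk.2))
  have hdeg : ∀ a, (m a).totalDegree ≤ 2 := by
    rintro (i | jk)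
    · simp [m, totalDegree_X]
    · exact (totalDegree_mul _ _).trans (by simp [totalDegree_X])
  obtain ⟨k, g, hg⟩ := exists_dotProduct_eq_of_sq_nonneg L m fun c => hLsq _ <| by
    have : (∑ a, c a • m a).totalDegree ≤ 2 := (totalDegree_finsetSum _ _).trans <|
      Finset.sup_le fun a _ => (totalDegree_smul_le _ _).trans (hdeg a)
    omega
  have hunit : ∀ a, g a ⬝ᵥ g a = 1 := by
    rintro (i | ⟨j, k⟩) <;> rw [← hg]
    · show L (X (x i) * X (x i)) = 1
      rw [← mul_one (X _ * X _), ← sq, hLbool _ _ (by simp), hL1]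
    · calc L (m (.inr (j, k)) * m (.inr (j, k))) = L (X (y j) ^ 2 * (X (z k) ^ 2 * 1)) := by
            simp only [m, Sum.elim_inr]; ring_nf
        _ = 1 := by
            rw [hLbool _ _ (by simp [totalDegree_X_pow]), hLbool _ _ (by simp), hL1]
  refine ⟨k, fun i => g (.inl i), fun jk => g (.inr jk), fun i => (hunit _).le,
    fun jk => (hunit _).le, fun i j k => ?_⟩
  rw [← hg, mul_assoc]
  rfl

/-- **Integrality gap of the degree-6 SoS relaxation of decoupled cubic maximization over
the hypercube is `O(√n)`.** A degree-6 pseudo-expectation over `{±1}^{3n}` in the variables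
`x₁,…,xₙ,y₁,…,yₙ,z₁,…,zₙ` (indexed by `Fin 3 × Fin n`) assigns the decoupled cubic
objective a value of at most `C·√n` times its true maximum over the hypercube. -/
theorem stmt_5 :
    ∃ C : ℝ, 0 < C ∧ ∀ (n : ℕ), 1 ≤ n → ∀ (T : Fin n → Fin n → Fin n → ℝ)
      (L : MvPolynomial (Fin 3 × Fin n) ℝ →ₗ[ℝ] ℝ),
      L 1 = 1 →
      (∀ p : MvPolynomial (Fin 3 × Fin n) ℝ, 2 * p.totalDegree ≤ 6 → 0 ≤ L (p ^ 2)) →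
      (∀ (v : Fin 3 × Fin n) (p : MvPolynomial (Fin 3 × Fin n) ℝ),
        p.totalDegree ≤ 4 → L ((X v) ^ 2 * p) = L p) →
      L (∑ i, ∑ j, ∑ k, MvPolynomial.C (T i j k) * X (0, i) * X (1, j) * X (2, k)) ≤
        C * Real.sqrt n *
          ⨆ x : Fin n → Bool, ⨆ y : Fin n → Bool, ⨆ z : Fin n → Bool,
            ∑ i, ∑ j, ∑ k, T i j k * (if x i then (1 : ℝ) else -1) *
              (if y j then (1 : ℝ) else -1) * (if z k then (1 : ℝ) else -1) := by
  refine ⟨729, by norm_num, fun n _ T L hL1 hLsq hLbool => ?_⟩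
  obtain ⟨k, u, v, hu, hv, huv⟩ := exists_moment_vectors L hL1 hLsq hLbool
    (fun i => (0, i)) (fun j => (1, j)) (fun k => (2, k))
  set F : (Fin n → Bool) → (Fin n → Bool) → (Fin n → Bool) → ℝ := fun x y z =>
    ∑ i, ∑ j, ∑ k, T i j k * boolSign (x i) * boolSign (y j) * boolSign (z k)
  have hF : ∀ x y z, F x y z ≤ ⨆ x, ⨆ y, ⨆ z, F x y z := fun x y z =>
    (le_ciSup (Finite.bddAbove_range _) z).trans <| (le_ciSup (Finite.bddAbove_range _) y).trans <|
      le_ciSup (Finite.bddAbove_range (fun x => ⨆ y, ⨆ z, F x y z)) x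
  have hobj : L (∑ i, ∑ j, ∑ k, MvPolynomial.C (T i j k) * X (0, i) * X (1, j) * X (2, k)) =
      ∑ i, ∑ jk : Fin n × Fin n, T i jk.1 jk.2 * (u i ⬝ᵥ v jk) := by
    simp only [map_sum, Fintype.sum_prod_type]
    refine Finset.sum_congr rfl fun i _ => Finset.sum_congr rfl fun j _ =>
      Finset.sum_congr rfl fun k _ => ?_
    rw [← huv, ← smul_eq_mul (T i j k), ← map_smul, smul_eq_C_mul]
    ring_nf
  calc _ = ∑ i, ∑ jk : Fin n × Fin n, T i jk.1 jk.2 * (u i ⬝ᵥ v jk) := hobj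
    _ ≤ 27 * (27 * Real.sqrt (Fintype.card (Fin n)) * ⨆ x, ⨆ y, ⨆ z, F x y z) :=
      grothendieck (decoupled_le T hF) u v hu hv
    _ = 729 * Real.sqrt n * ⨆ x, ⨆ y, ⨆ z, F x y z := by rw [Fintype.card_fin]; ring
end

section
/- Let n, t ≥ 1, let p be a real polynomial in x₁,…,xₙ with deg(p) ≤ t, and let L : ℝ[x₁,…,xₙ] → ℝ be a linear functional with L(1) = 1 and L(q²) ≥ 0 for every polynomial q with 2·deg(q) ≤ 3t. Then there exists a polynomial r that is a finite sum of squares of polynomials each of degree ≤ t, such that L(r) > 0 and |L(r·p)| ≥ (1/3) · L(r) · √(L(p²)). -/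
/-!
Write `a = L p` and `s = √(L(p²))`. If `|a| ≥ s/3`, the trivial reweighting `r = 1` works.
Otherwise reweight by `r = (c + p)²` with `c = ±s`: then `L r = 2s² + 2ca > 0`, and
`L(r·p) = s²a + L(p³) + 2cs²`, so choosing the sign of `c` to agree with that of `s²a + L(p³)`
gives `|L(r·p)| ≥ 2s³ ≥ (1/3) · L r · s`.
-/

open MvPolynomial

lemma exists_shift_of_abs_lt_third {s a : ℝ} (hs : 0 < s) (ha : |a| < s / 3) (b : ℝ) :
    ∃ c : ℝ, 0 < c ^ 2 + 2 * c * a + s ^ 2 ∧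
      1 / 3 * (c ^ 2 + 2 * c * a + s ^ 2) * s ≤ |c ^ 2 * a + 2 * c * s ^ 2 + b| := by
  obtain ⟨ha₁, ha₂⟩ := abs_lt.mp ha
  rcases le_or_gt 0 (s ^ 2 * a + b) with hb | hb
  · refine ⟨s, by nlinarith, ?_⟩
    rw [abs_of_nonneg (by nlinarith)]
    nlinarith
  · refine ⟨-s, by nlinarith, ?_⟩
    rw [abs_of_neg (by nlinarith)]
    nlinarith

section LinearFunctional

variable {A : Type*} [CommRing A] [Algebra ℝ A] (L : A →ₗ[ℝ] ℝ) (hL1 : L 1 = 1) (c : ℝ) (p : A)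

include hL1 in
lemma map_algebraMap_add_sq :
    L ((algebraMap ℝ A c + p) ^ 2) = c ^ 2 + 2 * c * L p + L (p ^ 2) := by
  have : (algebraMap ℝ A c + p) ^ 2 = c ^ 2 • (1 : A) + (2 * c) • p + p ^ 2 := by
    simp only [Algebra.smul_def, map_pow, map_mul, map_ofNat]
    ring
  rw [this, map_add, map_add, map_smul, map_smul, hL1, smul_eq_mul, smul_eq_mul, mul_one]

lemma map_algebraMap_add_sq_mul :
    L ((algebraMap ℝ A c + p) ^ 2 * p) = c ^ 2 * L p + 2 * c * L (p ^ 2) + L (p ^ 3) := by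
  have : (algebraMap ℝ A c + p) ^ 2 * p = c ^ 2 • p + (2 * c) • p ^ 2 + p ^ 3 := by
    simp only [Algebra.smul_def, map_pow, map_mul, map_ofNat]
    ring
  rw [this, map_add, map_add, map_smul, map_smul, smul_eq_mul, smul_eq_mul]

end LinearFunctional

lemma exists_sum_sq_eq_sq {n t : ℕ} {q : MvPolynomial (Fin n) ℝ} (hq : q.totalDegree ≤ t) :
    ∃ (m : ℕ) (g : Fin m → MvPolynomial (Fin n) ℝ),
      (∀ i, (g i).totalDegree ≤ t) ∧ q ^ 2 = ∑ i, (g i) ^ 2 :=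
  ⟨1, fun _ => q, fun _ => hq, by simp⟩

theorem stmt_6_general (n t : ℕ)
    (p : MvPolynomial (Fin n) ℝ) (hp : p.totalDegree ≤ t)
    (L : MvPolynomial (Fin n) ℝ →ₗ[ℝ] ℝ) (hL1 : L 1 = 1) :
    ∃ r : MvPolynomial (Fin n) ℝ,
      (∃ (m : ℕ) (g : Fin m → MvPolynomial (Fin n) ℝ),
        (∀ i, (g i).totalDegree ≤ t) ∧ r = ∑ i, (g i) ^ 2) ∧
      0 < L r ∧
      (1 / 3) * L r * Real.sqrt (L (p ^ 2)) ≤ |L (r * p)| := by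
  by_cases hlarge : 1 / 3 * Real.sqrt (L (p ^ 2)) ≤ |L p|
  · refine ⟨1 ^ 2, exists_sum_sq_eq_sq (by simp), by simp [hL1], by simpa [hL1] using hlarge⟩
  set s := Real.sqrt (L (p ^ 2))
  have hs : 0 < s := by linarith [abs_nonneg (L p)]
  have hs2 : s ^ 2 = L (p ^ 2) := Real.sq_sqrt (Real.sqrt_pos.mp hs).le
  obtain ⟨c, hpos, hbound⟩ :=
    exists_shift_of_abs_lt_third hs (by linarith : |L p| < s / 3) (L (p ^ 3))
  have hdeg : (C c + p).totalDegree ≤ t :=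
    (totalDegree_add _ _).trans (max_le (by simp [totalDegree_C]) hp)
  refine ⟨(C c + p) ^ 2, exists_sum_sq_eq_sq hdeg, ?_, ?_⟩
  · rwa [← algebraMap_eq, map_algebraMap_add_sq L hL1, ← hs2]
  · rwa [← algebraMap_eq, map_algebraMap_add_sq L hL1, map_algebraMap_add_sq_mul, ← hs2]

/-- **Scalar-fixing reweighting lemma.** Given a degree-`3t` pseudo-expectation `L`
(a linear functional with `L 1 = 1` and `L(q²) ≥ 0` whenever `2·deg q ≤ 3t`) and a
polynomial `p` of degree at most `t`, there is a sum `r` of squares of polynomials of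
degree at most `t` with `L r > 0` and `|L(r·p)| ≥ (1/3) · L r · √(L(p²))`. -/
theorem stmt_6 (n t : ℕ) (hn : 1 ≤ n) (ht : 1 ≤ t)
    (p : MvPolynomial (Fin n) ℝ) (hp : p.totalDegree ≤ t)
    (L : MvPolynomial (Fin n) ℝ →ₗ[ℝ] ℝ) (hL1 : L 1 = 1)
    (hLsq : ∀ q : MvPolynomial (Fin n) ℝ, 2 * q.totalDegree ≤ 3 * t → 0 ≤ L (q ^ 2)) :
    ∃ r : MvPolynomial (Fin n) ℝ,
      (∃ (m : ℕ) (g : Fin m → MvPolynomial (Fin n) ℝ),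
        (∀ i, (g i).totalDegree ≤ t) ∧ r = ∑ i, (g i) ^ 2) ∧
      0 < L r ∧
      (1 / 3) * L r * Real.sqrt (L (p ^ 2)) ≤ |L (r * p)| :=
  stmt_6_general n t p hp L hL1
end

section
/- Let n, t, k ≥ 1, let p be a real polynomial in x₁,…,xₙ with deg(p) ≤ t, and let L : ℝ[x₁,…,xₙ] → ℝ be a linear functional with L(1) = 1 and L(q²) ≥ 0 for every polynomial q with 2·deg(q) ≤ (2k+2)·t. Then there exists a polynomial r that is a finite sum of squares of polynomials each of degree ≤ k·t, such that L(r) > 0 and |L(r·p)| ≥ (1/3) · L(r) · (L(p^{2k}))^{1/(2k)}. -/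
open MvPolynomial

private lemma cs_aux {n D : ℕ} (L : MvPolynomial (Fin n) ℝ →ₗ[ℝ] ℝ)
    (hLsq : ∀ q : MvPolynomial (Fin n) ℝ, 2 * q.totalDegree ≤ D → 0 ≤ L (q ^ 2))
    (f g : MvPolynomial (Fin n) ℝ) (hf : 2 * f.totalDegree ≤ D) (hg : 2 * g.totalDegree ≤ D) :
    L (f * g) ^ 2 ≤ L (f ^ 2) * L (g ^ 2) := by
  have hLC : ∀ (c : ℝ) (y : MvPolynomial (Fin n) ℝ), L (C c * y) = c * L y := fun c y => by
    rw [← smul_eq_C_mul, map_smul, smul_eq_mul]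
  have key : ∀ x : ℝ, 0 ≤ L (g ^ 2) * (x * x) + (2 * L (f * g)) * x + L (f ^ 2) := by
    intro x
    have hdeg : 2 * (C x * g + f).totalDegree ≤ D := by
      have h1 : (C x * g + f).totalDegree ≤ max g.totalDegree f.totalDegree := by
        refine le_trans (totalDegree_add _ _) (max_le_max ?_ le_rfl)
        calc (C x * g).totalDegree ≤ (C x).totalDegree + g.totalDegree := totalDegree_mul _ _
        _ ≤ g.totalDegree := by simp [totalDegree_C]
      rcases max_cases g.totalDegree f.totalDegree with ⟨he, _⟩ | ⟨he, _⟩ <;> rw [he] at h1 <;> omega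
    have h := hLsq _ hdeg
    have hexp : (C x * g + f) ^ 2
        = C x * (C x * g ^ 2) + C x * (f * g) + C x * (f * g) + f ^ 2 := by ring
    rw [hexp, map_add, map_add, map_add, hLC, hLC, hLC] at h
    nlinarith [h]
  have hd := discrim_le_zero key
  rw [discrim] at hd
  nlinarith [hd]

private lemma logconvex_pow (a : ℕ → ℝ) (m : ℕ) (ha0 : a 0 = 1)
    (hnn : ∀ i, i ≤ m + 1 → 0 ≤ a i)
    (hcs : ∀ i, 1 ≤ i → i ≤ m → a i ^ 2 ≤ a (i - 1) * a (i + 1)) :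
    ∀ i, i ≤ m → a i ^ (i + 1) ≤ a (i + 1) ^ i := by
  intro i
  induction i with
  | zero => intro _; simp [ha0]
  | succ i ih =>
    intro h
    have h1 := ih (by omega)
    have h2 := hcs (i + 1) (by omega) h
    simp only [Nat.add_sub_cancel] at h2
    rcases (hnn (i + 1) (by omega)).lt_or_eq with hpos | hzero
    · have hnn2 : 0 ≤ a (i + 2) := hnn (i + 2) (by omega)
      have step : (a (i + 1) ^ 2) ^ (i + 1) ≤ (a i * a (i + 2)) ^ (i + 1) :=
        pow_le_pow_left₀ (sq_nonneg _) h2 (i + 1)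
      rw [mul_pow] at step
      have step2 : a i ^ (i + 1) * a (i + 2) ^ (i + 1) ≤ a (i + 1) ^ i * a (i + 2) ^ (i + 1) :=
        mul_le_mul_of_nonneg_right h1 (pow_nonneg hnn2 _)
      have key : a (i + 1) ^ (i + 2) * a (i + 1) ^ i ≤ a (i + 2) ^ (i + 1) * a (i + 1) ^ i := by
        calc a (i + 1) ^ (i + 2) * a (i + 1) ^ i = (a (i + 1) ^ 2) ^ (i + 1) := by
              rw [← pow_add, ← pow_mul]; congr 1; ring
        _ ≤ a (i + 1) ^ i * a (i + 2) ^ (i + 1) := le_trans step step2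
        _ = a (i + 2) ^ (i + 1) * a (i + 1) ^ i := by ring
      exact le_of_mul_le_mul_right key (pow_pos hpos i)
    · rw [← hzero, zero_pow (by omega)]
      exact pow_nonneg (hnn (i + 2) (by omega)) _

set_option maxHeartbeats 1000000 in
/-- **High-moment scalar-fixing reweighting lemma.** Given a degree-`(2k+2)t`
pseudo-expectation `L` and a polynomial `p` of degree at most `t`, there is a sum `r`
of squares of polynomials of degree at most `k·t` with `L r > 0` and
`|L(r·p)| ≥ (1/3) · L r · (L(p^{2k}))^{1/(2k)}`. -/
theorem stmt_8 (n t k : ℕ) (hn : 1 ≤ n) (ht : 1 ≤ t) (hk : 1 ≤ k)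
    (p : MvPolynomial (Fin n) ℝ) (hp : p.totalDegree ≤ t)
    (L : MvPolynomial (Fin n) ℝ →ₗ[ℝ] ℝ) (hL1 : L 1 = 1)
    (hLsq : ∀ q : MvPolynomial (Fin n) ℝ,
      2 * q.totalDegree ≤ (2 * k + 2) * t → 0 ≤ L (q ^ 2)) :
    ∃ r : MvPolynomial (Fin n) ℝ,
      (∃ (m : ℕ) (g : Fin m → MvPolynomial (Fin n) ℝ),
        (∀ i, (g i).totalDegree ≤ k * t) ∧ r = ∑ i, (g i) ^ 2) ∧
      0 < L r ∧
      (1 / 3) * L r * (L (p ^ (2 * k))) ^ ((1 : ℝ) / (2 * k)) ≤ |L (r * p)| := by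
  obtain ⟨j, rfl⟩ : ∃ j, k = j + 1 := ⟨k - 1, by omega⟩
  have hLC : ∀ (c : ℝ) (y : MvPolynomial (Fin n) ℝ), L (C c * y) = c * L y := fun c y => by
    rw [← smul_eq_C_mul, map_smul, smul_eq_mul]
  have hdegpow : ∀ i : ℕ, (p ^ i).totalDegree ≤ i * t := fun i =>
    le_trans (totalDegree_pow _ _) (Nat.mul_le_mul_left i hp)
  have hq : ∀ i : ℕ, i ≤ j + 2 → 2 * (p ^ i).totalDegree ≤ (2 * (j + 1) + 2) * t := by
    intro i hi
    have h1 := hdegpow i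
    have h2 : (2 * i) * t ≤ (2 * (j + 1) + 2) * t := Nat.mul_le_mul_right t (by omega)
    have h3 : 2 * (i * t) = (2 * i) * t := by ring
    omega
  have hnn : ∀ i : ℕ, i ≤ j + 2 → 0 ≤ L (p ^ (2 * i)) := by
    intro i hi
    rw [show 2 * i = i * 2 from mul_comm _ _, pow_mul]
    exact hLsq _ (hq i hi)
  have hCS : ∀ b c : ℕ, b ≤ j + 2 → c ≤ j + 2 →
      L (p ^ (b + c)) ^ 2 ≤ L (p ^ (2 * b)) * L (p ^ (2 * c)) := by
    intro b c hb hc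
    have h := cs_aux L hLsq (p ^ b) (p ^ c) (hq b hb) (hq c hc)
    rwa [← pow_add, ← pow_mul, ← pow_mul, mul_comm b 2, mul_comm c 2] at h
  set M := L (p ^ (2 * (j + 1))) with hMdef
  have hM' : L (p ^ (2 * j + 2)) = M := by rw [hMdef, show 2 * j + 2 = 2 * (j + 1) from by ring]
  rcases (hnn (j + 1) (by omega)).eq_or_lt with hM0 | hMpos
  · -- M = 0
    refine ⟨1, ⟨1, fun _ => 1, fun i => by simp, by simp⟩, by simp [hL1], ?_⟩
    have hMz : M = 0 := hMdef.trans hM0.symm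
    rw [hMz, Real.zero_rpow (by positivity), one_mul]
    simp [hL1]
  · -- M > 0
    set σ := M ^ ((1 : ℝ) / (2 * ((j + 1 : ℕ) : ℝ))) with hσdef
    have hσpos : 0 < σ := Real.rpow_pos_of_pos hMpos _
    have hσM : σ ^ (2 * (j + 1)) = M := by
      rw [hσdef, ← Real.rpow_natCast (M ^ ((1 : ℝ) / (2 * ((j + 1 : ℕ) : ℝ)))) (2 * (j + 1)),
        ← Real.rpow_mul hMpos.le]
      push_cast
      rw [show (1 : ℝ) / (2 * ((j : ℝ) + 1)) * (2 * ((j : ℝ) + 1)) = 1 from by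
        field_simp, Real.rpow_one]
    set aj := L (p ^ (2 * j)) with hajdef
    set A := L (p ^ (2 * j + 1)) with hAdef
    set B := L (p ^ (2 * j + 3)) with hBdef
    have hajnn : 0 ≤ aj := hnn j (by omega)
    have haj2nn : 0 ≤ L (p ^ (2 * (j + 2))) := hnn (j + 2) (by omega)
    have hajpos : 0 < aj := by
      have h := hCS j (j + 2) (by omega) (by omega)
      rw [show j + (j + 2) = 2 * (j + 1) from by ring] at h
      rcases hajnn.lt_or_eq with h' | h'
      · exact h'
      · exfalso; nlinarith [hMpos]
    -- chord bound: aj ≤ σ ^ (2*j)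
    set u : ℝ := σ ^ (2 * j) with hudef
    have hunn : 0 ≤ u := pow_nonneg hσpos.le _
    have hMu : M = u * σ ^ 2 := by
      rw [hudef, ← pow_add, ← hσM]; congr 1 <;> omega
    have haju : aj ≤ u := by
      have hchord := logconvex_pow (fun i => L (p ^ (2 * i))) j (by simp [hL1])
        (fun i hi => hnn i (by omega))
        (fun i hi1 hij => by
          have h := hCS (i - 1) (i + 1) (by omega) (by omega)
          rw [show i - 1 + (i + 1) = 2 * i from by omega] at h
          simpa using h) j le_rfl
      -- hchord : L (p^(2*j)) ^ (j+1) ≤ L (p^(2*(j+1))) ^ j = M ^ j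
      have hMj : M ^ j = u ^ (j + 1) := by
        rw [hudef, ← hσM, ← pow_mul, ← pow_mul]; congr 1; ring
      have : aj ^ (j + 1) ≤ u ^ (j + 1) := by
        rw [← hMj]; exact hchord
      exact le_of_pow_le_pow_left₀ (by omega) hunn this
    by_cases h1 : aj * σ / 3 ≤ |A|
    · refine ⟨p ^ (2 * j), ⟨1, fun _ => p ^ j, fun i => le_trans (hdegpow j)
        (Nat.mul_le_mul_right t (by omega)), ?_⟩, hajpos, ?_⟩
      · rw [Fin.sum_univ_one]; ring
      · rw [← pow_succ, ← hAdef, ← hajdef]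
        linarith
    · by_cases h2 : M * σ / 3 ≤ |B|
      · refine ⟨p ^ (2 * (j + 1)), ⟨1, fun _ => p ^ (j + 1), fun i => hdegpow (j + 1), ?_⟩,
          hMpos, ?_⟩
        · rw [Fin.sum_univ_one]; ring
        · rw [← pow_succ, show 2 * (j + 1) + 1 = 2 * j + 3 from by ring, ← hBdef, ← hMdef]
          linarith
      · push_neg at h1 h2
        refine ⟨(p ^ (j + 1) + C σ * p ^ j) ^ 2, ⟨1, fun _ => p ^ (j + 1) + C σ * p ^ j,
          fun i => ?_, by rw [Fin.sum_univ_one]⟩, ?_, ?_⟩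
        · refine le_trans (totalDegree_add _ _) (max_le (hdegpow (j + 1)) ?_)
          calc (C σ * p ^ j).totalDegree ≤ (C σ).totalDegree + (p ^ j).totalDegree :=
                totalDegree_mul _ _
          _ ≤ j * t := by simpa [totalDegree_C] using hdegpow j
          _ ≤ (j + 1) * t := Nat.mul_le_mul_right t (by omega)
        · have hLr : L ((p ^ (j + 1) + C σ * p ^ j) ^ 2) = M + σ * A + σ * A + σ * (σ * aj) := by
            rw [show (p ^ (j + 1) + C σ * p ^ j) ^ 2 = p ^ (2 * j + 2) + C σ * p ^ (2 * j + 1)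
              + C σ * p ^ (2 * j + 1) + C σ * (C σ * p ^ (2 * j)) from by ring]
            simp only [map_add, hLC, hM', ← hAdef, ← hajdef]
          rw [hLr]
          nlinarith [hσpos, hajnn, haju, hunn, hMu, h1, neg_abs_le A,
            mul_lt_mul_of_pos_left h1 hσpos, mul_le_mul_of_nonneg_left haju (sq_nonneg σ)]
        · have hLr : L ((p ^ (j + 1) + C σ * p ^ j) ^ 2) = M + σ * A + σ * A + σ * (σ * aj) := by
            rw [show (p ^ (j + 1) + C σ * p ^ j) ^ 2 = p ^ (2 * j + 2) + C σ * p ^ (2 * j + 1)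
              + C σ * p ^ (2 * j + 1) + C σ * (C σ * p ^ (2 * j)) from by ring]
            simp only [map_add, hLC, hM', ← hAdef, ← hajdef]
          have hLrp : L ((p ^ (j + 1) + C σ * p ^ j) ^ 2 * p)
              = B + σ * M + σ * M + σ * (σ * A) := by
            rw [show (p ^ (j + 1) + C σ * p ^ j) ^ 2 * p = p ^ (2 * j + 3) + C σ * p ^ (2 * j + 2)
              + C σ * p ^ (2 * j + 2) + C σ * (C σ * p ^ (2 * j + 1)) from by ring]
            simp only [map_add, hLC, hM', ← hAdef, ← hBdef]
          rw [hLr, hLrp]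
          have hrp_lb : 4 / 3 * (σ * M) ≤ B + σ * M + σ * M + σ * (σ * A) := by
            nlinarith [neg_abs_le A, neg_abs_le B, h1, h2, haju, hσpos, hMu, hajnn, hunn,
              mul_lt_mul_of_pos_left h1 (mul_pos hσpos hσpos),
              mul_le_mul_of_nonneg_left haju (mul_pos (mul_pos hσpos hσpos) hσpos).le]
          have hub : M + σ * A + σ * A + σ * (σ * aj) ≤ 8 / 3 * M := by
            nlinarith [le_abs_self A, h1, haju, hσpos, hMu, hajnn, hunn,
              mul_lt_mul_of_pos_left h1 hσpos,
              mul_le_mul_of_nonneg_left haju (sq_nonneg σ)]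
          refine le_trans ?_ (le_abs_self _)
          nlinarith [hrp_lb, hub, hMpos, hσpos, mul_pos hσpos hMpos,
            mul_le_mul_of_nonneg_right hub hσpos.le]
end

section
/- There exists a constant c > 0 with the following property. For every m ≥ 1, every probability distribution μ on {−1,1}^m that is 4-wise independent, and every nonzero w ∈ ℝ^m, one has Pr_{b∼μ}[|⟨b,w⟩| ≥ (1/2)·‖w‖₂] ≥ c. -/
open Finset

namespace PZ
variable {m : ℕ}

noncomputable def e (b : Fin m → Bool) (i : Fin m) : ℝ := if b i then 1 else -1

lemma e_sq (b : Fin m → Bool) (i : Fin m) : e b i * e b i = 1 := by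
  unfold e; cases b i <;> norm_num

variable (μ : (Fin m → Bool) → ℝ)

lemma card4 (i j k l : Fin m) : ({i, j, k, l} : Finset (Fin m)).card ≤ 4 := by
  have h2 : ({k, l} : Finset (Fin m)).card ≤ 2 :=
    (Finset.card_insert_le _ _).trans (by simp)
  have h3 : ({j, k, l} : Finset (Fin m)).card ≤ 3 := by
    have := Finset.card_insert_le j ({k, l} : Finset (Fin m)); omega
  have := Finset.card_insert_le i ({j, k, l} : Finset (Fin m)); omega

lemma pair (hind : ∀ s : Finset (Fin m), s.Nonempty → s.card ≤ 4 →
      ∑ b, μ b * ∏ i ∈ s, e b i = 0) {i j : Fin m} (h : i ≠ j) :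
    ∑ b, μ b * (e b i * e b j) = 0 := by
  have := hind {i, j} ⟨i, by simp⟩ ((Finset.card_insert_le _ _).trans (by simp))
  simpa [Finset.prod_pair h] using this

lemma quad (hind : ∀ s : Finset (Fin m), s.Nonempty → s.card ≤ 4 →
      ∑ b, μ b * ∏ i ∈ s, e b i = 0) {i j k l : Fin m}
    (hij : i ≠ j) (hik : i ≠ k) (hil : i ≠ l) (hjk : j ≠ k) (hjl : j ≠ l) (hkl : k ≠ l) :
    ∑ b, μ b * (e b i * e b j * e b k * e b l) = 0 := by
  have h := hind {i, j, k, l} ⟨i, by simp⟩ (card4 i j k l)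
  rw [← h]
  apply Finset.sum_congr rfl
  intro b _
  congr 1
  rw [Finset.prod_insert (by simp [hij, hik, hil]), Finset.prod_insert (by simp [hjk, hjl]),
    Finset.prod_pair hkl]
  ring

lemma tuple_le (hsum : ∑ b, μ b = 1)
    (hind : ∀ s : Finset (Fin m), s.Nonempty → s.card ≤ 4 →
      ∑ b, μ b * ∏ i ∈ s, e b i = 0) (w : Fin m → ℝ) (i j k l : Fin m) :
    (∑ b, μ b * (e b i * e b j * e b k * e b l)) * (w i * w j * w k * w l) ≤
      ((if i = j then (1:ℝ) else 0) * (if k = l then (1:ℝ) else 0) +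
       (if i = k then (1:ℝ) else 0) * (if j = l then (1:ℝ) else 0) +
       (if i = l then (1:ℝ) else 0) * (if j = k then (1:ℝ) else 0)) *
        (w i * w j * w k * w l) := by
  by_cases hij : i = j
  · subst hij
    by_cases hkl : k = l
    · subst hkl
      have hM : ∑ b, μ b * (e b i * e b i * e b k * e b k) = 1 := by
        rw [← hsum]
        exact Finset.sum_congr rfl fun b _ => by
          linear_combination μ b * (e b k * e b k) * e_sq b i + μ b * e_sq b k
      rw [hM]
      by_cases hik : i = k <;> simp [hik] <;> nlinarith [sq_nonneg (w i * w k), sq_nonneg (w k * w k)]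
    · have hM : ∑ b, μ b * (e b i * e b i * e b k * e b l) = 0 := by
        rw [← pair μ hind hkl]
        exact Finset.sum_congr rfl fun b _ => by
          linear_combination μ b * (e b k * e b l) * e_sq b i
      rw [hM]
      rcases eq_or_ne i k with h1 | h1 <;> rcases eq_or_ne i l with h2 | h2 <;>
        simp_all
  · by_cases hik : i = k
    · subst hik
      by_cases hjl : j = l
      · subst hjl
        have hM : ∑ b, μ b * (e b i * e b j * e b i * e b j) = 1 := by
          rw [← hsum]
          exact Finset.sum_congr rfl fun b _ => by
            linear_combination μ b * (e b j * e b j) * e_sq b i + μ b * e_sq b j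
        rw [hM]
        simp [hij, Ne.symm hij]
      · have hM : ∑ b, μ b * (e b i * e b j * e b i * e b l) = 0 := by
          rw [← pair μ hind hjl]
          exact Finset.sum_congr rfl fun b _ => by
            linear_combination μ b * (e b j * e b l) * e_sq b i
        rw [hM]
        simp [hij, hjl, Ne.symm hij]
    · by_cases hil : i = l
      · subst hil
        by_cases hjk : j = k
        · subst hjk
          have hM : ∑ b, μ b * (e b i * e b j * e b j * e b i) = 1 := by
            rw [← hsum]
            exact Finset.sum_congr rfl fun b _ => by
              linear_combination μ b * (e b j * e b j) * e_sq b i + μ b * e_sq b j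
          rw [hM]
          simp [hij, Ne.symm hij]
        · have hM : ∑ b, μ b * (e b i * e b j * e b k * e b i) = 0 := by
            rw [← pair μ hind hjk]
            exact Finset.sum_congr rfl fun b _ => by
              linear_combination μ b * (e b j * e b k) * e_sq b i
          rw [hM]
          simp [hij, hik, hjk, Ne.symm hik]
      · by_cases hjk : j = k
        · subst hjk
          by_cases hjl : j = l
          · subst hjl
            have hM : ∑ b, μ b * (e b i * e b j * e b j * e b j) = 0 := by
              rw [← pair μ hind hij]
              exact Finset.sum_congr rfl fun b _ => by
                linear_combination μ b * (e b i * e b j) * e_sq b j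
            rw [hM]
            simp [hij, Ne.symm hij]
          · have hM : ∑ b, μ b * (e b i * e b j * e b j * e b l) = 0 := by
              rw [← pair μ hind hil]
              exact Finset.sum_congr rfl fun b _ => by
                linear_combination μ b * (e b i * e b l) * e_sq b j
            rw [hM]
            simp [hij, hjl, hil]
        · by_cases hjl : j = l
          · subst hjl
            have hM : ∑ b, μ b * (e b i * e b j * e b k * e b j) = 0 := by
              rw [← pair μ hind hik]
              exact Finset.sum_congr rfl fun b _ => by
                linear_combination μ b * (e b i * e b k) * e_sq b j
            rw [hM]
            simp [hij, hik, Ne.symm hjk]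
          · by_cases hkl : k = l
            · subst hkl
              have hM : ∑ b, μ b * (e b i * e b j * e b k * e b k) = 0 := by
                rw [← pair μ hind hij]
                exact Finset.sum_congr rfl fun b _ => by
                  linear_combination μ b * (e b i * e b j) * e_sq b k
              rw [hM]
              simp [hij, hjk, hik]
            · rw [quad μ hind hij hik hil hjk hjl hkl]
              simp [hij, hik, hil, hjk, hjl, hkl]

lemma second (hsum : ∑ b, μ b = 1)
    (hind : ∀ s : Finset (Fin m), s.Nonempty → s.card ≤ 4 →
      ∑ b, μ b * ∏ i ∈ s, e b i = 0) (w : Fin m → ℝ) :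
    ∑ b, μ b * (∑ i, e b i * w i)^2 = ∑ i, w i ^ 2 := by
  have expand : ∀ b : Fin m → Bool, μ b * (∑ i, e b i * w i)^2
      = ∑ i, ∑ j, μ b * ((e b i * w i) * (e b j * w j)) := by
    intro b
    have h : (∑ i, e b i * w i)^2 = (∑ i, e b i * w i) * (∑ i, e b i * w i) := by ring
    rw [h, Finset.sum_mul_sum, Finset.mul_sum]
    exact Finset.sum_congr rfl fun i _ => Finset.mul_sum ..
  calc ∑ b, μ b * (∑ i, e b i * w i)^2
      = ∑ b : Fin m → Bool, ∑ i, ∑ j, μ b * ((e b i * w i) * (e b j * w j)) :=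
        Finset.sum_congr rfl fun b _ => expand b
    _ = ∑ i, ∑ j, ∑ b : Fin m → Bool, μ b * ((e b i * w i) * (e b j * w j)) := by
        rw [Finset.sum_comm]
        exact Finset.sum_congr rfl fun i _ => Finset.sum_comm
    _ = ∑ i, ∑ j, (∑ b : Fin m → Bool, μ b * (e b i * e b j)) * (w i * w j) := by
        refine Finset.sum_congr rfl fun i _ => Finset.sum_congr rfl fun j _ => ?_
        rw [Finset.sum_mul]
        exact Finset.sum_congr rfl fun b _ => by ring
    _ = ∑ i, w i ^ 2 := by
        refine Finset.sum_congr rfl fun i _ => ?_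
        rw [Finset.sum_eq_single i]
        · have h1 : ∑ b : Fin m → Bool, μ b * (e b i * e b i) = 1 := by
            simp_rw [e_sq, mul_one]; exact hsum
          rw [h1]; ring
        · intro j _ hji
          rw [pair μ hind (Ne.symm hji), zero_mul]
        · intro h; exact absurd (Finset.mem_univ i) h

lemma fourth (hsum : ∑ b, μ b = 1)
    (hind : ∀ s : Finset (Fin m), s.Nonempty → s.card ≤ 4 →
      ∑ b, μ b * ∏ i ∈ s, e b i = 0) (w : Fin m → ℝ)
    (tuple : ∀ i j k l : Fin m,
      (∑ b, μ b * (e b i * e b j * e b k * e b l)) * (w i * w j * w k * w l) ≤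
        ((if i = j then (1:ℝ) else 0) * (if k = l then (1:ℝ) else 0) +
         (if i = k then (1:ℝ) else 0) * (if j = l then (1:ℝ) else 0) +
         (if i = l then (1:ℝ) else 0) * (if j = k then (1:ℝ) else 0)) *
          (w i * w j * w k * w l)) :
    ∑ b, μ b * (∑ i, e b i * w i)^4 ≤ 3 * (∑ i, w i ^ 2)^2 := by
  have expand : ∀ b : Fin m → Bool, μ b * (∑ i, e b i * w i)^4
      = ∑ i, ∑ j, ∑ k, ∑ l,
          μ b * ((e b i * w i) * (e b j * w j) * (e b k * w k) * (e b l * w l)) := by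
    intro b
    have h : (∑ i, e b i * w i)^4 =
        (∑ i, e b i * w i)*(∑ i, e b i * w i)*(∑ i, e b i * w i)*(∑ i, e b i * w i) := by ring
    rw [h]
    simp only [Finset.sum_mul, Finset.mul_sum]
    refine Finset.sum_congr rfl fun i _ => Finset.sum_congr rfl fun j _ =>
      Finset.sum_congr rfl fun k _ => Finset.sum_congr rfl fun l _ => by ring
  have step1 : ∑ b, μ b * (∑ i, e b i * w i)^4
      = ∑ i, ∑ j, ∑ k, ∑ l,
          (∑ b, μ b * (e b i * e b j * e b k * e b l)) * (w i * w j * w k * w l) := by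
    calc ∑ b, μ b * (∑ i, e b i * w i)^4
        = ∑ b : Fin m → Bool, ∑ i, ∑ j, ∑ k, ∑ l,
            μ b * ((e b i * w i) * (e b j * w j) * (e b k * w k) * (e b l * w l)) :=
          Finset.sum_congr rfl fun b _ => expand b
      _ = ∑ i, ∑ j, ∑ k, ∑ l, ∑ b : Fin m → Bool,
            μ b * ((e b i * w i) * (e b j * w j) * (e b k * w k) * (e b l * w l)) := by
          rw [Finset.sum_comm]
          refine Finset.sum_congr rfl fun i _ => ?_
          rw [Finset.sum_comm]
          refine Finset.sum_congr rfl fun j _ => ?_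
          rw [Finset.sum_comm]
          refine Finset.sum_congr rfl fun k _ => ?_
          rw [Finset.sum_comm]
      _ = ∑ i, ∑ j, ∑ k, ∑ l,
            (∑ b, μ b * (e b i * e b j * e b k * e b l)) * (w i * w j * w k * w l) := by
          refine Finset.sum_congr rfl fun i _ => Finset.sum_congr rfl fun j _ =>
            Finset.sum_congr rfl fun k _ => Finset.sum_congr rfl fun l _ => ?_
          rw [Finset.sum_mul]
          exact Finset.sum_congr rfl fun b _ => by ring
  rw [step1]
  have step3 : ∑ i, ∑ j, ∑ k, ∑ l, ((if i = j then (1:ℝ) else 0) * (if k = l then (1:ℝ) else 0) +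
       (if i = k then (1:ℝ) else 0) * (if j = l then (1:ℝ) else 0) +
       (if i = l then (1:ℝ) else 0) * (if j = k then (1:ℝ) else 0)) *
        (w i * w j * w k * w l) = 3 * (∑ i, w i ^ 2)^2 := by
    have hS : (∑ i, w i ^ 2)^2 = ∑ i, ∑ j, w i ^2 * w j ^2 := by
      rw [sq, Finset.sum_mul_sum]
    have e1 : ∑ i, ∑ j, ∑ k, ∑ l, ((if i = j then (1:ℝ) else 0) * (if k = l then (1:ℝ) else 0))
        * (w i * w j * w k * w l) = ∑ i, ∑ j, w i ^2 * w j ^2 := by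
      refine Finset.sum_congr rfl fun i _ => ?_
      rw [Finset.sum_eq_single i]
      · refine Finset.sum_congr rfl fun k _ => ?_
        rw [Finset.sum_eq_single k]
        · simp; ring
        · intro l _ h; simp [Ne.symm h]
        · simp
      · intro j _ h; simp [Ne.symm h]
      · simp
    have e2 : ∑ i, ∑ j, ∑ k, ∑ l, ((if i = k then (1:ℝ) else 0) * (if j = l then (1:ℝ) else 0))
        * (w i * w j * w k * w l) = ∑ i, ∑ j, w i ^2 * w j ^2 := by
      refine Finset.sum_congr rfl fun i _ => Finset.sum_congr rfl fun j _ => ?_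
      rw [Finset.sum_eq_single i]
      · rw [Finset.sum_eq_single j]
        · simp; ring
        · intro l _ h; simp [Ne.symm h]
        · simp
      · intro k _ h; simp [Ne.symm h]
      · simp
    have e3 : ∑ i, ∑ j, ∑ k, ∑ l, ((if i = l then (1:ℝ) else 0) * (if j = k then (1:ℝ) else 0))
        * (w i * w j * w k * w l) = ∑ i, ∑ j, w i ^2 * w j ^2 := by
      refine Finset.sum_congr rfl fun i _ => Finset.sum_congr rfl fun j _ => ?_
      rw [Finset.sum_eq_single j]
      · rw [Finset.sum_eq_single i]
        · simp; ring
        · intro l _ h; simp [Ne.symm h]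
        · simp
      · intro k _ h; simp [Ne.symm h]
      · simp
    calc ∑ i, ∑ j, ∑ k, ∑ l, ((if i = j then (1:ℝ) else 0) * (if k = l then (1:ℝ) else 0) +
         (if i = k then (1:ℝ) else 0) * (if j = l then (1:ℝ) else 0) +
         (if i = l then (1:ℝ) else 0) * (if j = k then (1:ℝ) else 0)) *
          (w i * w j * w k * w l)
        = (∑ i, ∑ j, ∑ k, ∑ l, ((if i = j then (1:ℝ) else 0) * (if k = l then (1:ℝ) else 0))
            * (w i * w j * w k * w l))
          + (∑ i, ∑ j, ∑ k, ∑ l, ((if i = k then (1:ℝ) else 0) * (if j = l then (1:ℝ) else 0))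
            * (w i * w j * w k * w l))
          + (∑ i, ∑ j, ∑ k, ∑ l, ((if i = l then (1:ℝ) else 0) * (if j = k then (1:ℝ) else 0))
            * (w i * w j * w k * w l)) := by
          simp only [add_mul, Finset.sum_add_distrib]
      _ = 3 * (∑ i, w i ^ 2)^2 := by rw [e1, e2, e3, hS]; ring
  rw [← step3]
  refine Finset.sum_le_sum fun i _ => Finset.sum_le_sum fun j _ =>
    Finset.sum_le_sum fun k _ => Finset.sum_le_sum fun l _ => tuple i j k l

end PZ

open Classical in
/-- **Paley–Zygmund for 4-wise independent signs.** There is an absolute constant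
`c > 0` such that for every `m ≥ 1`, every 4-wise independent probability distribution
`μ` on `{±1}^m` (encoded as `Fin m → Bool`, with `b i` standing for the sign
`if b i then 1 else -1`), and every nonzero `w ∈ ℝ^m`,
`Pr_{b∼μ}[|⟨b,w⟩| ≥ ‖w‖₂/2] ≥ c`. -/
theorem stmt_10 :
    ∃ c : ℝ, 0 < c ∧ ∀ (m : ℕ), 1 ≤ m → ∀ μ : (Fin m → Bool) → ℝ,
      (∀ b, 0 ≤ μ b) → (∑ b, μ b = 1) →
      (∀ s : Finset (Fin m), s.Nonempty → s.card ≤ 4 →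
        ∑ b, μ b * ∏ i ∈ s, (if b i then (1 : ℝ) else -1) = 0) →
      ∀ w : Fin m → ℝ, w ≠ 0 →
        c ≤ ∑ b ∈ Finset.univ.filter (fun b : Fin m → Bool =>
              (1 / 2) * Real.sqrt (∑ i, w i ^ 2) ≤
                |∑ i, (if b i then (1 : ℝ) else -1) * w i|), μ b := by
  refine ⟨3/16, by norm_num, ?_⟩
  intro m _hm μ hμ hsum hind w hw
  have hind' : ∀ s : Finset (Fin m), s.Nonempty → s.card ≤ 4 →
      ∑ b, μ b * ∏ i ∈ s, PZ.e b i = 0 := hind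
  set S : ℝ := ∑ i, w i ^ 2 with hSdef
  have hS0 : 0 ≤ S := Finset.sum_nonneg fun i _ => sq_nonneg _
  have hSpos : 0 < S := by
    obtain ⟨i, hi⟩ := Function.ne_iff.mp hw
    have h1 : w i ^ 2 ≠ 0 := pow_ne_zero 2 hi
    exact Finset.sum_pos' (fun j _ => sq_nonneg _)
      ⟨i, Finset.mem_univ i, lt_of_le_of_ne (sq_nonneg _) (Ne.symm h1)⟩
  set X : (Fin m → Bool) → ℝ := fun b => ∑ i, PZ.e b i * w i with hXdef
  have E2 : ∑ b, μ b * X b ^ 2 = S := PZ.second μ hsum hind' w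
  have E4 : ∑ b, μ b * X b ^ 4 ≤ 3 * S ^ 2 :=
    PZ.fourth μ hsum hind' w (PZ.tuple_le μ hsum hind' w)
  set A : Finset (Fin m → Bool) := Finset.univ.filter (fun b : Fin m → Bool =>
      (1 / 2) * Real.sqrt (∑ i, w i ^ 2) ≤
        |∑ i, (if b i then (1 : ℝ) else -1) * w i|) with hAdef
  show 3/16 ≤ ∑ b ∈ A, μ b
  set P : ℝ := ∑ b ∈ A, μ b with hPdef
  have hPnn : 0 ≤ P := Finset.sum_nonneg fun b _ => hμ b
  -- tail bound on the complement
  have hsplit := Finset.sum_filter_add_sum_filter_not Finset.univ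
    (fun b : Fin m → Bool =>
      (1 / 2) * Real.sqrt (∑ i, w i ^ 2) ≤
        |∑ i, (if b i then (1 : ℝ) else -1) * w i|) (fun b => μ b * X b ^ 2)
  have hcompl_le : ∑ b ∈ Finset.univ.filter (fun b : Fin m → Bool =>
      ¬ ((1 / 2) * Real.sqrt (∑ i, w i ^ 2) ≤
        |∑ i, (if b i then (1 : ℝ) else -1) * w i|)), μ b * X b ^ 2 ≤ S / 4 := by
    have h1 : ∀ b ∈ Finset.univ.filter (fun b : Fin m → Bool =>
        ¬ ((1 / 2) * Real.sqrt (∑ i, w i ^ 2) ≤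
          |∑ i, (if b i then (1 : ℝ) else -1) * w i|)), μ b * X b ^ 2 ≤ μ b * (S / 4) := by
      intro b hb
      rw [Finset.mem_filter] at hb
      have h2 : |X b| < (1/2) * Real.sqrt S := lt_of_not_ge hb.2
      have h3 : X b ^ 2 ≤ S / 4 := by
        have h4 : X b ^ 2 = |X b| ^ 2 := (sq_abs _).symm
        have h5 : |X b| ^ 2 ≤ ((1/2) * Real.sqrt S) ^ 2 := by
          apply pow_le_pow_left₀ (abs_nonneg _) (le_of_lt h2)
        rw [mul_pow] at h5
        rw [Real.sq_sqrt hS0] at h5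
        nlinarith
      exact mul_le_mul_of_nonneg_left h3 (hμ b)
    calc ∑ b ∈ Finset.univ.filter (fun b : Fin m → Bool =>
          ¬ ((1 / 2) * Real.sqrt (∑ i, w i ^ 2) ≤
            |∑ i, (if b i then (1 : ℝ) else -1) * w i|)), μ b * X b ^ 2
        ≤ ∑ b ∈ Finset.univ.filter (fun b : Fin m → Bool =>
          ¬ ((1 / 2) * Real.sqrt (∑ i, w i ^ 2) ≤
            |∑ i, (if b i then (1 : ℝ) else -1) * w i|)), μ b * (S / 4) :=
          Finset.sum_le_sum h1
      _ = (∑ b ∈ Finset.univ.filter (fun b : Fin m → Bool =>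
          ¬ ((1 / 2) * Real.sqrt (∑ i, w i ^ 2) ≤
            |∑ i, (if b i then (1 : ℝ) else -1) * w i|)), μ b) * (S / 4) := by
          rw [Finset.sum_mul]
      _ ≤ 1 * (S / 4) := by
          apply mul_le_mul_of_nonneg_right _ (by linarith)
          rw [← hsum]
          apply Finset.sum_le_sum_of_subset_of_nonneg (Finset.filter_subset _ _)
          intro b _ _; exact hμ b
      _ = S / 4 := one_mul _
  have hA_lb : 3 * S / 4 ≤ ∑ b ∈ A, μ b * X b ^ 2 := by
    have := hsplit
    have hE2 : (∑ b ∈ A, μ b * X b ^ 2) +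
        ∑ b ∈ Finset.univ.filter (fun b : Fin m → Bool =>
          ¬ ((1 / 2) * Real.sqrt (∑ i, w i ^ 2) ≤
            |∑ i, (if b i then (1 : ℝ) else -1) * w i|)), μ b * X b ^ 2 = S := by
      rw [hAdef]; rw [this]; exact E2
    linarith
  -- Cauchy–Schwarz on A
  have hCS : (∑ b ∈ A, μ b * X b ^ 2) ^ 2 ≤ P * ∑ b ∈ A, μ b * X b ^ 4 := by
    have h := Finset.sum_mul_sq_le_sq_mul_sq A (fun b => Real.sqrt (μ b))
      (fun b => Real.sqrt (μ b) * X b ^ 2)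
    have h1 : (∑ b ∈ A, Real.sqrt (μ b) * (Real.sqrt (μ b) * X b ^ 2))
        = ∑ b ∈ A, μ b * X b ^ 2 :=
      Finset.sum_congr rfl fun b _ => by
        rw [← mul_assoc, Real.mul_self_sqrt (hμ b)]
    have h2 : (∑ b ∈ A, Real.sqrt (μ b) ^ 2) = P :=
      Finset.sum_congr rfl fun b _ => Real.sq_sqrt (hμ b)
    have h3 : (∑ b ∈ A, (Real.sqrt (μ b) * X b ^ 2) ^ 2)
        = ∑ b ∈ A, μ b * X b ^ 4 :=
      Finset.sum_congr rfl fun b _ => by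
        rw [mul_pow, Real.sq_sqrt (hμ b)]; ring
    rw [h1, h2, h3] at h
    exact h
  have hA4 : ∑ b ∈ A, μ b * X b ^ 4 ≤ 3 * S ^ 2 := by
    refine le_trans ?_ E4
    apply Finset.sum_le_sum_of_subset_of_nonneg (Finset.subset_univ _)
    intro b _ _
    exact mul_nonneg (hμ b) (by positivity)
  have key : (3 * S / 4) ^ 2 ≤ P * (3 * S ^ 2) := by
    calc (3 * S / 4) ^ 2 ≤ (∑ b ∈ A, μ b * X b ^ 2) ^ 2 := by
          apply pow_le_pow_left₀ (by linarith) hA_lb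
      _ ≤ P * ∑ b ∈ A, μ b * X b ^ 4 := hCS
      _ ≤ P * (3 * S ^ 2) := mul_le_mul_of_nonneg_left hA4 hPnn
  nlinarith [sq_nonneg S, mul_pos hSpos hSpos]
end

section
/- There exists a constant C > 0 with the following property. For all integers n ≥ 2 and k with C·log(n) ≤ k ≤ n and k dividing n, there exists a probability distribution D supported on at most 2^{C·k} · n^C unit vectors of S^{n−1} such that for every w ∈ ℝ^n, (E_{x∼D}[⟨x,w⟩^{2k}])^{1/(2k)} ≥ (1/C) · √(k/n) · ‖w‖₂. -/
/-!
Split the `n` coordinates into `m = n / k` blocks of size `k`, and let `s` consist of the unit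
vectors supported on a single block whose restriction to that block lies in a `1/10`-net of
`S^{k-1}`; a volume argument bounds the net by `21^k`, so `|s| ≤ m · 21^k`. No independence is
needed for the moment bound: given `w`, some block carries at least `‖w‖² / m` of its mass, and
the net point closest to the direction of `w` on that block has inner product at least
`(199/200) ‖w‖ / √m = (199/200) √(k/n) ‖w‖` with `w`. This single term of the uniform average
already suffices, because `|s|^{1/(2k)} ≤ (e · 21)^{1/2} < 8` once `log n ≤ k`.
-/

open Metric MeasureTheory Module Finset
open scoped NNReal ENNReal RealInnerProductSpace

section Nets

variable {E : Type*} [NormedAddCommGroup E] [NormedSpace ℝ E] [FiniteDimensional ℝ E]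

theorem Metric.IsSeparated.card_le_of_subset_closedBall {ε : ℝ≥0} (hε : 0 < ε) {C : Finset E}
    (hC : (C : Set E) ⊆ closedBall 0 1) (hsep : IsSeparated ε (C : Set E)) :
    (#C : ℝ) ≤ (1 + 2 / ε) ^ finrank ℝ E := by
  borelize E
  set μ : Measure E := Measure.addHaar
  set d := finrank ℝ E
  have hε' : (0 : ℝ) < ε := hε
  have hdisj : (C : Set E).PairwiseDisjoint fun x ↦ ball x (ε / 2) := by
    intro x hx y hy hxy
    refine ball_disjoint_ball ?_
    have h : (ε : ℝ≥0∞) < edist x y := hsep hx hy hxy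
    rw [edist_nndist, ENNReal.coe_lt_coe, ← NNReal.coe_lt_coe, coe_nndist] at h
    linarith
  have hsub : (⋃ x ∈ C, ball x (ε / 2)) ⊆ ball (0 : E) (1 + ε / 2) := by
    refine Set.iUnion₂_subset fun x hx ↦ ball_subset_ball' ?_
    linarith [mem_closedBall.1 (hC hx)]
  have hball (x : E) (r : ℝ) (hr : 0 < r) :
      μ (ball x r) = ENNReal.ofReal (r ^ d) * μ (ball 0 1) := by
    rw [Measure.addHaar_ball_of_pos μ x hr]
  have key : (#C : ℝ≥0∞) * ENNReal.ofReal ((ε / 2 : ℝ) ^ d) ≤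
      ENNReal.ofReal ((1 + ε / 2 : ℝ) ^ d) := by
    refine (ENNReal.mul_le_mul_iff_left (measure_ball_pos μ 0 one_pos).ne'
      measure_ball_lt_top.ne).1 ?_
    calc (#C : ℝ≥0∞) * ENNReal.ofReal ((ε / 2 : ℝ) ^ d) * μ (ball 0 1)
        = ∑ x ∈ C, μ (ball x (ε / 2)) := by simp [hball _ _ (half_pos hε'), mul_assoc]
      _ = μ (⋃ x ∈ C, ball x (ε / 2)) :=
        (measure_biUnion_finset hdisj fun _ _ ↦ measurableSet_ball).symm
      _ ≤ μ (ball 0 (1 + ε / 2)) := measure_mono hsub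
      _ = _ := hball _ _ (by positivity)
  rw [← ENNReal.ofReal_natCast, ← ENNReal.ofReal_mul (by positivity),
    ENNReal.ofReal_le_ofReal_iff (by positivity)] at key
  calc (#C : ℝ) = #C * (ε / 2 : ℝ) ^ d / (ε / 2 : ℝ) ^ d := by field_simp
    _ ≤ (1 + ε / 2 : ℝ) ^ d / (ε / 2 : ℝ) ^ d := by gcongr
    _ = (1 + 2 / ε) ^ d := by rw [← div_pow]; congr 1; field_simp; ring

theorem exists_finset_isCover_sphere_card_le {ε : ℝ≥0} (hε : 0 < ε) :
    ∃ N : Finset E, (N : Set E) ⊆ sphere 0 1 ∧ IsCover ε (sphere 0 1) (N : Set E) ∧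
      (#N : ℝ) ≤ (1 + 2 / ε) ^ finrank ℝ E := by
  have hfin : packingNumber ε (sphere (0 : E) 1) ≠ ⊤ := by
    obtain ⟨N, -, hN, hcov⟩ :=
      exists_finite_isCover_of_isCompact (half_pos hε).ne' (isCompact_sphere (0 : E) 1)
    have := (packingNumber_two_mul_le_externalCoveringNumber (ε / 2) _).trans
      hcov.externalCoveringNumber_le_encard
    rw [mul_div_cancel₀ _ two_ne_zero] at this
    exact ne_top_of_le_ne_top hN.encard_lt_top.ne this
  have hC : (maximalSeparatedSet ε (sphere (0 : E) 1)).Finite :=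
    Set.encard_ne_top_iff.1 ((encard_maximalSeparatedSet hfin).trans_ne hfin)
  refine ⟨hC.toFinset, by simpa using maximalSeparatedSet_subset,
    by simpa using isCover_maximalSeparatedSet hfin, ?_⟩
  exact IsSeparated.card_le_of_subset_closedBall hε
    (by simpa using maximalSeparatedSet_subset.trans sphere_subset_closedBall)
    (by simpa using isSeparated_maximalSeparatedSet)

end Nets

theorem Metric.IsCover.exists_inner_ge {F : Type*} [NormedAddCommGroup F] [InnerProductSpace ℝ F]
    [Nontrivial F] {δ : ℝ≥0} {N : Set F} (hNs : N ⊆ sphere 0 1) (hN : IsCover δ (sphere 0 1) N)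
    (v : F) : ∃ u ∈ N, (1 - δ ^ 2 / 2) * ‖v‖ ≤ ⟪u, v⟫ := by
  rcases eq_or_ne v 0 with rfl | hv
  · obtain ⟨u, hu⟩ := hN.nonempty (NormedSpace.sphere_nonempty.2 zero_le_one)
    exact ⟨u, hu, by simp⟩
  set v₁ := ‖v‖⁻¹ • v
  have hv₁ : ‖v₁‖ = 1 := norm_smul_inv_norm hv
  obtain ⟨u, huN, hdist⟩ : ∃ u ∈ N, dist v₁ u ≤ δ := by
    simpa using hN.subset_iUnion_closedBall (mem_sphere_zero_iff_norm.2 hv₁)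
  have hu : ‖u‖ = 1 := mem_sphere_zero_iff_norm.1 (hNs huN)
  have hinner : 1 - δ ^ 2 / 2 ≤ ⟪u, v₁⟫ := by
    have h := norm_sub_sq_real u v₁
    rw [hu, hv₁, ← dist_eq_norm, dist_comm] at h
    nlinarith [dist_nonneg (x := v₁) (y := u)]
  refine ⟨u, huN, ?_⟩
  calc (1 - δ ^ 2 / 2) * ‖v‖ ≤ ⟪u, v₁⟫ * ‖v‖ := by gcongr
    _ = ⟪u, v⟫ := by
      rw [real_inner_smul_right, mul_comm, ← mul_assoc, mul_inv_cancel₀ (norm_ne_zero_iff.2 hv),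
        one_mul]

section Blocks

variable {τ ι β : Type*}

-- `e t = (i, b)` says that coordinate `t` is the `i`-th coordinate of block `b`.
def blockRestrict (e : τ ≃ ι × β) (b : β) (w : τ → ℝ) : EuclideanSpace ℝ ι :=
  WithLp.toLp 2 fun i ↦ w (e.symm (i, b))

def blockVector [DecidableEq β] (e : τ ≃ ι × β) (b : β) (u : EuclideanSpace ℝ ι) : τ → ℝ :=
  fun t ↦ if (e t).2 = b then u (e t).1 else 0

noncomputable def blockNet [DecidableEq β] [Fintype τ] [Fintype β] (e : τ ≃ ι × β)
    (N : Finset (EuclideanSpace ℝ ι)) : Finset (τ → ℝ) :=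
  (univ ×ˢ N).image fun q ↦ blockVector e q.1 q.2

theorem card_blockNet_le [DecidableEq β] [Fintype τ] [Fintype β] (e : τ ≃ ι × β)
    (N : Finset (EuclideanSpace ℝ ι)) : #(blockNet e N) ≤ Fintype.card β * #N :=
  card_image_le.trans_eq (by rw [card_product, card_univ])

variable [Fintype τ] [Fintype ι] [Fintype β]

theorem sum_norm_blockRestrict_sq (e : τ ≃ ι × β) (w : τ → ℝ) :
    ∑ b, ‖blockRestrict e b w‖ ^ 2 = ∑ t, w t ^ 2 := by
  simp_rw [EuclideanSpace.real_norm_sq_eq, blockRestrict]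
  rw [← e.symm.sum_comp, Fintype.sum_prod_type_right]

theorem exists_sum_sq_div_card_le_norm_blockRestrict_sq [Nonempty β] (e : τ ≃ ι × β)
    (w : τ → ℝ) : ∃ b, (∑ t, w t ^ 2) / Fintype.card β ≤ ‖blockRestrict e b w‖ ^ 2 := by
  obtain ⟨b, -, hb⟩ := Finset.exists_le_of_sum_le univ_nonempty
    (f := fun _ ↦ (∑ t, w t ^ 2) / Fintype.card β) (g := fun b ↦ ‖blockRestrict e b w‖ ^ 2)
    (by rw [sum_norm_blockRestrict_sq]; simp [mul_div_cancel₀])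
  exact ⟨b, hb⟩

variable [DecidableEq β]

theorem sum_blockVector_mul (e : τ ≃ ι × β) (b : β) (u : EuclideanSpace ℝ ι) (w : τ → ℝ) :
    ∑ t, blockVector e b u t * w t = ⟪u, blockRestrict e b w⟫ := by
  rw [← e.symm.sum_comp]
  simp [blockVector, blockRestrict, Fintype.sum_prod_type_right, PiLp.inner_apply, mul_comm]

theorem sum_blockVector_sq (e : τ ≃ ι × β) (b : β) (u : EuclideanSpace ℝ ι) :
    ∑ t, blockVector e b u t ^ 2 = ‖u‖ ^ 2 := by
  rw [← e.symm.sum_comp, EuclideanSpace.real_norm_sq_eq]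
  simp [blockVector, Fintype.sum_prod_type_right, ite_pow]

theorem sum_sq_of_mem_blockNet {e : τ ≃ ι × β} {N : Finset (EuclideanSpace ℝ ι)}
    (hN : (N : Set (EuclideanSpace ℝ ι)) ⊆ sphere 0 1) {x : τ → ℝ} (hx : x ∈ blockNet e N) :
    ∑ t, x t ^ 2 = 1 := by
  rw [blockNet, mem_image] at hx
  obtain ⟨⟨b, u⟩, hu, rfl⟩ := hx
  rw [sum_blockVector_sq, mem_sphere_zero_iff_norm.1 (hN (mem_product.1 hu).2), one_pow]

theorem exists_mem_blockNet_le_sum_mul [Nonempty ι] [Nonempty β] (e : τ ≃ ι × β)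
    {N : Finset (EuclideanSpace ℝ ι)} {δ : ℝ≥0} (hδ : δ ≤ 1)
    (hNs : (N : Set (EuclideanSpace ℝ ι)) ⊆ sphere 0 1)
    (hN : IsCover δ (sphere 0 1) (N : Set (EuclideanSpace ℝ ι))) (w : τ → ℝ) :
    ∃ x ∈ blockNet e N,
      (1 - δ ^ 2 / 2) * √((∑ t, w t ^ 2) / Fintype.card β) ≤ ∑ t, x t * w t := by
  obtain ⟨b, hb⟩ := exists_sum_sq_div_card_le_norm_blockRestrict_sq e w
  obtain ⟨u, hu, hinner⟩ := hN.exists_inner_ge hNs (blockRestrict e b w)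
  refine ⟨blockVector e b u,
    by rw [blockNet]; exact mem_image.2 ⟨(b, u), mem_product.2 ⟨mem_univ _, hu⟩, rfl⟩, ?_⟩
  have hδ' : 0 ≤ 1 - (δ : ℝ) ^ 2 / 2 := by
    have : (δ : ℝ) ≤ 1 := hδ
    nlinarith [δ.2]
  calc (1 - δ ^ 2 / 2) * √((∑ t, w t ^ 2) / Fintype.card β)
      ≤ (1 - δ ^ 2 / 2) * ‖blockRestrict e b w‖ := by
        gcongr
        exact (Real.sqrt_le_sqrt hb).trans_eq (Real.sqrt_sq (norm_nonneg _))
    _ ≤ _ := by rwa [sum_blockVector_mul]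

theorem exists_blockHittingSet [Nonempty ι] [Nonempty β] (e : τ ≃ ι × β) :
    ∃ s : Finset (τ → ℝ), (∀ x ∈ s, ∑ t, x t ^ 2 = 1) ∧
      (#s : ℝ) ≤ Fintype.card β * 21 ^ Fintype.card ι ∧
      ∀ w : τ → ℝ, ∃ x ∈ s, 199 / 200 * √((∑ t, w t ^ 2) / Fintype.card β) ≤ ∑ t, x t * w t := by
  obtain ⟨N, hNs, hN, hNcard⟩ := exists_finset_isCover_sphere_card_le
    (E := EuclideanSpace ℝ ι) (ε := 1 / 10) (by norm_num)
  norm_num [finrank_euclideanSpace] at hNcard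
  refine ⟨blockNet e N, fun x ↦ sum_sq_of_mem_blockNet hNs, ?_, fun w ↦ ?_⟩
  · calc (#(blockNet e N) : ℝ) ≤ Fintype.card β * #N := by exact_mod_cast card_blockNet_le e N
      _ ≤ _ := by gcongr
  · obtain ⟨x, hx, hxw⟩ := exists_mem_blockNet_le_sum_mul e (by simp) hNs hN w
    refine ⟨x, hx, le_of_eq_of_le ?_ hxw⟩
    norm_num

end Blocks

theorem Finset.sum_indicator_const_mul {α : Type*} (s : Finset α) (c : ℝ) (g : α → ℝ) :
    ∑ x ∈ s, (s : Set α).indicator (fun _ ↦ c) x * g x = c * ∑ x ∈ s, g x := by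
  rw [mul_sum]
  exact sum_congr rfl fun x hx ↦ by rw [Set.indicator_of_mem (mem_coe.2 hx)]

theorem Finset.sum_indicator_inv_card {α : Type*} {s : Finset α} (hs : s.Nonempty) :
    ∑ x ∈ s, (s : Set α).indicator (fun _ ↦ (#s : ℝ)⁻¹) x = 1 := by
  simpa [hs.card_pos.ne'] using sum_indicator_const_mul s (#s : ℝ)⁻¹ 1

theorem le_rpow_sum_indicator_mul_pow {α : Type*} {s : Finset α} {x₀ : α} (hx₀ : x₀ ∈ s)
    {f : α → ℝ} {p : ℕ} (hp : Even p) (hp₀ : p ≠ 0) {a : ℝ} (ha : 0 ≤ a)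
    (h : #s * a ^ p ≤ f x₀ ^ p) :
    a ≤ (∑ x ∈ s, (s : Set α).indicator (fun _ ↦ (#s : ℝ)⁻¹) x * f x ^ p) ^ (1 / (p : ℝ)) := by
  have hs : (0 : ℝ) < #s := by exact_mod_cast card_pos.2 ⟨x₀, hx₀⟩
  rw [sum_indicator_const_mul, one_div, Real.le_rpow_inv_iff_of_pos ha (by
    have := sum_nonneg fun x (_ : x ∈ s) ↦ hp.pow_nonneg (f x); positivity) (by positivity),
    Real.rpow_natCast, le_inv_mul_iff₀ hs]
  exact h.trans (single_le_sum (fun x _ ↦ hp.pow_nonneg (f x)) hx₀)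

theorem le_rpow_sum_indicator_mul_pow_of_card_le {α : Type*} {s : Finset α} {x₀ : α}
    (hx₀ : x₀ ∈ s) {f : α → ℝ} {k : ℕ} (hk : k ≠ 0) {B : ℝ} (hB : 0 ≤ B)
    (hs : (#s : ℝ) ≤ 63 ^ k) (hf : 199 / 200 * B ≤ f x₀) :
    1 / 10 * B ≤
      (∑ x ∈ s, (s : Set α).indicator (fun _ ↦ (#s : ℝ)⁻¹) x * f x ^ (2 * k)) ^
        (1 / (2 * k : ℝ)) := by
  have := le_rpow_sum_indicator_mul_pow hx₀ (even_two_mul k) (by omega) (by positivity) <|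
    calc (#s : ℝ) * (1 / 10 * B) ^ (2 * k) ≤ 63 ^ k * ((1 / 10 * B) ^ 2) ^ k := by
          rw [← pow_mul]; gcongr
      _ = (63 / 100 * B ^ 2) ^ k := by rw [← mul_pow]; ring_nf
      _ ≤ ((199 / 200 * B) ^ 2) ^ k := by gcongr; nlinarith [sq_nonneg B]
      _ = (199 / 200 * B) ^ (2 * k) := by rw [pow_mul]
      _ ≤ f x₀ ^ (2 * k) := pow_le_pow_left₀ (by positivity) hf _
  exact_mod_cast this

theorem mul_pow_le_two_rpow_mul_rpow {x : ℝ} (hx : 1 ≤ x) (k : ℕ) :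
    x * 21 ^ k ≤ 2 ^ ((10 : ℝ) * k) * x ^ (10 : ℝ) := by
  rw [Real.rpow_mul (by norm_num), Real.rpow_natCast, mul_comm _ (x ^ (10 : ℝ))]
  gcongr
  · exact Real.self_le_rpow_of_one_le hx (by norm_num)
  · norm_num

theorem natCast_mul_pow_le_of_log_le {n k : ℕ} (hn : n ≠ 0) (h : Real.log n ≤ k) :
    (n : ℝ) * 21 ^ k ≤ 63 ^ k := by
  have hn_exp : (n : ℝ) ≤ Real.exp 1 ^ k := by
    rw [Real.exp_one_pow, ← Real.log_le_iff_le_exp (by positivity)]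
    exact h
  calc (n : ℝ) * 21 ^ k ≤ (Real.exp 1 * 21) ^ k := by rw [mul_pow]; gcongr
    _ ≤ 63 ^ k := by gcongr; linarith [Real.exp_one_lt_d9]

/-- **Spherical hitting-set distribution with large moments in every direction.**
There is a constant `C > 0` such that for all `n ≥ 2` and `k` with
`C·log n ≤ k ≤ n` and `k ∣ n`, there is a probability distribution `D` supported on at
most `2^{C·k} · n^C` unit vectors of `S^{n-1}` such that for every `w ∈ ℝ^n`,
`(E_{x∼D}[⟨x,w⟩^{2k}])^{1/(2k)} ≥ (1/C) · √(k/n) · ‖w‖₂`. -/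
theorem stmt_12 :
    ∃ C : ℝ, 0 < C ∧ ∀ (n k : ℕ), 2 ≤ n → C * Real.log n ≤ k → k ≤ n → k ∣ n →
      ∃ (s : Finset (Fin n → ℝ)) (D : (Fin n → ℝ) → ℝ),
        (∀ x ∈ s, ∑ i, x i ^ 2 = 1) ∧
        ((s.card : ℝ) ≤ 2 ^ (C * k) * (n : ℝ) ^ C) ∧
        (∀ x, 0 ≤ D x) ∧ (∀ x ∉ s, D x = 0) ∧ (∑ x ∈ s, D x = 1) ∧
        ∀ w : Fin n → ℝ,
          (1 / C) * Real.sqrt ((k : ℝ) / n) * Real.sqrt (∑ i, w i ^ 2) ≤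
            (∑ x ∈ s, D x * (∑ i, x i * w i) ^ (2 * k)) ^ ((1 : ℝ) / (2 * k)) := by
  refine ⟨10, by norm_num, fun n k hn hlogk _ ⟨m, hm⟩ ↦ ?_⟩
  have hlog : 0 < Real.log n := Real.log_pos (by exact_mod_cast hn)
  have hk : k ≠ 0 := by rintro rfl; push_cast at hlogk; linarith
  have hm₀ : m ≠ 0 := by rintro rfl; omega
  have : NeZero k := ⟨hk⟩
  have : NeZero m := ⟨hm₀⟩
  have hmn : (m : ℝ) ≤ n := by exact_mod_cast Nat.le_of_dvd (by omega) (Dvd.intro_left k hm.symm)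
  obtain ⟨s, hs_unit, hs_card, hs_hit⟩ :=
    exists_blockHittingSet ((finCongr hm).trans finProdFinEquiv.symm)
  simp only [Fintype.card_fin] at hs_card hs_hit
  have hs_card' : (#s : ℝ) ≤ n * 21 ^ k := hs_card.trans (by gcongr)
  have hs₀ : s.Nonempty := let ⟨x, hx, _⟩ := hs_hit 0; ⟨x, hx⟩
  refine ⟨s, (s : Set (Fin n → ℝ)).indicator fun _ ↦ (#s : ℝ)⁻¹, hs_unit, ?_,
    Set.indicator_nonneg fun _ _ ↦ by positivity,
    fun x hx ↦ Set.indicator_of_notMem (mem_coe.not.2 hx) _, sum_indicator_inv_card hs₀,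
    fun w ↦ ?_⟩
  · exact hs_card'.trans (mul_pow_le_two_rpow_mul_rpow (by exact_mod_cast one_le_two.trans hn) k)
  · obtain ⟨x₀, hx₀, hx₀w⟩ := hs_hit w
    have hB : √((k : ℝ) / n) * √(∑ i, w i ^ 2) = √((∑ i, w i ^ 2) / m) := by
      rw [← Real.sqrt_mul (by positivity), show (n : ℝ) = k * m by exact_mod_cast hm]
      field_simp
    rw [mul_assoc, hB]
    exact le_rpow_sum_indicator_mul_pow_of_card_le hx₀ hk (by positivity)
      (hs_card'.trans (natCast_mul_pow_le_of_log_le (by omega) (by linarith))) hx₀w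
end

section
/- For every n ≥ 1 and every x, y, z ∈ {−1,1}^n there exists a probability distribution D supported on finitely many points of {−1,1}^n such that: (1) for every symmetric multilinear 3-tensor T ∈ ℝ^{n×n×n} (T_{ijk} invariant under permutations of (i,j,k) and zero whenever two indices coincide), E_{x'∼D}[∑_{i,j,k} T_{ijk} x'_i x'_j x'_k] = (2/9)·∑_{i,j,k} T_{ijk} x_i y_j z_k; (2) for every symmetric matrix M ∈ ℝ^{n×n} with zero diagonal, E_{x'∼D}[x'ᵀ M x'] = (1/9)·(xᵀMx + yᵀMy + zᵀMz); and (3) E_{x'∼D}[x'] = 0. -/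
open Finset

section RecouplingAux

lemma sum_sigma_prod {n : ℕ} (w : Fin 3 → Fin n → ℝ) (L : Finset (Fin n)) :
    ∑ σ : Fin n → Fin 3, ∏ l ∈ L, w (σ l) l
      = 3 ^ (n - L.card) * ∏ l ∈ L, (w 0 l + w 1 l + w 2 l) := by
  have h1 : ∀ σ : Fin n → Fin 3, ∏ l ∈ L, w (σ l) l
      = ∏ i : Fin n, (if i ∈ L then w (σ i) i else 1) := by
    intro σ
    rw [Finset.prod_ite_mem, Finset.univ_inter]
  simp_rw [h1]
  rw [← Fintype.piFinset_univ, ← Finset.prod_univ_sum (fun _ => (univ : Finset (Fin 3)))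
    (fun i c => if i ∈ L then w c i else 1)]
  have h2 : ∀ i : Fin n, (∑ c : Fin 3, if i ∈ L then w c i else 1)
      = if i ∈ L then (w 0 i + w 1 i + w 2 i) else 3 := by
    intro i
    by_cases h : i ∈ L <;> simp [h, Fin.sum_univ_three]
  simp_rw [h2]
  rw [Finset.prod_ite]
  have hL : Finset.filter (fun x => x ∈ L) Finset.univ = L := by
    simp
  have hLc : Finset.filter (fun x => ¬ x ∈ L) Finset.univ = Lᶜ := by
    ext a; simp
  rw [hL, hLc, Finset.prod_const, Finset.card_compl]
  simp [Fintype.card_fin, mul_comm]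

lemma key3 {n : ℕ} (w : Fin 3 → Fin n → ℝ) {i j k : Fin n} (hij : i ≠ j) (hik : i ≠ k) (hjk : j ≠ k) :
    ∑ σ : Fin n → Fin 3, w (σ i) i * w (σ j) j * w (σ k) k
      = 3 ^ (n - 3) * ((w 0 i + w 1 i + w 2 i) * (w 0 j + w 1 j + w 2 j) * (w 0 k + w 1 k + w 2 k)) := by
  have h := sum_sigma_prod w {i, j, k}
  have hnot1 : i ∉ ({j, k} : Finset (Fin n)) := by simp [hij, hik]
  have hnot2 : j ∉ ({k} : Finset (Fin n)) := by simp [hjk]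
  rw [show ({i,j,k} : Finset (Fin n)) = insert i (insert j {k}) from rfl] at h
  simp only [Finset.prod_insert hnot1, Finset.prod_insert hnot2, Finset.prod_singleton,
    Finset.card_insert_of_notMem hnot1, Finset.card_insert_of_notMem hnot2,
    Finset.card_singleton] at h
  simp_rw [mul_assoc]
  convert h using 2

lemma key2 {n : ℕ} (w : Fin 3 → Fin n → ℝ) {i j : Fin n} (hij : i ≠ j) :
    ∑ σ : Fin n → Fin 3, w (σ i) i * w (σ j) j
      = 3 ^ (n - 2) * ((w 0 i + w 1 i + w 2 i) * (w 0 j + w 1 j + w 2 j)) := by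
  have h := sum_sigma_prod w {i, j}
  have hnot : i ∉ ({j} : Finset (Fin n)) := by simp [hij]
  rw [show ({i,j} : Finset (Fin n)) = insert i {j} from rfl] at h
  simp only [Finset.prod_insert hnot, Finset.prod_singleton,
    Finset.card_insert_of_notMem hnot, Finset.card_singleton] at h
  convert h using 2

lemma key1 {n : ℕ} (w : Fin 3 → Fin n → ℝ) (i : Fin n) :
    ∑ σ : Fin n → Fin 3, w (σ i) i = 3 ^ (n - 1) * (w 0 i + w 1 i + w 2 i) := by
  have h := sum_sigma_prod w {i}
  simp at h
  simpa using h

lemma key0 {n : ℕ} :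
    ∑ _σ : Fin n → Fin 3, (1 : ℝ) = 3 ^ n := by
  have h := sum_sigma_prod (n := n) (fun _ _ => (1:ℝ)) ∅
  simpa using h

lemma tsum_swap12 {n : ℕ} (T : Fin n → Fin n → Fin n → ℝ)
    (h : ∀ i j k, T i j k = T j i k) (u v w : Fin n → ℝ) :
    ∑ i, ∑ j, ∑ k, T i j k * (v i * u j * w k) = ∑ i, ∑ j, ∑ k, T i j k * (u i * v j * w k) := by
  rw [Finset.sum_comm]
  refine Finset.sum_congr rfl fun i _ => Finset.sum_congr rfl fun j _ =>
    Finset.sum_congr rfl fun k _ => ?_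
  rw [h j i k]
  ring

lemma tsum_swap23 {n : ℕ} (T : Fin n → Fin n → Fin n → ℝ)
    (h : ∀ i j k, T i j k = T i k j) (u v w : Fin n → ℝ) :
    ∑ i, ∑ j, ∑ k, T i j k * (u i * w j * v k) = ∑ i, ∑ j, ∑ k, T i j k * (u i * v j * w k) := by
  refine Finset.sum_congr rfl fun i _ => ?_
  rw [Finset.sum_comm]
  refine Finset.sum_congr rfl fun j _ => Finset.sum_congr rfl fun k _ => ?_
  rw [(h i j k).symm]
  ring

def sgR : Bool → ℝ := fun t => cond t 1 (-1)

def wfun {n : ℕ} (x y z : Fin n → ℝ) (a b : Bool) : Fin 3 → Fin n → ℝ :=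
  fun c i => if c = 0 then sgR a * x i else if c = 1 then sgR b * y i else sgR a * sgR b * z i

def gfun {n : ℕ} (x y z : Fin n → ℝ) : (Bool × Bool) × (Fin n → Fin 3) → (Fin n → ℝ) :=
  fun q i => wfun x y z q.1.1 q.1.2 (q.2 i) i

lemma wfun_sum {n : ℕ} (x y z : Fin n → ℝ) (a b : Bool) (i : Fin n) :
    wfun x y z a b 0 i + wfun x y z a b 1 i + wfun x y z a b 2 i
      = sgR a * x i + sgR b * y i + sgR a * sgR b * z i := by
  simp [wfun]


def vfun {n : ℕ} (x y z : Fin n → ℝ) (a b : Bool) : Fin n → ℝ :=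
  fun i => sgR a * x i + sgR b * y i + sgR a * sgR b * z i

lemma wfun_sum' {n : ℕ} (x y z : Fin n → ℝ) (a b : Bool) (i : Fin n) :
    wfun x y z a b 0 i + wfun x y z a b 1 i + wfun x y z a b 2 i = vfun x y z a b i := by
  simp [wfun, vfun]

lemma swap_in3 {n : ℕ} {α : Type*} [Fintype α] (f : α → Fin n → Fin n → Fin n → ℝ) :
    ∑ t : α, ∑ i, ∑ j, ∑ k, f t i j k = ∑ i, ∑ j, ∑ k, ∑ t : α, f t i j k := by
  rw [Finset.sum_comm]
  refine Finset.sum_congr rfl fun i _ => ?_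
  rw [Finset.sum_comm]
  refine Finset.sum_congr rfl fun j _ => ?_
  rw [Finset.sum_comm]

lemma swap_in2 {n : ℕ} {α : Type*} [Fintype α] (f : α → Fin n → Fin n → ℝ) :
    ∑ t : α, ∑ i, ∑ j, f t i j = ∑ i, ∑ j, ∑ t : α, f t i j := by
  rw [Finset.sum_comm]
  refine Finset.sum_congr rfl fun i _ => ?_
  rw [Finset.sum_comm]

end RecouplingAux


/-- **Recoupling distribution.** For every `x, y, z ∈ {±1}^n` there is a finitely
supported probability distribution `D` on `{±1}^n` (support `s`, weights `D`) such that: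
(1) for every symmetric multilinear 3-tensor `T`, the `D`-expectation of the coupled
cubic form equals `(2/9)` times the decoupled form at `(x,y,z)`;
(2) for every symmetric matrix `M` with zero diagonal, the `D`-expectation of the
quadratic form equals `(1/9)·(xᵀMx + yᵀMy + zᵀMz)`; and
(3) the `D`-mean is `0`. -/
theorem stmt_15 (n : ℕ) (hn : 1 ≤ n) (x y z : Fin n → ℝ)
    (hx : ∀ i, x i = 1 ∨ x i = -1) (hy : ∀ i, y i = 1 ∨ y i = -1)
    (hz : ∀ i, z i = 1 ∨ z i = -1) :
    ∃ (s : Finset (Fin n → ℝ)) (D : (Fin n → ℝ) → ℝ),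
      (∀ p ∈ s, ∀ i, p i = 1 ∨ p i = -1) ∧
      (∀ p, 0 ≤ D p) ∧ (∀ p ∉ s, D p = 0) ∧ (∑ p ∈ s, D p = 1) ∧
      (∀ T : Fin n → Fin n → Fin n → ℝ,
        (∀ i j k, T i j k = T j i k ∧ T i j k = T i k j) →
        (∀ i j k, (i = j ∨ j = k ∨ i = k) → T i j k = 0) →
        ∑ p ∈ s, D p * (∑ i, ∑ j, ∑ k, T i j k * p i * p j * p k) =
          (2 / 9) * ∑ i, ∑ j, ∑ k, T i j k * x i * y j * z k) ∧
      (∀ M : Matrix (Fin n) (Fin n) ℝ, M.IsSymm → (∀ i, M i i = 0) →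
        ∑ p ∈ s, D p * (∑ i, ∑ j, p i * M i j * p j) =
          (1 / 9) * ((∑ i, ∑ j, x i * M i j * x j) + (∑ i, ∑ j, y i * M i j * y j) +
            (∑ i, ∑ j, z i * M i j * z j))) ∧
      (∀ i, ∑ p ∈ s, D p * p i = 0) := by

  classical
  have hsg : ∀ t : Bool, sgR t = 1 ∨ sgR t = -1 := by
    intro t; cases t <;> simp [sgR]
  have hpm : ∀ u v : ℝ, (u = 1 ∨ u = -1) → (v = 1 ∨ v = -1) → (u * v = 1 ∨ u * v = -1) := by
    rintro u v (rfl | rfl) (rfl | rfl) <;> norm_num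
  have h3n : (0:ℝ) < 3 ^ n := by positivity
  refine ⟨Finset.univ.image (gfun x y z),
    fun p => ((Finset.univ.filter fun q => gfun x y z q = p).card : ℝ) / (4 * 3 ^ n),
    ?_, ?_, ?_, ?_, ?_, ?_, ?_⟩
  · -- hypercube membership
    intro p hp i
    obtain ⟨q, -, rfl⟩ := Finset.mem_image.mp hp
    simp only [gfun, wfun]
    split_ifs
    · exact hpm _ _ (hsg _) (hx i)
    · exact hpm _ _ (hsg _) (hy i)
    · exact hpm _ _ (hpm _ _ (hsg _) (hsg _)) (hz i)
  · -- nonneg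
    intro p; positivity
  · -- vanishing off support
    intro p hp
    have he : (Finset.univ.filter fun q => gfun x y z q = p) = ∅ := by
      rw [Finset.filter_eq_empty_iff]
      intro q _ hq
      exact hp (Finset.mem_image.mpr ⟨q, Finset.mem_univ q, hq⟩)
    simp only [he, Finset.card_empty, Nat.cast_zero, zero_div]
  all_goals
    have transfer : ∀ F : (Fin n → ℝ) → ℝ,
        ∑ p ∈ Finset.univ.image (gfun x y z),
          ((Finset.univ.filter fun q => gfun x y z q = p).card : ℝ) / (4 * 3 ^ n) * F p
        = (∑ q : (Bool × Bool) × (Fin n → Fin 3), F (gfun x y z q)) / (4 * 3 ^ n) := by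
      intro F
      rw [Finset.sum_comp F (gfun x y z), Finset.sum_div]
      refine Finset.sum_congr rfl fun p _ => ?_
      rw [nsmul_eq_mul]
      ring
  · -- total mass one
    have h := transfer (fun _ => 1)
    simp only [mul_one] at h
    rw [h]
    have hc : (∑ _q : (Bool × Bool) × (Fin n → Fin 3), (1:ℝ)) = 4 * 3 ^ n := by
      rw [Finset.sum_const, Finset.card_univ]
      simp [Fintype.card_prod, Fintype.card_fun]
      try push_cast
      try ring
    rw [hc]
    field_simp
  · -- cubic forms
    intro T hsymT hT0
    have h12 : ∀ i j k, T i j k = T j i k := fun i j k => (hsymT i j k).1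
    have h23 : ∀ i j k, T i j k = T i k j := fun i j k => (hsymT i j k).2
    have h := transfer (fun p => ∑ i, ∑ j, ∑ k, T i j k * p i * p j * p k)
    refine h.trans ?_
    -- inner sigma computation per (a,b,i,j,k)
    have hin3 : ∀ (a b : Bool) (i j k : Fin n),
        27 * ∑ σ : Fin n → Fin 3, T i j k * wfun x y z a b (σ i) i * wfun x y z a b (σ j) j
            * wfun x y z a b (σ k) k
        = 3 ^ n * (T i j k * (vfun x y z a b i * vfun x y z a b j * vfun x y z a b k)) := by
      intro a b i j k
      by_cases hij : i = j
      · simp [hT0 i j k (Or.inl hij)]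
      by_cases hjk : j = k
      · simp [hT0 i j k (Or.inr (Or.inl hjk))]
      by_cases hik : i = k
      · simp [hT0 i j k (Or.inr (Or.inr hik))]
      have h3le : 3 ≤ n := by
        have hc := Finset.card_le_univ ({i, j, k} : Finset (Fin n))
        rw [Fintype.card_fin] at hc
        rw [Finset.card_insert_of_notMem (by simp [hij, hik]),
          Finset.card_pair hjk] at hc
        exact hc
      have hpow : (3:ℝ) ^ n = 3 ^ (n - 3) * 27 := by
        calc (3:ℝ) ^ n = 3 ^ (n - 3 + 3) := by rw [Nat.sub_add_cancel h3le]
        _ = 3 ^ (n - 3) * 3 ^ 3 := pow_add _ _ _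
        _ = 3 ^ (n - 3) * 27 := by norm_num
      have hme : ∑ σ : Fin n → Fin 3, T i j k * wfun x y z a b (σ i) i
            * wfun x y z a b (σ j) j * wfun x y z a b (σ k) k
          = T i j k * ∑ σ : Fin n → Fin 3, wfun x y z a b (σ i) i * wfun x y z a b (σ j) j
            * wfun x y z a b (σ k) k := by
        rw [Finset.mul_sum]
        exact Finset.sum_congr rfl fun σ _ => by ring
      rw [hme, key3 _ hij hik hjk, wfun_sum', wfun_sum', wfun_sum', hpow]
      ring
    have per_ab : ∀ ab : Bool × Bool,
        27 * ∑ σ : Fin n → Fin 3, ∑ i, ∑ j, ∑ k,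
            T i j k * gfun x y z (ab, σ) i * gfun x y z (ab, σ) j * gfun x y z (ab, σ) k
        = 3 ^ n * ∑ i, ∑ j, ∑ k,
            T i j k * (vfun x y z ab.1 ab.2 i * vfun x y z ab.1 ab.2 j * vfun x y z ab.1 ab.2 k) := by
      intro ab
      rw [swap_in3, Finset.mul_sum, Finset.mul_sum]
      refine Finset.sum_congr rfl fun i _ => ?_
      rw [Finset.mul_sum, Finset.mul_sum]
      refine Finset.sum_congr rfl fun j _ => ?_
      rw [Finset.mul_sum, Finset.mul_sum]
      refine Finset.sum_congr rfl fun k _ => ?_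
      exact hin3 ab.1 ab.2 i j k
    -- numerator identity
    have hnum : 27 * (∑ q : (Bool × Bool) × (Fin n → Fin 3),
          ∑ i, ∑ j, ∑ k, T i j k * gfun x y z q i * gfun x y z q j * gfun x y z q k)
        = 3 ^ n * (24 * ∑ i, ∑ j, ∑ k, T i j k * x i * y j * z k) := by
      rw [Fintype.sum_prod_type, Finset.mul_sum]
      have step1 : ∀ ab : Bool × Bool, (27 : ℝ) * ∑ σ : Fin n → Fin 3, ∑ i, ∑ j, ∑ k,
            T i j k * gfun x y z (ab, σ) i * gfun x y z (ab, σ) j * gfun x y z (ab, σ) k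
          = 3 ^ n * ∑ i, ∑ j, ∑ k,
            T i j k * (vfun x y z ab.1 ab.2 i * vfun x y z ab.1 ab.2 j * vfun x y z ab.1 ab.2 k) :=
        per_ab
      rw [Finset.sum_congr rfl fun ab _ => step1 ab, ← Finset.mul_sum]
      congr 1
      rw [swap_in3 (fun (ab : Bool × Bool) i j k =>
        T i j k * (vfun x y z ab.1 ab.2 i * vfun x y z ab.1 ab.2 j * vfun x y z ab.1 ab.2 k))]
      have hsgn3 : ∀ i j k : Fin n, ∑ ab : Bool × Bool,
          T i j k * (vfun x y z ab.1 ab.2 i * vfun x y z ab.1 ab.2 j * vfun x y z ab.1 ab.2 k)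
          = 4 * (T i j k * (x i * y j * z k)) + (4 * (T i j k * (x i * z j * y k))
            + (4 * (T i j k * (y i * x j * z k)) + (4 * (T i j k * (y i * z j * x k))
            + (4 * (T i j k * (z i * x j * y k)) + 4 * (T i j k * (z i * y j * x k)))))) := by
        intro i j k
        rw [Fintype.sum_prod_type]
        simp only [Fintype.sum_bool, vfun, sgR]
        norm_num
        ring
      rw [Finset.sum_congr rfl fun i _ => Finset.sum_congr rfl fun j _ =>
        Finset.sum_congr rfl fun k _ => hsgn3 i j k]
      simp only [Finset.sum_add_distrib, ← Finset.mul_sum]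
      -- permutation identities
      have P2 := tsum_swap23 T h23 x y z
      have P3 := tsum_swap12 T h12 x y z
      have P4 := (tsum_swap23 T h23 y x z).trans P3
      have P5 := (tsum_swap12 T h12 x z y).trans P2
      have P6 := (tsum_swap12 T h12 y z x).trans P4
      rw [P2, P3, P4, P5, P6]
      have base : ∑ i, ∑ j, ∑ k, T i j k * (x i * y j * z k)
          = ∑ i, ∑ j, ∑ k, T i j k * x i * y j * z k := by
        refine Finset.sum_congr rfl fun i _ => Finset.sum_congr rfl fun j _ =>
          Finset.sum_congr rfl fun k _ => by ring
      rw [base]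
      ring
    field_simp
    linarith [hnum]
  · -- quadratic forms
    intro M hMs hMd
    have h := transfer (fun p => ∑ i, ∑ j, p i * M i j * p j)
    refine h.trans ?_
    have hin2 : ∀ (a b : Bool) (i j : Fin n),
        9 * ∑ σ : Fin n → Fin 3, wfun x y z a b (σ i) i * M i j * wfun x y z a b (σ j) j
        = 3 ^ n * (vfun x y z a b i * M i j * vfun x y z a b j) := by
      intro a b i j
      by_cases hij : i = j
      · subst hij; simp [hMd i]
      have h2le : 2 ≤ n := by
        have hc := Finset.card_le_univ ({i, j} : Finset (Fin n))
        rw [Fintype.card_fin, Finset.card_pair hij] at hc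
        exact hc
      have hpow : (3:ℝ) ^ n = 3 ^ (n - 2) * 9 := by
        calc (3:ℝ) ^ n = 3 ^ (n - 2 + 2) := by rw [Nat.sub_add_cancel h2le]
        _ = 3 ^ (n - 2) * 3 ^ 2 := pow_add _ _ _
        _ = 3 ^ (n - 2) * 9 := by norm_num
      have hme : ∑ σ : Fin n → Fin 3, wfun x y z a b (σ i) i * M i j * wfun x y z a b (σ j) j
          = M i j * ∑ σ : Fin n → Fin 3, wfun x y z a b (σ i) i * wfun x y z a b (σ j) j := by
        rw [Finset.mul_sum]
        exact Finset.sum_congr rfl fun σ _ => by ring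
      rw [hme, key2 _ hij, wfun_sum', wfun_sum', hpow]
      ring
    have per_ab : ∀ ab : Bool × Bool,
        9 * ∑ σ : Fin n → Fin 3, ∑ i, ∑ j,
            gfun x y z (ab, σ) i * M i j * gfun x y z (ab, σ) j
        = 3 ^ n * ∑ i, ∑ j, vfun x y z ab.1 ab.2 i * M i j * vfun x y z ab.1 ab.2 j := by
      intro ab
      rw [swap_in2, Finset.mul_sum, Finset.mul_sum]
      refine Finset.sum_congr rfl fun i _ => ?_
      rw [Finset.mul_sum, Finset.mul_sum]
      refine Finset.sum_congr rfl fun j _ => ?_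
      exact hin2 ab.1 ab.2 i j
    have hnum : 9 * (∑ q : (Bool × Bool) × (Fin n → Fin 3),
          ∑ i, ∑ j, gfun x y z q i * M i j * gfun x y z q j)
        = 3 ^ n * (4 * ((∑ i, ∑ j, x i * M i j * x j) + (∑ i, ∑ j, y i * M i j * y j)
          + (∑ i, ∑ j, z i * M i j * z j))) := by
      rw [Fintype.sum_prod_type, Finset.mul_sum]
      rw [Finset.sum_congr rfl fun ab _ => per_ab ab, ← Finset.mul_sum]
      congr 1
      rw [swap_in2 (fun (ab : Bool × Bool) i j =>
        vfun x y z ab.1 ab.2 i * M i j * vfun x y z ab.1 ab.2 j)]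
      have hsgn2 : ∀ i j : Fin n, ∑ ab : Bool × Bool,
          vfun x y z ab.1 ab.2 i * M i j * vfun x y z ab.1 ab.2 j
          = 4 * (x i * M i j * x j) + (4 * (y i * M i j * y j) + 4 * (z i * M i j * z j)) := by
        intro i j
        rw [Fintype.sum_prod_type]
        simp only [Fintype.sum_bool, vfun, sgR]
        norm_num
        ring
      rw [Finset.sum_congr rfl fun i _ => Finset.sum_congr rfl fun j _ => hsgn2 i j]
      simp only [Finset.sum_add_distrib, ← Finset.mul_sum]
      ring
    field_simp
    linarith [hnum]
  · -- mean zero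
    intro i
    have h := transfer (fun p => p i)
    refine h.trans ?_
    have per_ab : ∀ ab : Bool × Bool,
        ∑ σ : Fin n → Fin 3, gfun x y z (ab, σ) i
        = 3 ^ (n - 1) * vfun x y z ab.1 ab.2 i := by
      intro ab
      have := key1 (wfun x y z ab.1 ab.2) i
      rw [wfun_sum'] at this
      exact this
    rw [Fintype.sum_prod_type, Finset.sum_congr rfl fun ab _ => per_ab ab, ← Finset.mul_sum]
    have hV0 : ∑ ab : Bool × Bool, vfun x y z ab.1 ab.2 i = 0 := by
      rw [Fintype.sum_prod_type]
      simp only [Fintype.sum_bool, vfun, sgR]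
      norm_num
      ring
    rw [hV0]
    simp
end

section
/- Let d ≥ 1 be an odd integer and n ≥ 1. Let T be a symmetric d-tensor on ℝ^n (T_{i₁…i_d} invariant under all permutations of its indices) that is multilinear (T_{i₁…i_d} = 0 whenever two of the indices coincide). Then max over y ∈ {−1,1}^n of ∑_{i₁,…,i_d} T_{i₁…i_d} y_{i₁}⋯y_{i_d} is at least (d!/d^d) times the max over x^{(1)},…,x^{(d)} ∈ {−1,1}^n of ∑_{i₁,…,i_d} T_{i₁…i_d} x^{(1)}_{i₁}⋯x^{(d)}_{i_d}. -/
open Finset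

noncomputable def Fm {d n : ℕ} (T : (Fin d → Fin n) → ℝ) (z : Fin n → ℝ) : ℝ :=
  ∑ f : Fin d → Fin n, T f * ∏ a, z (f a)

lemma Fm_smul {d n : ℕ} (T : (Fin d → Fin n) → ℝ) (c : ℝ) (z : Fin n → ℝ) :
    Fm T (fun i => c * z i) = c ^ d * Fm T z := by
  unfold Fm
  rw [Finset.mul_sum]
  refine Finset.sum_congr rfl fun f _ => ?_
  rw [Finset.prod_mul_distrib, Finset.prod_const]
  simp [Finset.card_univ]
  ring

lemma prod_update_affine {d n : ℕ} (f : Fin d → Fin n) (hf : Function.Injective f)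
    (z : Fin n → ℝ) (i : Fin n) (t : ℝ) :
    ∏ a, (Function.update z i t) (f a)
      = (∏ a, (Function.update z i 0) (f a))
        + t * ((∏ a, (Function.update z i 1) (f a)) - ∏ a, (Function.update z i 0) (f a)) := by
  by_cases h : ∃ a₀, f a₀ = i
  · obtain ⟨a₀, ha₀⟩ := h
    have key : ∀ s : ℝ, ∏ a, (Function.update z i s) (f a)
        = s * ∏ a ∈ Finset.univ.erase a₀, z (f a) := by
      intro s
      rw [← Finset.mul_prod_erase Finset.univ _ (Finset.mem_univ a₀)]
      rw [ha₀, Function.update_self]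
      congr 1
      refine Finset.prod_congr rfl fun a ha => ?_
      have : f a ≠ i := fun hh => (Finset.mem_erase.1 ha).1 (hf (hh.trans ha₀.symm))
      rw [Function.update_of_ne this]
    rw [key, key, key]; ring
  · push_neg at h
    have key : ∀ s : ℝ, ∏ a, (Function.update z i s) (f a) = ∏ a, z (f a) := by
      intro s
      refine Finset.prod_congr rfl fun a _ => ?_
      rw [Function.update_of_ne (h a)]
    rw [key, key, key]; ring

lemma Fm_update_affine {d n : ℕ} (T : (Fin d → Fin n) → ℝ)
    (hml : ∀ f : Fin d → Fin n, (∃ a b, a ≠ b ∧ f a = f b) → T f = 0)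
    (z : Fin n → ℝ) (i : Fin n) (t : ℝ) :
    Fm T (Function.update z i t)
      = Fm T (Function.update z i 0)
        + t * (Fm T (Function.update z i 1) - Fm T (Function.update z i 0)) := by
  unfold Fm
  rw [show ∀ A B : ℝ, A + t * (B - A) = A + (t*B - t*A) by intros; ring,
    Finset.mul_sum, Finset.mul_sum, ← Finset.sum_sub_distrib, ← Finset.sum_add_distrib]
  refine Finset.sum_congr rfl fun f _ => ?_
  by_cases hT : T f = 0
  · simp [hT]
  · have hf : Function.Injective f := by
      intro a b hab
      by_contra hne
      exact hT (hml f ⟨a, b, hne, hab⟩)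
    rw [prod_update_affine f hf z i t]; ring

lemma affine_max (A B M t : ℝ) (ht : |t| ≤ M) :
    A + t * B ≤ max (A + M * B) (A + (-M) * B) := by
  rcases le_total 0 B with hB | hB
  · exact le_max_of_le_left (by nlinarith [abs_le.1 ht])
  · exact le_max_of_le_right (by nlinarith [abs_le.1 ht])

lemma step_vertex {d n : ℕ} (T : (Fin d → Fin n) → ℝ)
    (hml : ∀ f : Fin d → Fin n, (∃ a b, a ≠ b ∧ f a = f b) → T f = 0)
    (M : ℝ) (s : Finset (Fin n)) (w : Fin n → ℝ) (hw : ∀ i, |w i| ≤ M) :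
    ∃ v : Fin n → ℝ, (∀ i ∈ s, v i = M ∨ v i = -M) ∧ (∀ i ∉ s, v i = w i)
      ∧ Fm T w ≤ Fm T v := by
  classical
  induction s using Finset.induction_on with
  | empty => exact ⟨w, by simp, fun _ _ => rfl, le_refl _⟩
  | @insert i s hi ih =>
    obtain ⟨v, hv1, hv2, hv3⟩ := ih
    have hvi : |v i| ≤ M := by rw [hv2 i hi]; exact hw i
    have hself : Fm T v = Fm T (Function.update v i (v i)) := by
      rw [Function.update_eq_self]
    have hmax : Fm T v ≤ max (Fm T (Function.update v i M)) (Fm T (Function.update v i (-M))) := by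
      rw [hself, Fm_update_affine T hml v i (v i),
        Fm_update_affine T hml v i M, Fm_update_affine T hml v i (-M)]
      exact affine_max _ _ M (v i) hvi
    rcases le_max_iff.1 hmax with hle | hle
    · refine ⟨Function.update v i M, fun j hj => ?_, fun j hj => ?_, hv3.trans hle⟩
      · rcases Finset.mem_insert.1 hj with rfl | hj
        · left; simp
        · have : j ≠ i := fun h => hi (h ▸ hj)
          rw [Function.update_of_ne this]; exact hv1 j hj
      · have hji : j ≠ i := fun h => hj (h ▸ Finset.mem_insert_self i s)
        rw [Function.update_of_ne hji]
        exact hv2 j (fun h => hj (Finset.mem_insert_of_mem h))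
    · refine ⟨Function.update v i (-M), fun j hj => ?_, fun j hj => ?_, hv3.trans hle⟩
      · rcases Finset.mem_insert.1 hj with rfl | hj
        · right; simp
        · have : j ≠ i := fun h => hi (h ▸ hj)
          rw [Function.update_of_ne this]; exact hv1 j hj
      · have hji : j ≠ i := fun h => hj (h ▸ Finset.mem_insert_self i s)
        rw [Function.update_of_ne hji]
        exact hv2 j (fun h => hj (Finset.mem_insert_of_mem h))
lemma decoup_sign_sum {d : ℕ} (g : Fin d → Fin d) :
    ∑ ε ∈ Fintype.piFinset (fun _ : Fin d => ({1,-1} : Finset ℝ)),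
      ((∏ a, ε a) * ∏ b, ε (g b))
    = if Function.Bijective g then (2:ℝ)^d else 0 := by
  classical
  set c : Fin d → ℕ := fun a => (Finset.univ.filter (fun b => g b = a)).card with hc
  have hterm : ∀ ε : Fin d → ℝ, (∏ a, ε a) * ∏ b, ε (g b) = ∏ a, (ε a) ^ (c a + 1) := by
    intro ε
    have h1 : ∏ b, ε (g b) = ∏ a, (ε a) ^ (c a) := by
      rw [← Finset.prod_fiberwise_of_maps_to (t := Finset.univ) (g := g)
        (fun b _ => Finset.mem_univ (g b)) (fun b => ε (g b))]
      refine Finset.prod_congr rfl fun a _ => ?_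
      rw [show (Finset.univ.filter (fun b => g b = a)).prod (fun b => ε (g b))
          = (Finset.univ.filter (fun b => g b = a)).prod (fun _ => ε a) from
        Finset.prod_congr rfl (fun b hb => by rw [(Finset.mem_filter.1 hb).2]),
        Finset.prod_const]
    rw [h1, ← Finset.prod_mul_distrib]
    exact Finset.prod_congr rfl fun a _ => by rw [pow_succ]; ring
  rw [Finset.sum_congr rfl (fun ε _ => hterm ε), ← Finset.prod_univ_sum (fun _ => ({1,-1} : Finset ℝ)) (fun a j => j ^ (c a + 1))]
  have hsum : ∀ a : Fin d, ∑ j ∈ ({1,-1} : Finset ℝ), j ^ (c a + 1)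
      = 1 + (-1:ℝ) ^ (c a + 1) := by
    intro a
    rw [Finset.sum_insert (by norm_num), Finset.sum_singleton, one_pow]
  rw [Finset.prod_congr rfl (fun a _ => hsum a)]
  have hcount : ∑ a, c a = d := by
    rw [hc, ← Finset.card_eq_sum_card_fiberwise (fun b _ => Finset.mem_univ (g b))]
    simp
  by_cases hbij : Function.Bijective g
  · have hone : ∀ a, c a = 1 := by
      intro a
      obtain ⟨b, hb⟩ := hbij.2 a
      rw [hc]
      refine Finset.card_eq_one.2 ⟨b, ?_⟩
      ext b'
      simp only [Finset.mem_filter, Finset.mem_univ, true_and, Finset.mem_singleton]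
      exact ⟨fun h => hbij.1 (h.trans hb.symm), fun h => h ▸ hb⟩
    simp only [hbij, if_true]
    rw [Finset.prod_congr rfl (fun a _ => show (1:ℝ) + (-1)^(c a + 1) = 2 by rw [hone a]; norm_num), Finset.prod_const]
    norm_num
  · have hex : ∃ a, Even (c a) := by
      by_contra hno
      push_neg at hno
      have hodd : ∀ a, Odd (c a) := fun a => Nat.not_even_iff_odd.1 (hno a)
      have h1 : ∀ a ∈ Finset.univ, 1 ≤ c a := fun a _ => (hodd a).pos
      have heq : ∀ a ∈ Finset.univ, (1:ℕ) = c a := by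
        refine (Finset.sum_eq_sum_iff_of_le h1).1 ?_
        rw [hcount]; simp
      have hone : ∀ a, c a = 1 := fun a => (heq a (Finset.mem_univ a)).symm
      apply hbij
      constructor
      · intro b1 b2 h12
        obtain ⟨b, hb⟩ := Finset.card_eq_one.1 (hone (g b1))
        have m1 : b1 ∈ Finset.univ.filter (fun b' => g b' = g b1) := by simp
        have m2 : b2 ∈ Finset.univ.filter (fun b' => g b' = g b1) := by simp [h12]
        rw [hb, Finset.mem_singleton] at m1 m2
        rw [m1, m2]
      · intro a
        obtain ⟨b, hb⟩ := Finset.card_pos.1 (by show 0 < c a; rw [hone a]; norm_num)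
        exact ⟨b, (Finset.mem_filter.1 hb).2⟩
    obtain ⟨a, ha⟩ := hex
    simp only [hbij, if_false]
    refine Finset.prod_eq_zero (Finset.mem_univ a) ?_
    rw [pow_succ, ha.neg_one_pow]
    ring

lemma decoup_polar {d n : ℕ} (T : (Fin d → Fin n) → ℝ)
    (hsymm : ∀ (σ : Equiv.Perm (Fin d)) (f : Fin d → Fin n), T (f ∘ σ) = T f)
    (x : Fin d → Fin n → ℝ) :
    ∑ ε ∈ Fintype.piFinset (fun _ : Fin d => ({1,-1} : Finset ℝ)),
      ((∏ a, ε a) * Fm T (fun i => ∑ a, ε a * x a i))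
    = 2^d * (d.factorial : ℝ) * ∑ f : Fin d → Fin n, T f * ∏ a, x a (f a) := by
  classical
  have expand : ∀ ε : Fin d → ℝ,
      (∏ a, ε a) * Fm T (fun i => ∑ a, ε a * x a i)
      = ∑ f : Fin d → Fin n, ∑ g : Fin d → Fin d,
          T f * (∏ b, x (g b) (f b)) * ((∏ a, ε a) * ∏ b, ε (g b)) := by
    intro ε
    unfold Fm
    rw [Finset.mul_sum]
    refine Finset.sum_congr rfl fun f _ => ?_
    have hps : ∏ b : Fin d, (∑ a : Fin d, ε a * x a (f b))
        = ∑ g ∈ Fintype.piFinset (fun _ : Fin d => (Finset.univ : Finset (Fin d))),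
            ∏ b, ε (g b) * x (g b) (f b) :=
      Finset.prod_univ_sum _ _
    rw [hps, Fintype.piFinset_univ, Finset.mul_sum, Finset.mul_sum]
    refine Finset.sum_congr rfl fun g _ => ?_
    rw [Finset.prod_mul_distrib]
    ring
  rw [Finset.sum_congr rfl fun ε _ => expand ε, Finset.sum_comm]
  have step2 : ∀ f : Fin d → Fin n,
      ∑ ε ∈ Fintype.piFinset (fun _ : Fin d => ({1,-1} : Finset ℝ)),
        ∑ g : Fin d → Fin d,
          T f * (∏ b, x (g b) (f b)) * ((∏ a, ε a) * ∏ b, ε (g b))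
      = ∑ g : Fin d → Fin d, T f * (∏ b, x (g b) (f b))
          * (if Function.Bijective g then (2:ℝ)^d else 0) := by
    intro f
    rw [Finset.sum_comm]
    refine Finset.sum_congr rfl fun g _ => ?_
    rw [← Finset.mul_sum, decoup_sign_sum]
  rw [Finset.sum_congr rfl fun f _ => step2 f]
  have step3 : ∀ f : Fin d → Fin n,
      ∑ g : Fin d → Fin d, T f * (∏ b, x (g b) (f b))
          * (if Function.Bijective g then (2:ℝ)^d else 0)
      = ∑ σ : Equiv.Perm (Fin d), T f * (∏ b, x (σ b) (f b)) * (2:ℝ)^d := by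
    intro f
    have hsplit : (∑ g : Fin d → Fin d, T f * (∏ b, x (g b) (f b))
          * (if Function.Bijective g then (2:ℝ)^d else 0))
        = ∑ g : Fin d → Fin d,
            (if Function.Bijective g then T f * (∏ b, x (g b) (f b)) * (2:ℝ)^d else 0) :=
      Finset.sum_congr rfl fun g _ => by split_ifs <;> simp
    rw [hsplit, ← Finset.sum_filter]
    refine Finset.sum_bij' (fun g hg => Equiv.ofBijective g (Finset.mem_filter.1 hg).2)
      (fun σ _ => ⇑σ) ?_ ?_ ?_ ?_ ?_
    · intro g hg; exact Finset.mem_univ _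
    · intro σ _; exact Finset.mem_filter.2 ⟨Finset.mem_univ _, σ.bijective⟩
    · intro g hg; rfl
    · intro σ _; exact Equiv.coe_fn_injective rfl
    · intro g hg; rfl
  rw [Finset.sum_congr rfl fun f _ => step3 f, Finset.sum_comm]
  have perσ : ∀ σ : Equiv.Perm (Fin d),
      ∑ f : Fin d → Fin n, T f * (∏ b, x (σ b) (f b)) * (2:ℝ)^d
      = (∑ f : Fin d → Fin n, T f * ∏ a, x a (f a)) * (2:ℝ)^d := by
    intro σ
    rw [← Finset.sum_mul]
    congr 1
    rw [← Equiv.sum_comp (Equiv.arrowCongr σ.symm (Equiv.refl (Fin n)))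
      (fun f => T f * ∏ b, x (σ b) (f b))]
    refine Finset.sum_congr rfl fun f _ => ?_
    have he : (Equiv.arrowCongr σ.symm (Equiv.refl (Fin n))) f = f ∘ σ := by
      funext b; simp [Equiv.arrowCongr]
    rw [he, hsymm σ f]
    congr 1
    exact Equiv.prod_comp σ (fun a => x a (f a))
  rw [Finset.sum_congr rfl fun σ _ => perσ σ, Finset.sum_const, Finset.card_univ,
    Fintype.card_perm, Fintype.card_fin, nsmul_eq_mul]
  ring

/-- **Odd-degree decoupling over the hypercube.** For odd `d` and a symmetric
multilinear `d`-tensor `T` on `ℝ^n`, the maximum of the coupled form over `{±1}^n` is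
at least `d!/d^d` times the maximum of the decoupled form over `({±1}^n)^d`; stated in
the equivalent form: for every decoupled hypercube assignment `x⁽¹⁾,…,x⁽ᵈ⁾` there is a
hypercube point `y` with `f(y) ≥ (d!/d^d) · f̃(x⁽¹⁾,…,x⁽ᵈ⁾)`. -/
theorem stmt_16 (d n : ℕ) (hd : 1 ≤ d) (hodd : Odd d) (hn : 1 ≤ n)
    (T : (Fin d → Fin n) → ℝ)
    (hsymm : ∀ (σ : Equiv.Perm (Fin d)) (f : Fin d → Fin n), T (f ∘ σ) = T f)
    (hml : ∀ f : Fin d → Fin n, (∃ a b, a ≠ b ∧ f a = f b) → T f = 0)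
    (x : Fin d → Fin n → ℝ) (hx : ∀ a i, x a i = 1 ∨ x a i = -1) :
    ∃ y : Fin n → ℝ, (∀ i, y i = 1 ∨ y i = -1) ∧
      ((d.factorial : ℝ) / (d : ℝ) ^ d) * (∑ f : Fin d → Fin n, T f * ∏ a, x a (f a)) ≤
        ∑ f : Fin d → Fin n, T f * ∏ a, y (f a) := by
  classical
  set Ft : ℝ := ∑ f : Fin d → Fin n, T f * ∏ a, x a (f a) with hFt
  set piF := Fintype.piFinset (fun _ : Fin d => ({1,-1} : Finset ℝ)) with hpiF
  have hpi_card : piF.card = 2^d := by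
    rw [hpiF, Fintype.card_piFinset]
    have h2 : ({1,-1} : Finset ℝ).card = 2 := by
      rw [Finset.card_insert_of_notMem (by norm_num), Finset.card_singleton]
    simp [h2]
  have hne : piF.Nonempty := Finset.card_pos.1 (by rw [hpi_card]; positivity)
  have hle : ∑ _ε ∈ piF, ((d.factorial : ℝ) * Ft)
      ≤ ∑ ε ∈ piF, ((∏ a, ε a) * Fm T (fun i => ∑ a, ε a * x a i)) := by
    rw [Finset.sum_const, nsmul_eq_mul, hpi_card, hpiF, decoup_polar T hsymm x, ← hFt]
    push_cast
    ring_nf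
    exact le_refl _
  obtain ⟨ε, hεmem, hεle⟩ := Finset.exists_le_of_sum_le hne hle
  set z : Fin n → ℝ := fun i => ∑ a, ε a * x a i with hz
  have hεval : ∀ a, ε a = 1 ∨ ε a = -1 := by
    intro a
    have := Fintype.mem_piFinset.1 hεmem a
    rcases Finset.mem_insert.1 this with h | h
    · exact Or.inl h
    · exact Or.inr (Finset.mem_singleton.1 h)
  set s : ℝ := ∏ a, ε a with hs
  have hsval : s = 1 ∨ s = -1 := by
    have habs : |s| = 1 := by
      rw [hs, Finset.abs_prod]
      rw [Finset.prod_congr rfl (fun a _ => show |ε a| = 1 by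
        rcases hεval a with h | h <;> rw [h] <;> norm_num)]
      simp
    rcases abs_eq (by norm_num : (0:ℝ) ≤ 1) |>.1 habs with h | h
    · exact Or.inl h
    · exact Or.inr h
  set w : Fin n → ℝ := fun i => s * z i with hw
  have hsd : s ^ d = s := by
    rcases hsval with h | h
    · rw [h, one_pow]
    · rw [h, hodd.neg_one_pow]
  have hkey : (d.factorial : ℝ) * Ft ≤ Fm T w := by
    have : Fm T w = s * Fm T z := by rw [hw, Fm_smul, hsd]
    rw [this]
    exact hεle
  have hwbound : ∀ i, |w i| ≤ (d : ℝ) := by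
    intro i
    have h1 : |w i| = |z i| := by
      rw [hw]; simp only [abs_mul]
      rcases hsval with h | h <;> rw [h] <;> norm_num
    rw [h1, hz]
    calc |∑ a, ε a * x a i| ≤ ∑ a, |ε a * x a i| := Finset.abs_sum_le_sum_abs _ _
      _ = ∑ _a : Fin d, (1:ℝ) := Finset.sum_congr rfl (fun a _ => by
          rw [abs_mul]
          rcases hεval a with h | h <;> rcases hx a i with h' | h' <;>
            rw [h, h'] <;> norm_num)
      _ = (d : ℝ) := by simp
  obtain ⟨v, hv1, _, hv3⟩ := step_vertex T hml (d : ℝ) Finset.univ w hwbound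
  have hdpos : (0:ℝ) < d := by exact_mod_cast hd
  refine ⟨fun i => v i / d, fun i => ?_, ?_⟩
  · rcases hv1 i (Finset.mem_univ i) with h | h
    · left; show v i / d = 1; rw [h]; field_simp
    · right; show v i / d = -1; rw [h]; field_simp
  · have hFv : (d:ℝ)^d * Fm T (fun i => v i / d) = Fm T v := by
      rw [← Fm_smul T (d:ℝ) (fun i => v i / d)]
      congr 1
      funext i; field_simp
    have hchain : (d.factorial : ℝ) * Ft ≤ (d:ℝ)^d * Fm T (fun i => v i / d) := by
      rw [hFv]; exact hkey.trans hv3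
    have hgoal : ((d.factorial : ℝ) / (d : ℝ) ^ d) * Ft ≤ Fm T (fun i => v i / d) := by
      rw [div_mul_eq_mul_div, div_le_iff₀ (by positivity)]
      linarith [hchain]
    exact hgoal
end

section
/- Let d ≥ 1 and n ≥ 1 be integers. Let T be a symmetric d-tensor on ℝ^n (T_{i₁…i_d} invariant under all permutations of its indices) that is multilinear (T_{i₁…i_d} = 0 whenever two of the indices coincide). Then max over y ∈ {−1,1}^n of |∑_{i₁,…,i_d} T_{i₁…i_d} y_{i₁}⋯y_{i_d}| is at least (d!/d^d) times the max over x^{(1)},…,x^{(d)} ∈ {−1,1}^n of ∑_{i₁,…,i_d} T_{i₁…i_d} x^{(1)}_{i₁}⋯x^{(d)}_{i_d}. -/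
open Finset
noncomputable def sg : Bool → ℝ := fun b => if b then 1 else -1

lemma weight_eq (d : ℕ) (g : Fin d → Fin d) :
    ∑ ε : Fin d → Bool, ∏ a, (sg (ε a) * sg (ε (g a)))
    = if Function.Bijective g then (2:ℝ)^d else 0 := by
  have hc : Function.Bijective g → ∀ b, (univ.filter fun a => g a = b).card = 1 := by
    intro hg b
    obtain ⟨a, ha, hu⟩ := (Function.bijective_iff_existsUnique g).1 hg b
    refine Finset.card_eq_one.2 ⟨a, ?_⟩
    ext c; simp only [mem_filter, mem_univ, true_and, mem_singleton]
    exact ⟨fun h => hu c h, fun h => h ▸ ha⟩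
  have key : ∀ ε : Fin d → Bool,
      ∏ a, (sg (ε a) * sg (ε (g a)))
      = ∏ b, sg (ε b) ^ (1 + (univ.filter fun a => g a = b).card) := by
    intro ε
    rw [Finset.prod_mul_distrib]
    have h1 : ∏ a, sg (ε (g a)) = ∏ b, sg (ε b) ^ (univ.filter fun a => g a = b).card := by
      have hpc := Finset.prod_comp (s := (univ : Finset (Fin d))) (fun b => sg (ε b)) g
      rw [hpc]
      refine Finset.prod_subset (subset_univ _) ?_
      intro b _ hb
      have hz : (univ.filter fun a => g a = b).card = 0 := by
        rw [Finset.card_eq_zero]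
        ext a; simp only [mem_filter, mem_univ, true_and, notMem_empty, iff_false]
        intro h; exact hb (Finset.mem_image.2 ⟨a, mem_univ a, h⟩)
      rw [hz, pow_zero]
    rw [h1, ← Finset.prod_mul_distrib]
    exact Finset.prod_congr rfl fun b _ => by rw [pow_add, pow_one]
  simp only [key]
  have hfac : ∑ ε : Fin d → Bool, ∏ b, sg (ε b) ^ (1 + (univ.filter fun a => g a = b).card)
      = ∏ b : Fin d, ((1:ℝ) ^ (1 + (univ.filter fun a => g a = b).card)
          + (-1:ℝ) ^ (1 + (univ.filter fun a => g a = b).card)) := by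
    have := Finset.prod_univ_sum (fun _ : Fin d => (univ : Finset Bool))
      (fun b t => sg t ^ (1 + (univ.filter fun a => g a = b).card))
    rw [Fintype.piFinset_univ] at this
    rw [← this]
    refine Finset.prod_congr rfl fun b _ => ?_
    rw [Fintype.sum_bool]
    simp [sg]
  rw [hfac]
  have hsum : ∑ b, (univ.filter fun a => g a = b).card = d := by
    have := Finset.card_eq_sum_card_fiberwise (f := g) (s := univ) (t := univ)
      (fun a _ => mem_univ (g a))
    simpa using this.symm
  by_cases hodd : ∀ b, Odd (univ.filter fun a => g a = b).card
  · have hone : ∀ b, (univ.filter fun a => g a = b).card = 1 := by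
      have hle : ∀ b ∈ (univ : Finset (Fin d)), 1 ≤ (univ.filter fun a => g a = b).card :=
        fun b _ => Nat.one_le_iff_ne_zero.2 (fun h => by simpa [h] using hodd b)
      have heq : ∑ _b : Fin d, 1 = ∑ b, (univ.filter fun a => g a = b).card := by
        simp [hsum]
      intro b
      exact ((Finset.sum_eq_sum_iff_of_le hle).1 heq b (mem_univ b)).symm
    have hbij : Function.Bijective g := by
      rw [Function.bijective_iff_existsUnique]
      intro b
      obtain ⟨a, ha⟩ := Finset.card_eq_one.1 (hone b)
      refine ⟨a, ?_, ?_⟩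
      · have : a ∈ univ.filter fun a => g a = b := ha ▸ mem_singleton_self a
        exact (mem_filter.1 this).2
      · intro c hcb
        have : c ∈ univ.filter fun a => g a = b := mem_filter.2 ⟨mem_univ c, hcb⟩
        rw [ha] at this; exact mem_singleton.1 this
    rw [if_pos hbij]
    calc ∏ b : Fin d, ((1:ℝ) ^ (1 + (univ.filter fun a => g a = b).card)
          + (-1:ℝ) ^ (1 + (univ.filter fun a => g a = b).card))
        = ∏ _b : Fin d, (2:ℝ) := Finset.prod_congr rfl fun b _ => by rw [hone b]; norm_num
      _ = 2 ^ d := by simp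
  · push_neg at hodd
    obtain ⟨b, hb⟩ := hodd
    rw [Nat.not_odd_iff_even] at hb
    have hbij : ¬ Function.Bijective g := fun h => by simp [hc h b] at hb
    rw [if_neg hbij]
    refine Finset.prod_eq_zero (mem_univ b) ?_
    rw [one_pow]
    have : Odd (1 + (univ.filter fun a => g a = b).card) := hb.one_add
    rw [this.neg_one_pow]
    ring

lemma polarize (d n : ℕ) (T : (Fin d → Fin n) → ℝ)
    (hsymm : ∀ (σ : Equiv.Perm (Fin d)) (f : Fin d → Fin n), T (f ∘ σ) = T f)
    (x : Fin d → Fin n → ℝ) :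
    ∑ ε : Fin d → Bool, ((∏ a, sg (ε a)) *
        ∑ f : Fin d → Fin n, T f * ∏ a, (∑ b, sg (ε b) * x b (f a)))
    = 2^d * ((d.factorial : ℝ) * ∑ f : Fin d → Fin n, T f * ∏ a, x a (f a)) := by
  have step1 : ∀ ε : Fin d → Bool, (∏ a, sg (ε a)) *
      ∑ f : Fin d → Fin n, T f * ∏ a, (∑ b, sg (ε b) * x b (f a))
      = ∑ f : Fin d → Fin n, ∑ g : Fin d → Fin d,
          (T f * ∏ a, x (g a) (f a)) * ∏ a, (sg (ε a) * sg (ε (g a))) := by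
    intro ε
    rw [Finset.mul_sum]
    refine Finset.sum_congr rfl fun f _ => ?_
    have h2 : ∏ a, (∑ b, sg (ε b) * x b (f a))
        = ∑ g : Fin d → Fin d, ∏ a, (sg (ε (g a)) * x (g a) (f a)) := by
      have := Finset.prod_univ_sum (fun _ : Fin d => (univ : Finset (Fin d)))
        (fun a b => sg (ε b) * x b (f a))
      rw [Fintype.piFinset_univ] at this
      exact this
    rw [h2, Finset.mul_sum, Finset.mul_sum]
    refine Finset.sum_congr rfl fun g _ => ?_
    rw [Finset.prod_mul_distrib, Finset.prod_mul_distrib]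
    ring
  simp only [step1]
  rw [Finset.sum_comm]
  have step2 : ∀ f : Fin d → Fin n,
      ∑ ε : Fin d → Bool, ∑ g : Fin d → Fin d,
          (T f * ∏ a, x (g a) (f a)) * ∏ a, (sg (ε a) * sg (ε (g a)))
      = ∑ σ : Equiv.Perm (Fin d), (T f * ∏ a, x (σ a) (f a)) * 2^d := by
    intro f
    rw [Finset.sum_comm]
    have : ∀ g : Fin d → Fin d,
        ∑ ε : Fin d → Bool, (T f * ∏ a, x (g a) (f a)) * ∏ a, (sg (ε a) * sg (ε (g a)))
        = (T f * ∏ a, x (g a) (f a)) * (if Function.Bijective g then (2:ℝ)^d else 0) := by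
      intro g
      rw [← Finset.mul_sum, weight_eq]
    simp only [this, mul_ite, mul_zero]
    rw [Finset.sum_ite, Finset.sum_const_zero, add_zero]
    refine (Finset.sum_bij (fun (σ : Equiv.Perm (Fin d)) _ => (σ : Fin d → Fin d))
      ?_ ?_ ?_ ?_).symm
    · intro σ _
      simp only [Finset.mem_filter, Finset.mem_univ, true_and]
      exact σ.bijective
    · intro σ₁ _ σ₂ _ h
      exact Equiv.coe_fn_injective h
    · intro g hg
      rw [Finset.mem_filter] at hg
      exact ⟨Equiv.ofBijective g hg.2, Finset.mem_univ _, rfl⟩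
    · intro σ _; rfl
  simp only [step2]
  have step3 : ∀ σ : Equiv.Perm (Fin d),
      ∑ f : Fin d → Fin n, T f * ∏ a, x (σ a) (f a)
      = ∑ f : Fin d → Fin n, T f * ∏ a, x a (f a) := by
    intro σ
    have h1 : ∀ f : Fin d → Fin n, ∏ a, x (σ a) (f a) = ∏ a, x a (f (σ.symm a)) := by
      intro f
      have := Equiv.prod_comp σ (fun a => x a (f (σ.symm a)))
      simpa using this
    simp only [h1]
    have hH : ∀ f : Fin d → Fin n, T f * ∏ a, x a (f (σ.symm a))
        = (fun h : Fin d → Fin n => T h * ∏ a, x a (h a))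
            ((Equiv.arrowCongr σ (Equiv.refl (Fin n))) f) := by
      intro f
      have he : (Equiv.arrowCongr σ (Equiv.refl (Fin n))) f = f ∘ σ.symm := by
        ext a; simp [Equiv.arrowCongr_apply]
      rw [he]
      show T f * ∏ a, x a (f (σ.symm a)) = T (f ∘ σ.symm) * ∏ a, x a ((f ∘ ⇑σ.symm) a)
      rw [hsymm σ.symm f]
      rfl
    simp only [hH]
    exact Equiv.sum_comp (Equiv.arrowCongr σ (Equiv.refl (Fin n)))
      (fun h : Fin d → Fin n => T h * ∏ a, x a (h a))
  rw [Finset.sum_comm]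
  have step4 : ∀ σ : Equiv.Perm (Fin d),
      ∑ f : Fin d → Fin n, (T f * ∏ a, x (σ a) (f a)) * 2^d
      = (∑ f : Fin d → Fin n, T f * ∏ a, x a (f a)) * 2^d := by
    intro σ
    rw [← Finset.sum_mul, step3 σ]
  simp only [step4]
  rw [Finset.sum_const, Finset.card_univ, Fintype.card_perm, Fintype.card_fin, nsmul_eq_mul]
  ring

lemma abs_affine_le {A B t u : ℝ} (ht : |t| ≤ 1) (hu : |A + B| ≤ u) (hv : |A - B| ≤ u) :
    |A + t * B| ≤ u := by
  rcases abs_le.1 ht with ⟨ht1, ht2⟩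
  rcases abs_le.1 hu with ⟨h1, h2⟩
  rcases abs_le.1 hv with ⟨h3, h4⟩
  rw [abs_le]
  constructor <;> nlinarith

lemma affine (d n : ℕ) (T : (Fin d → Fin n) → ℝ)
    (hml : ∀ f : Fin d → Fin n, (∃ a b, a ≠ b ∧ f a = f b) → T f = 0)
    (w : Fin n → ℝ) (i : Fin n) (t : ℝ) :
    (∑ f : Fin d → Fin n, T f * ∏ a, Function.update w i t (f a))
    = (∑ f : Fin d → Fin n, T f * ∏ a, Function.update w i 0 (f a))
      + t * ((∑ f : Fin d → Fin n, T f * ∏ a, Function.update w i 1 (f a))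
          - (∑ f : Fin d → Fin n, T f * ∏ a, Function.update w i 0 (f a))) := by
  have key : ∀ f : Fin d → Fin n,
      T f * ∏ a, Function.update w i t (f a)
      = T f * ∏ a, Function.update w i 0 (f a)
        + t * (T f * ∏ a, Function.update w i 1 (f a)
            - T f * ∏ a, Function.update w i 0 (f a)) := by
    intro f
    by_cases hT : T f = 0
    · simp [hT]
    by_cases hi : ∀ a, f a ≠ i
    · have hs : ∀ s : ℝ, ∏ a, Function.update w i s (f a) = ∏ a, w (f a) := by
        intro s; exact Finset.prod_congr rfl fun a _ => Function.update_of_ne (hi a) _ _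
      rw [hs, hs, hs]; ring
    · push_neg at hi
      obtain ⟨a₀, ha₀⟩ := hi
      have hinj : ∀ a, a ≠ a₀ → f a ≠ i := by
        intro a ha hfa
        exact hT (hml f ⟨a, a₀, ha, by rw [hfa, ha₀]⟩)
      have hs : ∀ s : ℝ, ∏ a, Function.update w i s (f a)
          = s * ∏ a ∈ univ.erase a₀, w (f a) := by
        intro s
        rw [← Finset.mul_prod_erase univ _ (mem_univ a₀)]
        congr 1
        · rw [ha₀, Function.update_self]
        · exact Finset.prod_congr rfl fun a ha =>
            Function.update_of_ne (hinj a (Finset.mem_erase.1 ha).1) _ _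
      rw [hs, hs, hs]; ring
  simp only [key]
  rw [Finset.sum_add_distrib, ← Finset.mul_sum, Finset.sum_sub_distrib]

lemma rounding (n : ℕ) (F : (Fin n → ℝ) → ℝ)
    (haff : ∀ (w : Fin n → ℝ) (i : Fin n) (t : ℝ),
      F (Function.update w i t) = F (Function.update w i 0)
        + t * (F (Function.update w i 1) - F (Function.update w i 0)))
    (s : Finset (Fin n)) :
    ∀ w : Fin n → ℝ, (∀ i, |w i| ≤ 1) → (∀ i ∉ s, w i = 1 ∨ w i = -1) →
      ∃ y : Fin n → ℝ, (∀ i, y i = 1 ∨ y i = -1) ∧ |F w| ≤ |F y| := by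
  induction s using Finset.induction_on with
  | empty =>
    intro w hw hs
    exact ⟨w, fun i => hs i (notMem_empty i), le_refl _⟩
  | @insert i s hi ih =>
    intro w hw hs
    have hupd : ∀ t : ℝ, (|t| ≤ 1) → (t = 1 ∨ t = -1) →
        (∀ j, |Function.update w i t j| ≤ 1) ∧
        (∀ j ∉ s, Function.update w i t j = 1 ∨ Function.update w i t j = -1) := by
      intro t h1 h2
      constructor
      · intro j
        by_cases hj : j = i
        · subst hj; rw [Function.update_self]; exact h1
        · rw [Function.update_of_ne hj]; exact hw j
      · intro j hj
        by_cases hji : j = i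
        · subst hji; rw [Function.update_self]; exact h2
        · rw [Function.update_of_ne hji]
          exact hs j (by simp [hji, hj])
    have hFw : F w = F (Function.update w i 0)
        + w i * (F (Function.update w i 1) - F (Function.update w i 0)) := by
      conv_lhs => rw [← Function.update_eq_self i w]
      exact haff w i (w i)
    have hF1 : F (Function.update w i 1) = F (Function.update w i 0)
        + 1 * (F (Function.update w i 1) - F (Function.update w i 0)) := haff w i 1
    have hFm : F (Function.update w i (-1)) = F (Function.update w i 0)
        + (-1) * (F (Function.update w i 1) - F (Function.update w i 0)) := haff w i (-1)
    by_cases hcmp : |F (Function.update w i (-1))| ≤ |F (Function.update w i 1)|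
    · obtain ⟨y, hy, hle⟩ := ih (Function.update w i 1)
        (hupd 1 (by norm_num) (Or.inl rfl)).1 (hupd 1 (by norm_num) (Or.inl rfl)).2
      refine ⟨y, hy, le_trans ?_ hle⟩
      rw [hFw]
      refine abs_affine_le (hw i) ?_ ?_
      · have h : F (Function.update w i 0)
            + (F (Function.update w i 1) - F (Function.update w i 0))
            = F (Function.update w i 1) := by ring
        rw [h]
      · have h : F (Function.update w i 0)
            - (F (Function.update w i 1) - F (Function.update w i 0))
            = F (Function.update w i (-1)) := by rw [hFm]; ring
        rw [h]; exact hcmp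
    · obtain ⟨y, hy, hle⟩ := ih (Function.update w i (-1))
        (hupd (-1) (by norm_num) (Or.inr rfl)).1 (hupd (-1) (by norm_num) (Or.inr rfl)).2
      refine ⟨y, hy, le_trans ?_ hle⟩
      rw [hFw]
      push_neg at hcmp
      refine abs_affine_le (hw i) ?_ ?_
      · have h : F (Function.update w i 0)
            + (F (Function.update w i 1) - F (Function.update w i 0))
            = F (Function.update w i 1) := by ring
        rw [h]; exact hcmp.le
      · have h : F (Function.update w i 0)
            - (F (Function.update w i 1) - F (Function.update w i 0))
            = F (Function.update w i (-1)) := by rw [hFm]; ring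
        rw [h]

lemma sg_abs (b : Bool) : |sg b| = 1 := by cases b <;> simp [sg]

/-- **Decoupling for absolute values, any degree.** For any `d ≥ 1` and a symmetric
multilinear `d`-tensor `T` on `ℝ^n`, the maximum of `|f(y)|` over `{±1}^n` is at least
`d!/d^d` times the maximum of the decoupled form over `({±1}^n)^d`; stated in the
equivalent form: for every decoupled hypercube assignment `x⁽¹⁾,…,x⁽ᵈ⁾` there is a
hypercube point `y` with `|f(y)| ≥ (d!/d^d) · f̃(x⁽¹⁾,…,x⁽ᵈ⁾)`. -/
theorem stmt_17 (d n : ℕ) (hd : 1 ≤ d) (hn : 1 ≤ n)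
    (T : (Fin d → Fin n) → ℝ)
    (hsymm : ∀ (σ : Equiv.Perm (Fin d)) (f : Fin d → Fin n), T (f ∘ σ) = T f)
    (hml : ∀ f : Fin d → Fin n, (∃ a b, a ≠ b ∧ f a = f b) → T f = 0)
    (x : Fin d → Fin n → ℝ) (hx : ∀ a i, x a i = 1 ∨ x a i = -1) :
    ∃ y : Fin n → ℝ, (∀ i, y i = 1 ∨ y i = -1) ∧
      ((d.factorial : ℝ) / (d : ℝ) ^ d) * (∑ f : Fin d → Fin n, T f * ∏ a, x a (f a)) ≤
        |∑ f : Fin d → Fin n, T f * ∏ a, y (f a)| := by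
  classical
  have hdpos : (0:ℝ) < (d:ℝ) := by exact_mod_cast hd
  have hddpos : (0:ℝ) < (d:ℝ)^d := pow_pos hdpos d
  have hpol := polarize d n T hsymm x
  have hex : ∃ ε : Fin d → Bool,
      (d.factorial : ℝ) * (∑ f : Fin d → Fin n, T f * ∏ a, x a (f a))
        ≤ |∑ f : Fin d → Fin n, T f * ∏ a, (∑ b, sg (ε b) * x b (f a))| := by
    by_contra h
    push_neg at h
    have hlt : ∑ ε : Fin d → Bool,
        ((∏ a, sg (ε a)) * ∑ f : Fin d → Fin n, T f * ∏ a, (∑ b, sg (ε b) * x b (f a)))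
        < ∑ _ε : Fin d → Bool,
            (d.factorial : ℝ) * (∑ f : Fin d → Fin n, T f * ∏ a, x a (f a)) := by
      refine Finset.sum_lt_sum_of_nonempty Finset.univ_nonempty ?_
      intro ε _
      calc (∏ a, sg (ε a)) * ∑ f : Fin d → Fin n, T f * ∏ a, (∑ b, sg (ε b) * x b (f a))
          ≤ |(∏ a, sg (ε a)) * ∑ f : Fin d → Fin n, T f * ∏ a, (∑ b, sg (ε b) * x b (f a))| :=
            le_abs_self _
        _ = |∏ a, sg (ε a)| * |∑ f : Fin d → Fin n, T f * ∏ a, (∑ b, sg (ε b) * x b (f a))| :=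
            abs_mul _ _
        _ = |∑ f : Fin d → Fin n, T f * ∏ a, (∑ b, sg (ε b) * x b (f a))| := by
            rw [Finset.abs_prod]
            simp [sg_abs]
        _ < _ := h ε
    rw [hpol] at hlt
    rw [Finset.sum_const, Finset.card_univ] at hlt
    have hcard : Fintype.card (Fin d → Bool) = 2^d := by simp
    rw [hcard, nsmul_eq_mul] at hlt
    push_cast at hlt
    linarith
  obtain ⟨ε, hε⟩ := hex
  set z : Fin n → ℝ := fun i => ∑ b, sg (ε b) * x b i with hzdef
  have hz : ∀ i, |z i| ≤ d := by
    intro i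
    calc |z i| ≤ ∑ b, |sg (ε b) * x b i| := Finset.abs_sum_le_sum_abs _ _
      _ = ∑ _b : Fin d, (1:ℝ) := by
          refine Finset.sum_congr rfl fun b _ => ?_
          rw [abs_mul, sg_abs, one_mul]
          rcases hx b i with h | h <;> rw [h] <;> norm_num
      _ = d := by simp
  set w : Fin n → ℝ := fun i => z i / d with hwdef
  have hw : ∀ i, |w i| ≤ 1 := by
    intro i
    rw [hwdef]
    simp only
    rw [abs_div, abs_of_pos hdpos, div_le_one hdpos]
    exact hz i
  have hFw : (∑ f : Fin d → Fin n, T f * ∏ a, w (f a))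
      = (∑ f : Fin d → Fin n, T f * ∏ a, z (f a)) / (d:ℝ)^d := by
    rw [Finset.sum_div]
    refine Finset.sum_congr rfl fun f _ => ?_
    rw [mul_div_assoc]
    congr 1
    have hb : ∀ a : Fin d, w (f a) = z (f a) / (d:ℝ) := fun a => rfl
    simp only [hb]
    rw [Finset.prod_div_distrib, Finset.prod_const, Finset.card_univ, Fintype.card_fin]
  have happrox : ((d.factorial : ℝ) / (d:ℝ)^d) * (∑ f : Fin d → Fin n, T f * ∏ a, x a (f a))
      ≤ |∑ f : Fin d → Fin n, T f * ∏ a, w (f a)| := by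
    rw [hFw, abs_div, abs_of_pos hddpos, div_mul_eq_mul_div]
    gcongr
  have haff : ∀ (v : Fin n → ℝ) (i : Fin n) (t : ℝ),
      (fun y : Fin n → ℝ => ∑ f : Fin d → Fin n, T f * ∏ a, y (f a)) (Function.update v i t)
      = (fun y : Fin n → ℝ => ∑ f : Fin d → Fin n, T f * ∏ a, y (f a)) (Function.update v i 0)
        + t * ((fun y : Fin n → ℝ => ∑ f : Fin d → Fin n, T f * ∏ a, y (f a)) (Function.update v i 1)
          - (fun y : Fin n → ℝ => ∑ f : Fin d → Fin n, T f * ∏ a, y (f a)) (Function.update v i 0)) :=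
    fun v i t => affine d n T hml v i t
  obtain ⟨y, hy, hle⟩ := rounding n
    (fun y : Fin n → ℝ => ∑ f : Fin d → Fin n, T f * ∏ a, y (f a)) haff
    Finset.univ w hw (fun i hi => absurd (mem_univ i) hi)
  exact ⟨y, hy, le_trans happrox hle⟩
end
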